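/- arXiv:1611.06450 — 10 statements merged into one kernel-verified Lean document; each statement's English description precedes it below -/
import Mathlib

section
/- Let k, m ≥ 1 and let g be a permutation of a set Ω of size k·m. Then there exists a partition of Ω into k blocks each of size m, preserved by g and on which g induces a single k-cycle of the blocks, if and only if every cycle of g (counting each fixed point as a cycle of length 1) has length divisible by k. -/
open Equiv Finset

/-- for `k, m ≥ 1` and a permutation `g` of a set `Ω` of size `k * m`,
there is a partition of `Ω` into `k` blocks of size `m`, preserved by `g`, on which `g`
induces a single `k`-cycle of the blocks (i.e. the blocks form a single orbit under
`b ↦ g(b)`), iff every cycle of `g` (fixed points counting as cycles of length `1`,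
the cycle length through `x` being the minimal period of `g` at `x`) has length
divisible by `k`. -/
theorem stmt1 {Ω : Type*} [Fintype Ω] [DecidableEq Ω] (k m : ℕ) (hk : 1 ≤ k) (hm : 1 ≤ m)
    (hcard : Fintype.card Ω = k * m) (g : Equiv.Perm Ω) :
    (∃ P : Finset (Finset Ω), P.card = k ∧ (∀ b ∈ P, b.card = m) ∧
      (∀ x : Ω, ∃! b : Finset Ω, b ∈ P ∧ x ∈ b) ∧ (∀ b ∈ P, b.image g ∈ P) ∧
      (∀ b ∈ P, ∀ b' ∈ P, ∃ i : ℕ, (fun s : Finset Ω => s.image g)^[i] b = b')) ↔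
    (∀ x : Ω, k ∣ Function.minimalPeriod (⇑g) x) := by
  haveI : NeZero k := ⟨by omega⟩
  set F : Finset Ω → Finset Ω := fun s => s.image ⇑g with hF
  have hFinj : Function.Injective F := Finset.image_injective g.injective
  have hFiter : ∀ (n : ℕ) (s : Finset Ω), F^[n] s = s.image ((⇑g)^[n]) := by
    intro n
    induction n with
    | zero => intro s; simp
    | succ n ih =>
      intro s
      rw [Function.iterate_succ_apply', ih]
      ext y
      simp only [hF, Finset.mem_image, Function.iterate_succ_apply']
      constructor
      · rintro ⟨z, ⟨w, hw, rfl⟩, rfl⟩; exact ⟨w, hw, rfl⟩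
      · rintro ⟨w, hw, rfl⟩; exact ⟨(⇑g)^[n] w, ⟨w, hw, rfl⟩, rfl⟩
  constructor
  · rintro ⟨P, hPcard, hbcard, hpart, hpres, horb⟩ x
    obtain ⟨b, ⟨hbP, hxb⟩, hbuniq⟩ := hpart x
    have hiter : ∀ i : ℕ, F^[i] b ∈ P := by
      intro i
      induction i with
      | zero => exact hbP
      | succ i ih => rw [Function.iterate_succ_apply']; exact hpres _ ih
    -- b is a periodic point of F
    have hper : ∃ p > 0, Function.IsPeriodicPt F p b := by
      obtain ⟨i, hi, j, hj, hne, heq⟩ :=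
        Finset.exists_ne_map_eq_of_card_lt_of_maps_to (s := Finset.range (k + 1)) (t := P)
          (by rw [hPcard, Finset.card_range]; omega) (fun i _ => hiter i)
      rcases hne.lt_or_gt with h | h
      · refine ⟨j - i, by omega, ?_⟩
        have : F^[i] (F^[j - i] b) = F^[i] b := by
          rw [← Function.iterate_add_apply]
          rw [show i + (j - i) = j by omega, heq]
        exact Function.Injective.iterate hFinj i this
      · refine ⟨i - j, by omega, ?_⟩
        have : F^[j] (F^[i - j] b) = F^[j] b := by
          rw [← Function.iterate_add_apply]
          rw [show j + (i - j) = i by omega, heq]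
        exact Function.Injective.iterate hFinj j this
    obtain ⟨p0, hp0, hperp⟩ := hper
    have hppos : 0 < Function.minimalPeriod F b := hperp.minimalPeriod_pos hp0
    set p := Function.minimalPeriod F b with hp
    -- P is exactly the orbit of b
    have hPeq : P = (Finset.range p).image (fun i => F^[i] b) := by
      apply Finset.Subset.antisymm
      · intro b' hb'
        obtain ⟨i, hi⟩ := horb b hbP b' hb'
        simp only [Finset.mem_image, Finset.mem_range]
        exact ⟨i % p, Nat.mod_lt _ hppos,
          by rw [(Function.isPeriodicPt_minimalPeriod F b).iterate_mod_apply]; exact hi⟩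
      · intro b' hb'
        obtain ⟨i, _, rfl⟩ := Finset.mem_image.mp hb'
        exact hiter i
    have hpk : p = k := by
      rw [← hPcard, hPeq, Finset.card_image_of_injOn, Finset.card_range]
      intro a ha a' ha' h
      exact Function.iterate_injOn_Iio_minimalPeriod
        (by simpa using Finset.mem_coe.mp ha) (by simpa using Finset.mem_coe.mp ha') h
    -- now the divisibility
    set n := Function.minimalPeriod (⇑g) x with hn
    have hgn : (⇑g)^[n] x = x := Function.iterate_minimalPeriod
    have hxFn : x ∈ F^[n] b := by
      rw [hFiter]
      exact Finset.mem_image.mpr ⟨x, hxb, hgn⟩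
    have hFnb : F^[n] b = b := hbuniq _ ⟨hiter n, hxFn⟩
    have : p ∣ n := Function.isPeriodicPt_iff_minimalPeriod_dvd.mp hFnb
    rwa [hpk] at this
  · intro hdvd
    -- setoid of cycles, representative function
    let s : Setoid Ω := ⟨g.SameCycle,
      ⟨Equiv.Perm.SameCycle.refl g, Equiv.Perm.SameCycle.symm, Equiv.Perm.SameCycle.trans⟩⟩
    let r : Ω → Ω := fun x => (@Quotient.mk _ s x).out
    have hr : ∀ x, g.SameCycle (r x) x := fun x => Quotient.mk_out (s := s) x
    have hr2 : ∀ x, r (g x) = r x := by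
      intro x
      have : (@Quotient.mk _ s (g x)) = @Quotient.mk _ s x :=
        Quotient.sound ((Equiv.Perm.SameCycle.refl g x).apply_left)
      simp only [r, this]
    have spec : ∀ x, ∃ nn : ℕ, (⇑g)^[nn] (r x) = x := by
      intro x
      obtain ⟨i, _, _, hi⟩ := (hr x).exists_pow_eq g
      exact ⟨i, by rwa [← Equiv.Perm.coe_pow]⟩
    let idx : Ω → ZMod k := fun x => ((Nat.find (spec x) : ℕ) : ZMod k)
    -- key: any exponent works mod k
    have hcast : ∀ (x : Ω) (a b : ℕ), (⇑g)^[a] (r x) = x → (⇑g)^[b] (r x) = x →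
        ((a : ZMod k) = (b : ZMod k)) := by
      have key : ∀ (x : Ω) (a b : ℕ), b ≤ a → (⇑g)^[a] (r x) = x → (⇑g)^[b] (r x) = x →
          ((a : ZMod k) = (b : ZMod k)) := by
        intro x a b hba ha hb
        have : (⇑g)^[b] ((⇑g)^[a - b] (r x)) = (⇑g)^[b] (r x) := by
          rw [← Function.iterate_add_apply, show b + (a - b) = a by omega, ha, hb]
        have hperiodic : Function.IsPeriodicPt (⇑g) (a - b) (r x) :=
          Function.Injective.iterate g.injective b this
        have hdvd' : k ∣ a - b :=
          dvd_trans (hdvd (r x)) (Function.isPeriodicPt_iff_minimalPeriod_dvd.mp hperiodic)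
        exact ((ZMod.natCast_eq_natCast_iff _ _ _).mpr
          ((Nat.modEq_iff_dvd' hba).mpr hdvd')).symm
      intro x a b ha hb
      rcases le_total b a with h | h
      · exact key x a b h ha hb
      · exact (key x b a h hb ha).symm
    have hidx_eq : ∀ (x : Ω) (a : ℕ), (⇑g)^[a] (r x) = x → (a : ZMod k) = idx x := by
      intro x a ha
      exact hcast x a (Nat.find (spec x)) ha (Nat.find_spec (spec x))
    have hidx_apply : ∀ x, idx (g x) = idx x + 1 := by
      intro x
      have hn := Nat.find_spec (spec x)
      have h1 : (⇑g)^[Nat.find (spec x) + 1] (r (g x)) = g x := by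
        rw [hr2, Function.iterate_succ_apply', hn]
      have h2 := hidx_eq (g x) _ h1
      have h3 : ((Nat.find (spec x) : ℕ) : ZMod k) = idx x := rfl
      rw [← h2]
      push_cast
      rw [h3]
    -- the blocks
    let B : ZMod k → Finset Ω := fun i => Finset.univ.filter (fun x => idx x = i)
    have hmemB : ∀ (x : Ω) (i : ZMod k), x ∈ B i ↔ idx x = i := by
      intro x i; simp [B]
    have himg : ∀ i, (B i).image ⇑g = B (i + 1) := by
      intro i
      ext y
      rw [hmemB]
      simp only [Finset.mem_image]
      constructor
      · rintro ⟨x, hx, rfl⟩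
        rw [hidx_apply, (hmemB x i).mp hx]
      · intro hy
        refine ⟨g⁻¹ y, ?_, by simp⟩
        rw [hmemB]
        have := hidx_apply (g⁻¹ y)
        rw [show g (g⁻¹ y) = y by simp] at this
        rw [hy] at this
        exact (add_right_cancel this.symm)
    have hiterB : ∀ (i : ZMod k) (j : ℕ), F^[j] (B i) = B (i + j) := by
      intro i j
      induction j with
      | zero => simp
      | succ j ih =>
        rw [Function.iterate_succ_apply', ih]
        have : F (B (i + j)) = B (i + j + 1) := himg _
        rw [this]
        push_cast
        ring_nf
    have hcardim : ∀ i, (B (i + 1)).card = (B i).card := by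
      intro i
      rw [← himg i]
      exact Finset.card_image_of_injective _ g.injective
    have hcardB : ∀ i : ZMod k, (B i).card = (B 0).card := by
      intro i
      have h1 : F^[i.val] (B 0) = B i := by
        rw [hiterB]
        congr 1
        rw [zero_add, ZMod.natCast_rightInverse i]
      have h2 : ∀ (j : ℕ) (t : Finset Ω), (F^[j] t).card = t.card := by
        intro j
        induction j with
        | zero => simp
        | succ j ih =>
          intro t
          rw [Function.iterate_succ_apply', show F (F^[j] t) = (F^[j] t).image ⇑g from rfl,
            Finset.card_image_of_injective _ g.injective, ih]
      rw [← h1, h2]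
    have hsum : ∑ i : ZMod k, (B i).card = k * m := by
      rw [← hcard, Fintype.card]
      exact (Finset.card_eq_sum_card_fiberwise (f := idx) (t := Finset.univ)
        (fun x _ => Finset.mem_univ _)).symm
    have hcardB0 : (B 0).card = m := by
      have : ∑ i : ZMod k, (B i).card = k * (B 0).card := by
        rw [Finset.sum_congr rfl (fun i _ => hcardB i), Finset.sum_const,
          Finset.card_univ, ZMod.card, smul_eq_mul]
      rw [this] at hsum
      exact Nat.eq_of_mul_eq_mul_left (by omega) hsum
    have hcardBi : ∀ i, (B i).card = m := fun i => (hcardB i).trans hcardB0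
    have hBne : ∀ i, (B i).Nonempty := fun i =>
      Finset.card_pos.mp (by rw [hcardBi]; omega)
    have hBinj : Function.Injective B := by
      intro i j hij
      obtain ⟨x, hx⟩ := hBne i
      have h1 := (hmemB x i).mp hx
      have h2 := (hmemB x j).mp (hij ▸ hx)
      rw [← h1, ← h2]
    refine ⟨Finset.univ.image B, ?_, ?_, ?_, ?_, ?_⟩
    · rw [Finset.card_image_of_injective _ hBinj, Finset.card_univ, ZMod.card]
    · rintro b hb
      obtain ⟨i, _, rfl⟩ := Finset.mem_image.mp hb
      exact hcardBi i
    · intro x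
      refine ⟨B (idx x), ⟨Finset.mem_image_of_mem _ (Finset.mem_univ _),
        (hmemB x _).mpr rfl⟩, ?_⟩
      rintro b ⟨hb, hxb⟩
      obtain ⟨i, _, rfl⟩ := Finset.mem_image.mp hb
      rw [(hmemB x i).mp hxb]
    · rintro b hb
      obtain ⟨i, _, rfl⟩ := Finset.mem_image.mp hb
      rw [himg i]
      exact Finset.mem_image_of_mem _ (Finset.mem_univ _)
    · rintro b hb b' hb'
      obtain ⟨i, _, rfl⟩ := Finset.mem_image.mp hb
      obtain ⟨i', _, rfl⟩ := Finset.mem_image.mp hb'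
      refine ⟨(i' - i).val, ?_⟩
      show F^[(i' - i).val] (B i) = B i'
      rw [hiterB]
      congr 1
      rw [ZMod.natCast_rightInverse (i' - i)]
      ring
end

section
/- Let Ω be a set of size n and let g be a permutation of Ω. If there exists an integer m with 1 < m < n such that m divides the length of every cycle of g (in particular g has no fixed points and m divides n), then g preserves a partition of Ω into n/m blocks each of size m; in particular g is an imprimitive permutation. -/
open Equiv Finset

/-- `g` preserves a partition of `Ω` into `k` blocks each of size `m`:
there is a family of `k` pairwise disjoint `m`-element subsets covering `Ω`
such that `g` maps every block onto some block. -/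
def PreservesUniformPartition {Ω : Type*} [DecidableEq Ω] (g : Equiv.Perm Ω) (k m : ℕ) : Prop :=
  ∃ P : Finset (Finset Ω), P.card = k ∧ (∀ b ∈ P, b.card = m) ∧
    (∀ x : Ω, ∃! b : Finset Ω, b ∈ P ∧ x ∈ b) ∧ (∀ b ∈ P, b.image g ∈ P)

/-- A permutation of a finite set is imprimitive if it preserves a partition into
`k` blocks of size `m` for some `k, m > 1` with `k * m` the cardinality of the set. -/
def IsImprimitivePerm {Ω : Type*} [Fintype Ω] [DecidableEq Ω] (g : Equiv.Perm Ω) : Prop :=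
  ∃ k m : ℕ, 1 < k ∧ 1 < m ∧ k * m = Fintype.card Ω ∧ PreservesUniformPartition g k m

/-- if `1 < m < n = |Ω|` and `m` divides the length of every cycle of `g`
(the cycle length through `x` being the minimal period of `g` at `x`), then `g`
preserves a partition of `Ω` into `n / m` blocks each of size `m`; in particular `g`
is an imprimitive permutation. -/
theorem stmt2 {Ω : Type*} [Fintype Ω] [DecidableEq Ω] (n : ℕ) (hn : Fintype.card Ω = n)
    (g : Equiv.Perm Ω) (m : ℕ) (hm1 : 1 < m) (hmn : m < n)
    (hdvd : ∀ x : Ω, m ∣ Function.minimalPeriod (⇑g) x) :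
    PreservesUniformPartition g (n / m) m ∧ IsImprimitivePerm g := by
  classical
  have hm0 : 0 < m := lt_trans one_pos hm1
  have hper : ∀ x : Ω, x ∈ Function.periodicPts (⇑g) := by
    intro x
    refine ⟨orderOf g, orderOf_pos g, ?_⟩
    show (⇑g)^[orderOf g] x = x
    rw [← Equiv.Perm.coe_pow, pow_orderOf_eq_one]
    rfl
  have hLpos : ∀ x : Ω, 0 < Function.minimalPeriod (⇑g) x := fun x =>
    Function.minimalPeriod_pos_of_mem_periodicPts (hper x)
  set t : Ω → ℕ := fun x => Function.minimalPeriod (⇑g) x / m with ht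
  have htm : ∀ x, t x * m = Function.minimalPeriod (⇑g) x := fun x =>
    Nat.div_mul_cancel (hdvd x)
  have htpos : ∀ x, 0 < t x := by
    intro x
    by_contra h
    have h0 : t x = 0 := by omega
    have h1 := htm x
    rw [h0, zero_mul] at h1
    have := hLpos x
    omega
  have hminm : ∀ x : Ω, Function.minimalPeriod (⇑(g ^ t x)) x = m := by
    intro x
    have hco : ⇑(g ^ t x) = (⇑g)^[t x] := rfl
    rw [hco, Function.minimalPeriod_iterate_eq_div_gcd' (hper x)]
    have hgcd : Nat.gcd (Function.minimalPeriod (⇑g) x) (t x) = t x := by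
      rw [Nat.gcd_eq_right]
      exact ⟨m, (htm x).symm ▸ rfl⟩
    rw [hgcd, ← htm x, Nat.mul_div_cancel_left _ (htpos x)]
  set B : Ω → Finset Ω := fun x => (range m).image fun i => ((g ^ t x) ^ i) x with hB
  have hmemB : ∀ x : Ω, x ∈ B x := by
    intro x
    simp only [hB, mem_image, mem_range]
    exact ⟨0, hm0, by simp⟩
  have hcardB : ∀ x : Ω, (B x).card = m := by
    intro x
    rw [hB]
    rw [Finset.card_image_of_injOn, card_range]
    intro i hi j hj hij
    simp only [coe_range, Set.mem_Iio, mem_coe, mem_range] at hi hj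
    have := Function.iterate_injOn_Iio_minimalPeriod (f := ⇑(g ^ t x)) (x := x)
      (by rw [hminm x]; exact hi) (by rw [hminm x]; exact hj)
    apply this
    simpa [← Equiv.Perm.coe_pow] using hij
  -- membership characterization: points of B x are iterates g^(t x * i) x
  have hBy : ∀ x y : Ω, y ∈ B x → B y = B x := by
    intro x y hy
    simp only [hB, mem_image, mem_range] at hy
    obtain ⟨j, hj, rfl⟩ := hy
    have hLeq : Function.minimalPeriod (⇑g) (((g ^ t x) ^ j) x) =
        Function.minimalPeriod (⇑g) x := by
      have : ((g ^ t x) ^ j) x = (⇑g)^[t x * j] x := by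
        rw [← pow_mul, ← Equiv.Perm.coe_pow]
      rw [this, Function.minimalPeriod_apply_iterate (hper x)]
    have hteq : t (((g ^ t x) ^ j) x) = t x := by simp only [ht]; rw [hLeq]
    apply Finset.eq_of_subset_of_card_le
    · intro z hz
      simp only [hB, mem_image, mem_range] at hz ⊢
      obtain ⟨i, hi, rfl⟩ := hz
      refine ⟨(i + j) % m, Nat.mod_lt _ hm0, ?_⟩
      rw [hteq, ← Equiv.Perm.mul_apply, ← pow_add]
      have h1 : ((g ^ t x) ^ ((i + j) % m)) x = (⇑(g ^ t x))^[(i + j) % m] x := by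
        rw [← Equiv.Perm.coe_pow]
      have h2 : ((g ^ t x) ^ (i + j)) x = (⇑(g ^ t x))^[i + j] x := by
        rw [← Equiv.Perm.coe_pow]
      rw [h1, h2, ← hminm x, Function.iterate_mod_minimalPeriod_eq]
    · rw [hcardB, hcardB]
  have himg : ∀ x : Ω, (B x).image ⇑g = B (g x) := by
    intro x
    have hteq : t (g x) = t x := by
      simp only [ht]
      have : g x = (⇑g)^[1] x := rfl
      rw [this, Function.minimalPeriod_apply_iterate (hper x)]
    rw [hB]
    simp only [Finset.image_image, hteq]
    apply Finset.image_congr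
    intro i _
    show g (((g ^ t x) ^ i) x) = ((g ^ t x) ^ i) (g x)
    rw [← Equiv.Perm.mul_apply, ← Equiv.Perm.mul_apply]
    congr 1
    rw [← pow_mul, ← pow_succ', ← pow_succ]
  set P : Finset (Finset Ω) := Finset.univ.image B with hP
  have hPcardm : ∀ b ∈ P, b.card = m := by
    intro b hb
    simp only [hP, mem_image, mem_univ, true_and] at hb
    obtain ⟨x, rfl⟩ := hb
    exact hcardB x
  have huniq : ∀ x : Ω, ∃! b : Finset Ω, b ∈ P ∧ x ∈ b := by
    intro x
    refine ⟨B x, ⟨mem_image_of_mem B (mem_univ x), hmemB x⟩, ?_⟩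
    rintro b ⟨hbP, hxb⟩
    simp only [hP, mem_image, mem_univ, true_and] at hbP
    obtain ⟨y, rfl⟩ := hbP
    exact (hBy y x hxb).symm
  have hclosed : ∀ b ∈ P, b.image ⇑g ∈ P := by
    intro b hb
    simp only [hP, mem_image, mem_univ, true_and] at hb ⊢
    obtain ⟨y, rfl⟩ := hb
    exact ⟨g y, (himg y).symm⟩
  have hcover : P.biUnion id = Finset.univ := by
    apply Finset.eq_univ_of_forall
    intro x
    exact Finset.mem_biUnion.2 ⟨B x, mem_image_of_mem B (mem_univ x), hmemB x⟩
  have hcardsum : P.card * m = n := by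
    have h1 : (P.biUnion id).card = ∑ b ∈ P, b.card := by
      apply Finset.card_biUnion
      intro b1 h1 b2 h2 hne
      rw [Function.onFun, Finset.disjoint_left]
      intro a ha1 ha2
      simp only [hP, mem_coe, mem_image, mem_univ, true_and] at h1 h2
      obtain ⟨y1, rfl⟩ := h1
      obtain ⟨y2, rfl⟩ := h2
      exact hne ((hBy y1 a ha1).symm.trans (hBy y2 a ha2))
    rw [hcover, Finset.card_univ, hn] at h1
    have h2 : ∑ b ∈ P, b.card = P.card * m := by
      rw [Finset.sum_congr rfl hPcardm, Finset.sum_const, smul_eq_mul]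
    rw [h1, h2]
  have hPcard : P.card = n / m := by
    rw [← hcardsum, Nat.mul_div_cancel _ hm0]
  have hpres : PreservesUniformPartition g (n / m) m :=
    ⟨P, hPcard, hPcardm, huniq, hclosed⟩
  refine ⟨hpres, n / m, m, ?_, hm1, ?_, hpres⟩
  · rcases Nat.lt_or_ge 1 (n / m) with h | h
    · exact h
    · exfalso
      have : P.card ≤ 1 := hPcard ▸ h
      have := hcardsum
      interval_cases h' : P.card <;> omega
  · rw [hn, ← hPcard]; exact hcardsum
end

section
/- Let k, m > 1 and let g be a permutation of a set Ω of size k·m. Then g preserves some partition of Ω into k blocks each of size m (equivalently, g is contained in an imprimitive permutation group with k blocks of size m) if and only if the cycle partition of g is an i-partition of type (k, m). -/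
set_option linter.unusedSectionVars false
set_option linter.unusedVariables false
set_option maxHeartbeats 1000000

open Equiv Finset

/-- The cycle partition of a permutation: the multiset of lengths of all its cycles,
including one part equal to `1` for each fixed point. -/
def cyclePartition {Ω : Type*} [Fintype Ω] [DecidableEq Ω] (g : Equiv.Perm Ω) : Multiset ℕ :=
  g.cycleType + Multiset.replicate (Finset.univ.filter fun x => g x = x).card 1

/-- An ic-partition of type `(k, m)`: a partition of `k * m` each of whose parts
is divisible by `k`. -/
def IsICPartition (k m : ℕ) (P : Multiset ℕ) : Prop :=
  P.sum = k * m ∧ ∀ p ∈ P, k ∣ p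

/-- An i-partition of type `(k, m)`: the multiset of parts can be split into clusters,
the `i`-th cluster being an ic-partition of type `(kᵢ, m)`, where `(k₁, …, k_r)` is a
partition of `k` (so each `kᵢ` is positive and they sum to `k`). -/
def IsIPartition (k m : ℕ) (P : Multiset ℕ) : Prop :=
  ∃ C : Multiset (ℕ × Multiset ℕ),
    (C.map Prod.snd).sum = P ∧ (C.map Prod.fst).sum = k ∧
    ∀ q ∈ C, 0 < q.1 ∧ IsICPartition q.1 m q.2

open Function

section toolkit
variable {α : Type*} [DecidableEq α] (f : α → α)

noncomputable def orbF (x : α) : Finset α := (Finset.range (minimalPeriod f x)).image (fun n => f^[n] x)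

variable {f} {x y : α}

lemma orbF_mem_iter (hx : x ∈ periodicPts f) (n : ℕ) : f^[n] x ∈ orbF f x := by
  refine Finset.mem_image.2 ⟨n % minimalPeriod f x,
    Finset.mem_range.2 (Nat.mod_lt _ (minimalPeriod_pos_of_mem_periodicPts hx)),
    iterate_mod_minimalPeriod_eq⟩

lemma orbF_mem_self (hx : x ∈ periodicPts f) : x ∈ orbF f x := orbF_mem_iter hx 0

lemma orbF_mem_iff (hx : x ∈ periodicPts f) : y ∈ orbF f x ↔ ∃ n : ℕ, f^[n] x = y := by
  constructor
  · rintro h; obtain ⟨n, -, rfl⟩ := Finset.mem_image.1 h; exact ⟨n, rfl⟩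
  · rintro ⟨n, rfl⟩; exact orbF_mem_iter hx n

lemma orbF_card : (orbF f x).card = minimalPeriod f x := by
  rw [orbF, Finset.card_image_of_injOn, Finset.card_range]
  have := iterate_injOn_Iio_minimalPeriod (f := f) (x := x)
  intro a ha b hb hab
  exact this (by simpa using Finset.mem_range.1 ha) (by simpa using Finset.mem_range.1 hb) hab

lemma iterate_mem_periodicPts (hx : x ∈ periodicPts f) (n : ℕ) : f^[n] x ∈ periodicPts f := by
  obtain ⟨c, hc, hper⟩ := hx
  exact ⟨c, hc, (hper.apply_iterate n)⟩

lemma orbF_shift (hx : x ∈ periodicPts f) (n : ℕ) : orbF f (f^[n] x) = orbF f x := by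
  apply Finset.Subset.antisymm
  · intro y hy
    obtain ⟨i, rfl⟩ := (orbF_mem_iff (iterate_mem_periodicPts hx n)).1 hy
    rw [← Function.iterate_add_apply]
    exact orbF_mem_iter hx _
  · intro y hy
    obtain ⟨i, rfl⟩ := (orbF_mem_iff hx).1 hy
    rcases Nat.eq_zero_or_pos n with rfl | hn
    · exact orbF_mem_iter (by simpa using hx) i
    · have hc := minimalPeriod_pos_of_mem_periodicPts hx
      have hper : f^[n * minimalPeriod f x] x = x := by
        have := (isPeriodicPt_minimalPeriod f x).mul_const n
        rwa [IsPeriodicPt, IsFixedPt, Nat.mul_comm] at this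
      have hx' : f^[i] x = f^[i + (n * minimalPeriod f x - n)] (f^[n] x) := by
        rw [← Function.iterate_add_apply]
        have hle : n ≤ n * minimalPeriod f x := Nat.le_mul_of_pos_right n hc
        rw [show i + (n * minimalPeriod f x - n) + n = i + n * minimalPeriod f x by omega,
          Function.iterate_add_apply, hper]
      rw [hx']
      exact orbF_mem_iter (iterate_mem_periodicPts hx n) _

lemma orbF_eq_of_mem (hx : x ∈ periodicPts f) (hy : y ∈ orbF f x) : orbF f y = orbF f x := by
  obtain ⟨n, rfl⟩ := (orbF_mem_iff hx).1 hy
  exact orbF_shift hx n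

lemma mem_periodicPts_of_mem_orbF (hx : x ∈ periodicPts f) (hy : y ∈ orbF f x) :
    y ∈ periodicPts f := by
  obtain ⟨n, rfl⟩ := (orbF_mem_iff hx).1 hy
  exact iterate_mem_periodicPts hx n

lemma periodicPts_all [Finite α] (hf : Function.Injective f) (x : α) : x ∈ periodicPts f := by
  obtain ⟨i, j, hne, hij⟩ := Finite.exists_ne_map_eq_of_infinite (fun n : ℕ => f^[n] x)
  wlog hlt : i < j generalizing i j
  · exact this j i hne.symm hij.symm (by omega)
  have h1 : f^[i] (f^[j - i] x) = f^[i] x := by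
    rw [← Function.iterate_add_apply]
    rw [show i + (j - i) = j by omega]
    exact hij.symm
  have h2 : f^[j - i] x = x := (hf.iterate i) h1
  exact ⟨j - i, by omega, h2⟩

end toolkit

section msets
variable {α β : Type*}

lemma count_finset_val [DecidableEq α] (s : Finset α) (x : α) :
    Multiset.count x s.val = if x ∈ s then 1 else 0 := by
  by_cases h : x ∈ s
  · rw [Multiset.count_eq_one_of_mem s.nodup h]; simp [h]
  · rw [Multiset.count_eq_zero_of_notMem h]; simp [h]

lemma group_val [DecidableEq α] [DecidableEq β] (s : Finset α) (f : α → β) :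
    ((s.image f).val.bind fun b => (s.filter fun a => f a = b).val) = s.val := by
  ext x
  rw [Multiset.count_bind]
  have h1 : ((s.image f).val.map fun b => Multiset.count x (s.filter fun a => f a = b).val).sum
      = ∑ b ∈ s.image f, Multiset.count x (s.filter fun a => f a = b).val := rfl
  rw [h1, count_finset_val]
  have h2 : ∀ b ∈ s.image f, Multiset.count x (s.filter fun a => f a = b).val
      = if b = f x then (if x ∈ s then 1 else 0) else 0 := by
    intro b _
    rw [count_finset_val]
    by_cases hbx : b = f x
    · subst hbx; simp [Finset.mem_filter, and_comm]
    · simp only [Finset.mem_filter]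
      have : ¬ (x ∈ s ∧ f x = b) := fun h => hbx h.2.symm
      simp [this, hbx]
  rw [Finset.sum_congr rfl h2, Finset.sum_ite_eq' (s.image f) (f x)]
  by_cases hx : x ∈ s <;> simp [hx, Finset.mem_image_of_mem f]

lemma split_of_map_eq_add [DecidableEq α] (f : α → β) (t : Multiset β) :
    ∀ (s : Multiset α) (u : Multiset β), s.map f = t + u →
      ∃ s₁ s₂ : Multiset α, s = s₁ + s₂ ∧ s₁.map f = t ∧ s₂.map f = u := by
  induction t using Multiset.induction_on with
  | empty => exact fun s u h => ⟨0, s, by simp, by simp, by simpa using h⟩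
  | cons b t ih =>
    intro s u h
    rw [Multiset.cons_add] at h
    have hb : b ∈ s.map f := by rw [h]; exact Multiset.mem_cons_self _ _
    obtain ⟨a, ha, rfl⟩ := Multiset.mem_map.1 hb
    have hs : s = a ::ₘ s.erase a := (Multiset.cons_erase ha).symm
    rw [hs, Multiset.map_cons] at h
    have h' : (s.erase a).map f = t + u := (Multiset.cons_inj_right _).1 h
    obtain ⟨s₁, s₂, hsum, h₁, h₂⟩ := ih (s.erase a) u h'
    exact ⟨a ::ₘ s₁, s₂, by rw [hs, hsum, Multiset.cons_add], by simp [h₁], h₂⟩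

lemma lift_clusters [DecidableEq α] (f : α → β) :
    ∀ (C : Multiset (ℕ × Multiset β)) (s : Multiset α), (C.map Prod.snd).sum = s.map f →
      ∃ E : Multiset (ℕ × Multiset α), (E.map Prod.snd).sum = s ∧
        E.map (fun e => (e.1, e.2.map f)) = C := by
  intro C
  induction C using Multiset.induction_on with
  | empty =>
    intro s h
    refine ⟨0, ?_, rfl⟩
    simp only [Multiset.map_zero, Multiset.sum_zero] at h
    rw [eq_comm, Multiset.map_eq_zero] at h
    simp [h]
  | cons q C ih =>
    intro s h
    rw [Multiset.map_cons, Multiset.sum_cons] at h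
    obtain ⟨s₁, s₂, rfl, h₁, h₂⟩ := split_of_map_eq_add f q.2 s (C.map Prod.snd).sum h.symm
    obtain ⟨E, hE1, hE2⟩ := ih s₂ h₂.symm
    exact ⟨(q.1, s₁) ::ₘ E, by simp [hE1], by simp [hE2, h₁]⟩

lemma nodup_of_parts {γ : Type*} [DecidableEq α] [DecidableEq γ] (E : Multiset (γ × Multiset α)) (s : Multiset α)
    (hsum : (E.map Prod.snd).sum = s) (hs : s.Nodup) (hne : ∀ e ∈ E, e.2 ≠ 0) : E.Nodup := by
  rw [Multiset.nodup_iff_count_le_one]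
  intro e
  by_contra hc
  push_neg at hc
  have he : e ∈ E := by
    by_contra h
    rw [Multiset.count_eq_zero_of_notMem h] at hc; omega
  have hrep : Multiset.replicate 2 e ≤ E := (Multiset.le_count_iff_replicate_le).1 (by omega)
  obtain ⟨u, hu⟩ := Multiset.le_iff_exists_add.1 hrep
  obtain ⟨x, hx⟩ := Multiset.exists_mem_of_ne_zero (hne e he)
  have : Multiset.count x s ≥ 2 := by
    rw [← hsum, hu]
    simp only [Multiset.map_add, Multiset.sum_add]
    rw [Multiset.count_add]
    have : Multiset.count x ((Multiset.replicate 2 e).map Prod.snd).sum = 2 * Multiset.count x e.2 := by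
      rw [Multiset.map_replicate]
      rw [show (Multiset.replicate 2 e.2).sum = e.2 + e.2 by
        rw [show (2:ℕ) = 1 + 1 by rfl, Multiset.replicate_add]; simp]
      rw [Multiset.count_add]; ring
    rw [this]
    have hx1 : 1 ≤ Multiset.count x e.2 := Multiset.one_le_count_iff_mem.2 hx
    omega
  have := Multiset.nodup_iff_count_le_one.1 hs x
  omega

end msets


section perm
variable {Ω : Type*} [Fintype Ω] [DecidableEq Ω] (g : Equiv.Perm Ω)

lemma perm_periodic (x : Ω) : x ∈ periodicPts ⇑g :=
  periodicPts_all g.injective x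

variable {g}

lemma orbF_fixed {x : Ω} (hx : g x = x) : orbF ⇑g x = {x} := by
  have h1 : minimalPeriod ⇑g x = 1 := minimalPeriod_eq_one_iff_isFixedPt.2 hx
  simp [orbF, h1]

lemma sameCycle_iff_mem_orbF {x y : Ω} : g.SameCycle x y ↔ ∃ n : ℕ, (⇑g)^[n] x = y := by
  constructor
  · intro h
    obtain ⟨i, _, hi⟩ := Equiv.Perm.SameCycle.exists_pow_eq' h
    exact ⟨i, hi⟩
  · rintro ⟨n, rfl⟩
    exact ⟨(n : ℤ), by rw [zpow_natCast, Equiv.Perm.coe_pow]⟩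

lemma orbF_support {x : Ω} (hx : x ∈ g.support) : orbF ⇑g x = (g.cycleOf x).support := by
  ext y
  rw [Equiv.Perm.mem_support_cycleOf_iff' (Equiv.Perm.mem_support.1 hx)]
  rw [show (y ∈ orbF ⇑g x ↔ ∃ n : ℕ, (⇑g)^[n] x = y) from
    orbF_mem_iff (perm_periodic g x)]
  exact sameCycle_iff_mem_orbF.symm

lemma cyclePartition_eq :
    cyclePartition g = ((univ.image fun x => orbF ⇑g x)).val.map Finset.card := by
  classical
  set F : Finset Ω := univ.filter fun x => g x = x with hF
  have hsplit : (univ : Finset Ω) = g.support ∪ F := by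
    ext x; simp only [hF, Finset.mem_union, Finset.mem_filter, Finset.mem_univ, true_and,
      Equiv.Perm.mem_support]; tauto
  have himg : (univ.image fun x => orbF ⇑g x)
      = (g.support.image fun x => orbF ⇑g x) ∪ (F.image fun x => orbF ⇑g x) := by
    rw [← Finset.image_union, ← hsplit]
  have hFimg : (F.image fun x => orbF ⇑g x) = F.image fun x => {x} := by
    apply Finset.image_congr
    intro x hx
    exact orbF_fixed (by simpa [hF] using hx)
  have hsupimg : (g.support.image fun x => orbF ⇑g x) = g.cycleFactorsFinset.image Equiv.Perm.support := by
    apply Finset.Subset.antisymm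
    · intro Z hZ
      obtain ⟨x, hx, rfl⟩ := Finset.mem_image.1 hZ
      rw [orbF_support hx]
      exact Finset.mem_image_of_mem _ (Equiv.Perm.cycleOf_mem_cycleFactorsFinset_iff.2 hx)
    · intro Z hZ
      obtain ⟨c, hc, rfl⟩ := Finset.mem_image.1 hZ
      have hcyc := (Equiv.Perm.mem_cycleFactorsFinset_iff.1 hc).1
      obtain ⟨x, hx⟩ := Finset.card_pos.1 (lt_of_lt_of_le (by norm_num) hcyc.two_le_card_support)
      have hcx : c = g.cycleOf x := Equiv.Perm.cycle_is_cycleOf hx hc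
      have hxs : x ∈ g.support := by
        have := Equiv.Perm.support_cycleOf_le g x
        rw [← hcx] at this
        exact this hx
      exact Finset.mem_image.2 ⟨x, hxs, by rw [orbF_support hxs, hcx]⟩
  have hdisj : Disjoint (g.support.image fun x => orbF ⇑g x) (F.image fun x => orbF ⇑g x) := by
    rw [Finset.disjoint_left]
    intro Z h1 h2
    rw [hsupimg] at h1
    rw [hFimg] at h2
    obtain ⟨c, hc, rfl⟩ := Finset.mem_image.1 h1
    obtain ⟨x, -, hx⟩ := Finset.mem_image.1 h2
    have h2le := (Equiv.Perm.mem_cycleFactorsFinset_iff.1 hc).1.two_le_card_support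
    rw [← hx] at h2le
    simp at h2le
  rw [himg]
  rw [← Finset.disjUnion_eq_union _ _ hdisj,
    show ((Finset.image (fun x => orbF ⇑g x) g.support).disjUnion _ hdisj).val
      = (Finset.image (fun x => orbF ⇑g x) g.support).val + (Finset.image (fun x => orbF ⇑g x) F).val from rfl,
    Multiset.map_add]
  have hpart1 : ((g.support.image fun x => orbF ⇑g x)).val.map Finset.card = g.cycleType := by
    rw [hsupimg, Finset.image_val_of_injOn, Multiset.map_map, Equiv.Perm.cycleType_def]
    intro c hc c' hc' hcc
    simp only [Finset.mem_coe] at hc hc'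
    obtain ⟨x, hx⟩ := Finset.card_pos.1 (lt_of_lt_of_le (by norm_num)
      (Equiv.Perm.mem_cycleFactorsFinset_iff.1 hc).1.two_le_card_support)
    rw [Equiv.Perm.cycle_is_cycleOf hx hc, Equiv.Perm.cycle_is_cycleOf (hcc ▸ hx) hc']
  have hpart2 : ((F.image fun x => orbF ⇑g x)).val.map Finset.card
      = Multiset.replicate F.card 1 := by
    rw [hFimg, Finset.image_val_of_injOn, Multiset.map_map]
    · rw [show ((fun Z : Finset Ω => Z.card) ∘ fun x : Ω => ({x} : Finset Ω)) = fun _ => 1 by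
        funext x; simp]
      rw [Multiset.map_const', Finset.card_def]
    · intro x _ y _ h
      simpa using h
  rw [hpart1, hpart2]
  rfl

end perm

section strand
variable {Ω : Type*} [Fintype Ω] [DecidableEq Ω] (g : Equiv.Perm Ω)

noncomputable def strandF (x : Ω) (d a : ℕ) : Finset Ω :=
  (Finset.range (minimalPeriod ⇑g x / d)).image (fun i => (⇑g)^[a + i * d] x)

variable {g} {x : Ω} {d : ℕ}

lemma exp_lt (hd : 0 < d) (hdvd : d ∣ minimalPeriod ⇑g x) {a i : ℕ} (ha : a < d)
    (hi : i < minimalPeriod ⇑g x / d) : a + i * d < minimalPeriod ⇑g x := by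
  have h1 : minimalPeriod ⇑g x / d * d = minimalPeriod ⇑g x := Nat.div_mul_cancel hdvd
  have h3 : (i + 1) * d ≤ minimalPeriod ⇑g x / d * d := Nat.mul_le_mul_right d (by omega)
  have h4 : a + i * d < (i + 1) * d := by rw [Nat.add_mul, one_mul]; omega
  omega

lemma strand_sub (a : ℕ) : strandF g x d a ⊆ orbF ⇑g x := by
  intro y hy
  obtain ⟨i, -, rfl⟩ := Finset.mem_image.1 hy
  exact orbF_mem_iter (periodicPts_all g.injective x) _

lemma strand_inj (hd : 0 < d) (hdvd : d ∣ minimalPeriod ⇑g x) {a : ℕ} (ha : a < d) :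
    Set.InjOn (fun i => (⇑g)^[a + i * d] x) (Finset.range (minimalPeriod ⇑g x / d)) := by
  intro i hi i' hi' h
  simp only [Finset.coe_range, Set.mem_Iio] at hi hi'
  have e1 : a + i * d < minimalPeriod ⇑g x := exp_lt hd hdvd ha hi
  have e2 : a + i' * d < minimalPeriod ⇑g x := exp_lt hd hdvd ha hi'
  have := iterate_injOn_Iio_minimalPeriod (f := ⇑g) (x := x) (Set.mem_Iio.2 e1) (Set.mem_Iio.2 e2) h
  have := Nat.add_left_cancel this
  exact Nat.eq_of_mul_eq_mul_right hd this

lemma strand_card (hd : 0 < d) (hdvd : d ∣ minimalPeriod ⇑g x) {a : ℕ} (ha : a < d) :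
    (strandF g x d a).card = minimalPeriod ⇑g x / d := by
  rw [strandF, Finset.card_image_of_injOn (strand_inj hd hdvd ha), Finset.card_range]

lemma strand_disj (hd : 0 < d) (hdvd : d ∣ minimalPeriod ⇑g x) {a a' : ℕ} (ha : a < d)
    (ha' : a' < d) (hne : a ≠ a') : Disjoint (strandF g x d a) (strandF g x d a') := by
  rw [Finset.disjoint_left]
  rintro y h1 h2
  obtain ⟨i, hi, rfl⟩ := Finset.mem_image.1 h1
  obtain ⟨i', hi', hy⟩ := Finset.mem_image.1 h2
  rw [Finset.mem_range] at hi hi'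
  have e1 : a + i * d < minimalPeriod ⇑g x := exp_lt hd hdvd ha hi
  have e2 : a' + i' * d < minimalPeriod ⇑g x := exp_lt hd hdvd ha' hi'
  have heq := iterate_injOn_Iio_minimalPeriod (f := ⇑g) (x := x)
    (Set.mem_Iio.2 e2) (Set.mem_Iio.2 e1) hy
  apply hne
  have : (a + i * d) % d = (a' + i' * d) % d := by rw [heq]
  rwa [Nat.add_mul_mod_self_right, Nat.add_mul_mod_self_right,
    Nat.mod_eq_of_lt ha, Nat.mod_eq_of_lt ha'] at this

lemma strand_cover (hd : 0 < d) (hdvd : d ∣ minimalPeriod ⇑g x) :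
    orbF ⇑g x = (Finset.range d).biUnion (fun a => strandF g x d a) := by
  apply Finset.Subset.antisymm
  · intro y hy
    obtain ⟨n, -, rfl⟩ := Finset.mem_image.1 hy
    rw [← iterate_mod_minimalPeriod_eq]
    set n' := n % minimalPeriod ⇑g x with hn'
    have hcpos : 0 < minimalPeriod ⇑g x :=
      minimalPeriod_pos_of_mem_periodicPts (periodicPts_all g.injective x)
    have hlt : n' < minimalPeriod ⇑g x := Nat.mod_lt _ hcpos
    refine Finset.mem_biUnion.2 ⟨n' % d, Finset.mem_range.2 (Nat.mod_lt _ hd), ?_⟩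
    refine Finset.mem_image.2 ⟨n' / d, Finset.mem_range.2 (Nat.div_lt_div_of_lt_of_dvd hdvd hlt), ?_⟩
    rw [show n' % d + n' / d * d = n' by rw [Nat.mul_comm]; exact Nat.mod_add_div n' d]
  · intro y hy
    obtain ⟨a, -, hy⟩ := Finset.mem_biUnion.1 hy
    exact strand_sub a hy

lemma strand_img (hd : 0 < d) (hdvd : d ∣ minimalPeriod ⇑g x) {a : ℕ} (ha : a < d) :
    (strandF g x d a).image ⇑g = strandF g x d ((a + 1) % d) := by
  have hcpos : 0 < minimalPeriod ⇑g x :=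
    minimalPeriod_pos_of_mem_periodicPts (periodicPts_all g.injective x)
  set t := minimalPeriod ⇑g x / d with ht
  have htpos : 0 < t := Nat.div_pos (Nat.le_of_dvd hcpos hdvd) hd
  have htd : t * d = minimalPeriod ⇑g x := Nat.div_mul_cancel hdvd
  have hbase : (strandF g x d a).image ⇑g
      = (Finset.range t).image (fun i => (⇑g)^[a + i * d + 1] x) := by
    rw [strandF, Finset.image_image]
    apply Finset.image_congr
    intro i _
    exact (Function.iterate_succ_apply' ⇑g _ x).symm
  rw [hbase]
  by_cases hlast : a + 1 < d
  · rw [Nat.mod_eq_of_lt hlast, strandF]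
    apply Finset.image_congr
    intro i _
    show (⇑g)^[a + i * d + 1] x = (⇑g)^[a + 1 + i * d] x
    rw [show a + i * d + 1 = a + 1 + i * d by omega]
  · have had : a = d - 1 := by omega
    have hmod : (a + 1) % d = 0 := by
      rw [show a + 1 = d by omega, Nat.mod_self]
    rw [hmod, strandF]
    have hper : (⇑g)^[t * d] x = x := by
      rw [htd]; exact isPeriodicPt_minimalPeriod ⇑g x
    ext y
    simp only [Finset.mem_image, Finset.mem_range]
    constructor
    · rintro ⟨i, hi, rfl⟩
      have hexp : a + i * d + 1 = (i + 1) * d := by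
        rw [had]; rw [Nat.add_mul, one_mul]; omega
      rw [hexp]
      by_cases hend : i + 1 = t
      · exact ⟨0, htpos, by rw [hend, hper]; simp⟩
      · exact ⟨i + 1, by omega, by rw [show 0 + (i+1) * d = (i+1) * d by omega]⟩
    · rintro ⟨i, hi, rfl⟩
      by_cases hzero : i = 0
      · refine ⟨t - 1, by omega, ?_⟩
        have hexp : a + (t - 1) * d + 1 = t * d := by
          rw [had, Nat.sub_mul, one_mul]
          have : d ≤ t * d := Nat.le_mul_of_pos_left d htpos
          omega
        rw [hexp, hper, hzero]
        simp
      · refine ⟨i - 1, by omega, ?_⟩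
        have hexp : a + (i - 1) * d + 1 = 0 + i * d := by
          rw [had, Nat.sub_mul, one_mul, Nat.zero_add]
          have : d ≤ i * d := Nat.le_mul_of_pos_left d (by omega)
          omega
        rw [hexp]
end strand
/-- for `k, m > 1` and a permutation `g` of a set of size `k * m`, `g`
preserves some partition into `k` blocks each of size `m` iff the cycle partition of
`g` is an i-partition of type `(k, m)`. -/
theorem stmt3 {Ω : Type*} [Fintype Ω] [DecidableEq Ω] (k m : ℕ) (hk : 1 < k) (hm : 1 < m)
    (hcard : Fintype.card Ω = k * m) (g : Equiv.Perm Ω) :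
    PreservesUniformPartition g k m ↔ IsIPartition k m (cyclePartition g) := by

  classical
  set O : Finset (Finset Ω) := univ.image (fun x => orbF ⇑g x) with hO
  have hcp : cyclePartition g = O.val.map Finset.card := cyclePartition_eq
  have hperm : ∀ x : Ω, x ∈ periodicPts ⇑g := fun x => periodicPts_all g.injective x
  have hself : ∀ x : Ω, x ∈ orbF ⇑g x := fun x => orbF_mem_self (hperm x)
  have hOmem : ∀ Z ∈ O, ∀ x ∈ Z, Z = orbF ⇑g x := by
    intro Z hZ x hx
    obtain ⟨y, -, rfl⟩ := Finset.mem_image.1 hZ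
    exact (orbF_eq_of_mem (hperm y) hx).symm
  have hOx : ∀ x : Ω, orbF ⇑g x ∈ O := fun x => Finset.mem_image_of_mem _ (Finset.mem_univ x)
  have hOne : ∀ Z ∈ O, Z.Nonempty := by
    intro Z hZ; obtain ⟨y, -, rfl⟩ := Finset.mem_image.1 hZ; exact ⟨y, hself y⟩
  have hOeq : ∀ Z ∈ O, ∀ W ∈ O, ∀ x, x ∈ Z → x ∈ W → Z = W := fun Z hZ W hW x h1 h2 =>
    (hOmem Z hZ x h1).trans (hOmem W hW x h2).symm
  constructor
  · rintro ⟨P, hPcard, hPsize, hPuniq, hPimg⟩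
    set φ : Finset Ω → Finset Ω := fun s => s.image ⇑g with hφ
    have hφinj : Function.Injective φ := Finset.image_injective g.injective
    have hφper : ∀ s : Finset Ω, s ∈ periodicPts φ := fun s => periodicPts_all hφinj s
    have hφiterP : ∀ b ∈ P, ∀ n : ℕ, φ^[n] b ∈ P := by
      intro b hb n
      induction n with
      | zero => exact hb
      | succ n ih => rw [Function.iterate_succ_apply']; exact hPimg _ ih
    choose β hβ using hPuniq
    have hβP : ∀ x, β x ∈ P := fun x => (hβ x).1.1
    have hβmem : ∀ x, x ∈ β x := fun x => (hβ x).1.2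
    have huniqb : ∀ (x : Ω), ∀ b ∈ P, x ∈ b → b = β x := fun x b hb hx => (hβ x).2 b ⟨hb, hx⟩
    have hcompat : ∀ (x : Ω) (n : ℕ), β ((⇑g)^[n] x) = φ^[n] (β x) := by
      intro x n
      induction n with
      | zero => rfl
      | succ n ih =>
        rw [Function.iterate_succ_apply', Function.iterate_succ_apply', ← ih]
        refine (huniqb ((⇑g) ((⇑g)^[n] x)) (φ (β ((⇑g)^[n] x))) (hPimg _ (hβP _)) ?_).symm
        exact Finset.mem_image_of_mem _ (hβmem _)
    have hPne : ∀ b ∈ P, b.Nonempty := by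
      intro b hb; rw [← Finset.card_pos, hPsize b hb]; omega
    have hPdisj : ∀ b ∈ P, ∀ b' ∈ P, ∀ x, x ∈ b → x ∈ b' → b = b' := by
      intro b hb b' hb' x h1 h2
      rw [huniqb x b hb h1, huniqb x b' hb' h2]
    have horbP : ∀ b ∈ P, ∀ b' ∈ orbF φ b, b' ∈ P := by
      intro b hb b' hb'
      obtain ⟨n, rfl⟩ := (orbF_mem_iff (hφper b)).1 hb'
      exact hφiterP b hb n
    set ρ : Finset Ω → Finset (Finset Ω) :=
      fun Z => if h : Z.Nonempty then orbF φ (β h.choose) else ∅ with hρdef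
    have hρ : ∀ Z ∈ O, ∀ x ∈ Z, ρ Z = orbF φ (β x) := by
      intro Z hZ x hx
      have hZne : Z.Nonempty := hOne Z hZ
      have hρZ : ρ Z = orbF φ (β hZne.choose) := dif_pos hZne
      have hc : hZne.choose ∈ Z := hZne.choose_spec
      have hZc : Z = orbF ⇑g hZne.choose := hOmem Z hZ _ hc
      have hx' : x ∈ orbF ⇑g hZne.choose := by rw [← hZc]; exact hx
      obtain ⟨n, rfl⟩ := (orbF_mem_iff (hperm _)).1 hx'
      rw [hρZ, hcompat, orbF_shift (hφper _) n]
    have hρx : ∀ x : Ω, ρ (orbF ⇑g x) = orbF φ (β x) := fun x => hρ _ (hOx x) x (hself x)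
    set B : Finset (Finset (Finset Ω)) := O.image ρ with hB
    refine ⟨B.val.map (fun β' => (β'.card, (O.filter (fun Z => ρ Z = β')).val.map Finset.card)),
      ?_, ?_, ?_⟩
    · rw [hcp, Multiset.map_map]
      calc (Multiset.map (fun β' => (O.filter (fun Z => ρ Z = β')).val.map Finset.card) B.val).sum
          = B.val.bind (fun β' => (O.filter (fun Z => ρ Z = β')).val.map Finset.card) := rfl
        _ = (B.val.bind (fun β' => (O.filter (fun Z => ρ Z = β')).val)).map Finset.card :=
            (Multiset.map_bind _ _ _).symm
        _ = O.val.map Finset.card := by rw [hB, group_val O ρ]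
    · rw [Multiset.map_map]
      have hBP : B = P.image (fun bb => orbF φ bb) := by
        apply Finset.Subset.antisymm
        · intro β' hβ'
          obtain ⟨Z, hZ, rfl⟩ := Finset.mem_image.1 hβ'
          obtain ⟨x, hx⟩ := hOne Z hZ
          rw [hρ Z hZ x hx]
          exact Finset.mem_image_of_mem _ (hβP x)
        · intro β' hβ'
          obtain ⟨bb, hbb, rfl⟩ := Finset.mem_image.1 hβ'
          obtain ⟨x, hx⟩ := hPne bb hbb
          have hbx : bb = β x := huniqb x bb hbb hx
          refine Finset.mem_image.2 ⟨orbF ⇑g x, hOx x, ?_⟩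
          rw [hρx x, hbx]
      have hfib : ∀ β' ∈ B, P.filter (fun bb => orbF φ bb = β') = β' := by
        intro β' hβ'
        rw [hBP] at hβ'
        obtain ⟨b₀, hb₀, rfl⟩ := Finset.mem_image.1 hβ'
        ext bb
        simp only [Finset.mem_filter]
        constructor
        · rintro ⟨hbP2, heq⟩
          rw [← heq]
          exact orbF_mem_self (hφper bb)
        · intro hbb
          exact ⟨horbP b₀ hb₀ bb hbb, orbF_eq_of_mem (hφper b₀) hbb⟩
      have hcard2 : ∑ β' ∈ B, β'.card = k := by
        rw [← hPcard]
        rw [Finset.card_eq_sum_card_fiberwise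
          (f := fun bb => orbF φ bb) (s := P) (t := B)
          (fun bb hbb => by rw [hBP]; exact Finset.mem_image_of_mem _ hbb)]
        apply Finset.sum_congr rfl
        intro β' hβ'
        rw [hfib β' hβ']
      exact hcard2
    · intro q hq
      obtain ⟨β', hβ'B, rfl⟩ := Multiset.mem_map.1 hq
      have hβ'B' : β' ∈ B := hβ'B
      obtain ⟨Z₀, hZ₀, hZβ⟩ := Finset.mem_image.1 hβ'B'
      obtain ⟨x₀, hx₀⟩ := hOne Z₀ hZ₀
      have hβ'eq : β' = orbF φ (β x₀) := by rw [← hZβ]; exact hρ Z₀ hZ₀ x₀ hx₀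
      have hb₀P : β x₀ ∈ P := hβP x₀
      refine ⟨?_, ?_, ?_⟩
      · rw [hβ'eq]
        exact Finset.card_pos.2 ⟨β x₀, orbF_mem_self (hφper _)⟩
      · set U : Finset Ω := β'.biUnion id with hU
        have hβ'P : ∀ bb ∈ β', bb ∈ P := by
          intro bb hbb; rw [hβ'eq] at hbb; exact horbP _ hb₀P bb hbb
        have hUmem : ∀ x : Ω, x ∈ U ↔ ρ (orbF ⇑g x) = β' := by
          intro x
          constructor
          · intro hx
            obtain ⟨bb, hbb, hxbb⟩ := Finset.mem_biUnion.1 hx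
            have hbP2 := hβ'P bb hbb
            have hbbx : bb = β x := huniqb x bb hbP2 hxbb
            rw [hρx x, ← hbbx]
            rw [hβ'eq] at hbb ⊢
            exact orbF_eq_of_mem (hφper _) hbb
          · intro hx
            have h1 : β' = orbF φ (β x) := by rw [← hx, hρx x]
            refine Finset.mem_biUnion.2 ⟨β x, ?_, hβmem x⟩
            rw [h1]
            exact orbF_mem_self (hφper _)
        have hUcard : U.card = β'.card * m := by
          rw [hU, Finset.card_biUnion]
          · rw [Finset.sum_congr rfl
                (fun bb hbb => show (id bb).card = m from hPsize bb (hβ'P bb hbb)),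
              Finset.sum_const, smul_eq_mul]
          · intro bb h1 bb' h2 hne
            simp only [Function.onFun]
            rw [Finset.disjoint_left]
            intro x hx1 hx2
            exact hne (hPdisj bb (hβ'P bb h1) bb' (hβ'P bb' h2) x hx1 hx2)
        have hfib2 : ∀ Z ∈ O.filter (fun Z => ρ Z = β'),
            U.filter (fun x => orbF ⇑g x = Z) = Z := by
          intro Z hZf
          obtain ⟨hZO2, hZρ⟩ := Finset.mem_filter.1 hZf
          ext x
          simp only [Finset.mem_filter]
          constructor
          · rintro ⟨hxU, rfl⟩
            exact hself x
          · intro hxZ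
            have hZx : Z = orbF ⇑g x := hOmem Z hZO2 x hxZ
            refine ⟨?_, hZx.symm⟩
            rw [hUmem x, ← hZx, hZρ]
        calc ((O.filter (fun Z => ρ Z = β')).val.map Finset.card).sum
            = ∑ Z ∈ O.filter (fun Z => ρ Z = β'), Z.card := rfl
          _ = ∑ Z ∈ O.filter (fun Z => ρ Z = β'), (U.filter (fun x => orbF ⇑g x = Z)).card := by
              refine Finset.sum_congr rfl fun Z hZf => ?_
              rw [hfib2 Z hZf]
          _ = U.card := (Finset.card_eq_sum_card_fiberwise
              (fun x hx => Finset.mem_filter.2 ⟨hOx x, (hUmem x).1 hx⟩)).symm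
          _ = β'.card * m := hUcard
      · intro p hp
        obtain ⟨Z, hZf, rfl⟩ := Multiset.mem_map.1 hp
        obtain ⟨hZO2, hZρ⟩ := Finset.mem_filter.1 (show Z ∈ O.filter (fun Z => ρ Z = β') from hZf)
        obtain ⟨x, -, rfl⟩ := Finset.mem_image.1 hZO2
        have h1 : β' = orbF φ (β x) := by rw [← hZρ, hρx x]
        rw [h1, orbF_card, orbF_card]
        apply Function.IsPeriodicPt.minimalPeriod_dvd
        show φ^[minimalPeriod ⇑g x] (β x) = β x
        rw [← hcompat x]
        have hfix : (⇑g)^[minimalPeriod ⇑g x] x = x := isPeriodicPt_minimalPeriod ⇑g x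
        rw [hfix]
  · rintro ⟨C, hCsum, hCk, hCq⟩
    rw [hcp] at hCsum
    obtain ⟨E, hE1, hE2⟩ := lift_clusters Finset.card C O.val hCsum
    have hEprop : ∀ e ∈ E, 0 < e.1 ∧ (e.2.map Finset.card).sum = e.1 * m ∧
        ∀ Z ∈ e.2, e.1 ∣ Z.card := by
      intro e he
      have hmem : (e.1, e.2.map Finset.card) ∈ C := by
        rw [← hE2]; exact Multiset.mem_map_of_mem _ he
      obtain ⟨h1, h2, h3⟩ := hCq _ hmem
      exact ⟨h1, h2, fun Z hZ => h3 _ (Multiset.mem_map_of_mem _ hZ)⟩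
    have hEk : (E.map Prod.fst).sum = k := by
      have hmapeq : C.map Prod.fst = E.map Prod.fst := by
        rw [← hE2, Multiset.map_map]; rfl
      rw [← hmapeq]; exact hCk
    have hEne : ∀ e ∈ E, e.2 ≠ 0 := by
      intro e he h0
      obtain ⟨h1, h2, -⟩ := hEprop e he
      rw [h0] at h2
      simp only [Multiset.map_zero, Multiset.sum_zero] at h2
      have : 0 < e.1 * m := Nat.mul_pos h1 (by omega)
      omega
    have hEnodup : E.Nodup := nodup_of_parts E O.val hE1 O.nodup hEne
    have hEO : ∀ e ∈ E, ∀ Z ∈ e.2, Z ∈ O := by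
      intro e he Z hZ
      have hmem : e.2 ∈ E.map Prod.snd := Multiset.mem_map_of_mem _ he
      obtain ⟨u, hu⟩ := Multiset.exists_cons_of_mem hmem
      have hle : e.2 ≤ (E.map Prod.snd).sum := by
        rw [hu, Multiset.sum_cons]; exact Multiset.le_add_right _ _
      rw [hE1] at hle
      exact Multiset.mem_of_le hle hZ
    have he2nodup : ∀ e ∈ E, e.2.Nodup := by
      intro e he
      have hmem : e.2 ∈ E.map Prod.snd := Multiset.mem_map_of_mem _ he
      obtain ⟨u, hu⟩ := Multiset.exists_cons_of_mem hmem
      have hle : e.2 ≤ (E.map Prod.snd).sum := by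
        rw [hu, Multiset.sum_cons]; exact Multiset.le_add_right _ _
      rw [hE1] at hle
      exact Multiset.nodup_of_le hle O.nodup
    have huniq : ∀ Z, ∀ e ∈ E, ∀ e' ∈ E, Z ∈ e.2 → Z ∈ e'.2 → e = e' := by
      intro Z e he e' he' hZ hZ'
      by_contra hne
      have h1 : e' ∈ E.erase e := (Multiset.mem_erase_of_ne (Ne.symm hne)).2 he'
      obtain ⟨u, hu⟩ := Multiset.exists_cons_of_mem h1
      have hE' : E = e ::ₘ e' ::ₘ u := by rw [← Multiset.cons_erase he, hu]
      have hcount : 2 ≤ Multiset.count Z O.val := by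
        rw [← hE1, hE', Multiset.map_cons, Multiset.map_cons, Multiset.sum_cons,
          Multiset.sum_cons, Multiset.count_add, Multiset.count_add]
        have c1 := Multiset.one_le_count_iff_mem.2 hZ
        have c2 := Multiset.one_le_count_iff_mem.2 hZ'
        omega
      have := Multiset.nodup_iff_count_le_one.1 O.nodup Z
      omega
    have hexists : ∀ Z ∈ O, ∃ e ∈ E, Z ∈ e.2 := by
      intro Z hZ
      have hZs : Z ∈ (E.map Prod.snd).sum := by rw [hE1]; exact hZ
      have hZj : Z ∈ (E.map Prod.snd).join := hZs
      obtain ⟨u, hu, hZu⟩ := Multiset.mem_join.1 hZj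
      obtain ⟨e, he, rfl⟩ := Multiset.mem_map.1 hu
      exact ⟨e, he, hZu⟩
    have hΩne : Nonempty Ω := by
      refine Fintype.card_pos_iff.1 ?_
      rw [hcard]; exact Nat.mul_pos (by omega) (by omega)
    have hbase : ∀ Z : Finset Ω, ∃ x : Ω, Z ∈ O → x ∈ Z := by
      intro Z
      by_cases hZ : Z ∈ O
      · obtain ⟨x, hx⟩ := hOne Z hZ; exact ⟨x, fun _ => hx⟩
      · exact ⟨hΩne.some, fun h => absurd h hZ⟩
    choose b hb using hbase
    have hbZ : ∀ Z ∈ O, Z = orbF ⇑g (b Z) := fun Z hZ => hOmem Z hZ _ (hb Z hZ)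
    have hbmin : ∀ Z ∈ O, Z.card = minimalPeriod ⇑g (b Z) := fun Z hZ =>
      (congrArg Finset.card (hbZ Z hZ)).trans orbF_card
    set blk : (ℕ × Multiset (Finset Ω)) → ℕ → Finset Ω :=
      fun e a => e.2.toFinset.biUnion (fun Z => strandF g (b Z) e.1 a) with hblk
    have hEdvd : ∀ e ∈ E, ∀ Z ∈ e.2, e.1 ∣ minimalPeriod ⇑g (b Z) := by
      intro e he Z hZ
      have h := (hEprop e he).2.2 Z hZ
      rwa [hbmin Z (hEO e he Z hZ)] at h
    have hstr_in_Z : ∀ e ∈ E, ∀ Z ∈ e.2, ∀ a, strandF g (b Z) e.1 a ⊆ Z := by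
      intro e he Z hZ a y hy
      have h := strand_sub (d := e.1) a hy
      rwa [← hbZ Z (hEO e he Z hZ)] at h
    have hblk_orb : ∀ e ∈ E, ∀ a, ∀ y ∈ blk e a, orbF ⇑g y ∈ e.2 := by
      intro e he a y hy
      obtain ⟨Z, hZt, hyZ⟩ := Finset.mem_biUnion.1 hy
      rw [Multiset.mem_toFinset] at hZt
      have hyZ' := hstr_in_Z e he Z hZt a hyZ
      have hZy : Z = orbF ⇑g y := hOmem Z (hEO e he Z hZt) y hyZ'
      rwa [← hZy]
    have hblk_card : ∀ e ∈ E, ∀ a < e.1, (blk e a).card = m := by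
      intro e he a ha
      obtain ⟨hd, hsum, hdvd⟩ := hEprop e he
      rw [hblk]
      rw [Finset.card_biUnion]
      · have h1 : ∀ Z ∈ e.2.toFinset, (strandF g (b Z) e.1 a).card = Z.card / e.1 := by
          intro Z hZt
          rw [Multiset.mem_toFinset] at hZt
          rw [strand_card hd (hEdvd e he Z hZt) ha, ← hbmin Z (hEO e he Z hZt)]
        rw [Finset.sum_congr rfl h1]
        have h2 : (∑ Z ∈ e.2.toFinset, Z.card / e.1) * e.1 = e.1 * m := by
          rw [Finset.sum_mul,
            Finset.sum_congr rfl
              (fun Z hZt => Nat.div_mul_cancel (hdvd Z (Multiset.mem_toFinset.1 hZt)))]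
          have hval : e.2.toFinset.val = e.2 := by
            rw [Multiset.toFinset_val, Multiset.dedup_eq_self.2 (he2nodup e he)]
          calc ∑ Z ∈ e.2.toFinset, Z.card = (e.2.toFinset.val.map Finset.card).sum := rfl
            _ = (e.2.map Finset.card).sum := by rw [hval]
            _ = e.1 * m := hsum
        exact Nat.eq_of_mul_eq_mul_right hd (h2.trans (Nat.mul_comm e.1 m))
      · intro Z hZt W hWt hne
        rw [Finset.mem_coe, Multiset.mem_toFinset] at hZt hWt
        simp only [Function.onFun]
        rw [Finset.disjoint_left]
        intro y h1 h2
        have hZ' := hstr_in_Z e he Z hZt a h1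
        have hW' := hstr_in_Z e he W hWt a h2
        exact hne (hOeq Z (hEO e he Z hZt) W (hEO e he W hWt) y hZ' hW')
    have hblk_ne : ∀ e ∈ E, ∀ a < e.1, (blk e a).Nonempty := by
      intro e he a ha
      rw [← Finset.card_pos, hblk_card e he a ha]; omega
    have hblk_img : ∀ e ∈ E, ∀ a < e.1, (blk e a).image ⇑g = blk e ((a + 1) % e.1) := by
      intro e he a ha
      show (e.2.toFinset.biUnion fun Z => strandF g (b Z) e.1 a).image ⇑g
          = e.2.toFinset.biUnion fun Z => strandF g (b Z) e.1 ((a + 1) % e.1)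
      rw [Finset.biUnion_image]
      apply Finset.biUnion_congr rfl
      intro Z hZt
      exact strand_img (hEprop e he).1 (hEdvd e he Z (Multiset.mem_toFinset.1 hZt)) ha
    have hblk_disj_within : ∀ e ∈ E, ∀ a < e.1, ∀ a' < e.1, a ≠ a' →
        Disjoint (blk e a) (blk e a') := by
      intro e he a ha a' ha' hne
      rw [Finset.disjoint_left]
      intro y h1 h2
      obtain ⟨Z, hZt, hyZ⟩ := Finset.mem_biUnion.1 h1
      obtain ⟨W, hWt, hyW⟩ := Finset.mem_biUnion.1 h2
      rw [Multiset.mem_toFinset] at hZt hWt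
      have hZ' := hstr_in_Z e he Z hZt a hyZ
      have hW' := hstr_in_Z e he W hWt a' hyW
      have hZW : Z = W := hOeq Z (hEO e he Z hZt) W (hEO e he W hWt) y hZ' hW'
      subst hZW
      exact (Finset.disjoint_left.1
        (strand_disj (hEprop e he).1 (hEdvd e he Z hZt) ha ha' hne)) hyZ hyW
    have hblk_disj_across : ∀ e ∈ E, ∀ e' ∈ E, e ≠ e' → ∀ a a',
        Disjoint (blk e a) (blk e' a') := by
      intro e he e' he' hne a a'
      rw [Finset.disjoint_left]
      intro y h1 h2
      exact hne (huniq (orbF ⇑g y) e he e' he' (hblk_orb e he a y h1) (hblk_orb e' he' a' y h2))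
    have hcover : ∀ x : Ω, ∃ e ∈ E, ∃ a < e.1, x ∈ blk e a := by
      intro x
      obtain ⟨e, he, hZe⟩ := hexists (orbF ⇑g x) (hOx x)
      have hZO := hOx x
      have hcov := strand_cover (g := g) (x := b (orbF ⇑g x)) (hEprop e he).1
        (hEdvd e he (orbF ⇑g x) hZe)
      have hx' : x ∈ orbF ⇑g (b (orbF ⇑g x)) := by
        rw [← hbZ (orbF ⇑g x) hZO]; exact hself x
      rw [hcov] at hx'
      obtain ⟨a, haR, hxa⟩ := Finset.mem_biUnion.1 hx'
      exact ⟨e, he, a, Finset.mem_range.1 haR,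
        Finset.mem_biUnion.2 ⟨orbF ⇑g x, Multiset.mem_toFinset.2 hZe, hxa⟩⟩
    set E' : Finset (ℕ × Multiset (Finset Ω)) := E.toFinset with hE'
    have hE'val : E'.val = E := by
      rw [hE', Multiset.toFinset_val, Multiset.dedup_eq_self.2 hEnodup]
    have hE'mem : ∀ e, e ∈ E' ↔ e ∈ E := fun e => Multiset.mem_toFinset
    refine ⟨E'.biUnion (fun e => (Finset.range e.1).image (blk e)), ?_, ?_, ?_, ?_⟩
    · rw [Finset.card_biUnion]
      · have h1 : ∀ e ∈ E', ((Finset.range e.1).image (blk e)).card = e.1 := by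
          intro e heE'
          have he := (hE'mem e).1 heE'
          rw [Finset.card_image_of_injOn, Finset.card_range]
          intro a haR a' haR' hEq
          simp only [Finset.coe_range, Set.mem_Iio] at haR haR'
          by_contra hne
          obtain ⟨y, hy⟩ := hblk_ne e he a haR
          exact (Finset.disjoint_left.1 (hblk_disj_within e he a haR a' haR' hne)) hy (hEq ▸ hy)
        rw [Finset.sum_congr rfl h1]
        calc ∑ e ∈ E', e.1 = (E'.val.map Prod.fst).sum := rfl
          _ = k := by rw [hE'val]; exact hEk
      · intro e heE' e' heE'2 hne
        simp only [Function.onFun]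
        rw [Finset.disjoint_left]
        intro bset h1 h2
        obtain ⟨a, haR, rfl⟩ := Finset.mem_image.1 h1
        obtain ⟨a', haR', hEq⟩ := Finset.mem_image.1 h2
        have he := (hE'mem e).1 heE'
        have he' := (hE'mem e').1 heE'2
        obtain ⟨y, hy⟩ := hblk_ne e he a (Finset.mem_range.1 haR)
        refine (Finset.disjoint_left.1 (hblk_disj_across e he e' he' hne a a')) hy ?_
        rw [← hEq] at hy
        exact hy
    · intro bset hbs
      obtain ⟨e, heE', hbi⟩ := Finset.mem_biUnion.1 hbs
      obtain ⟨a, haR, rfl⟩ := Finset.mem_image.1 hbi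
      exact hblk_card e ((hE'mem e).1 heE') a (Finset.mem_range.1 haR)
    · intro x
      obtain ⟨e, he, a, ha, hxa⟩ := hcover x
      refine ⟨blk e a, ⟨Finset.mem_biUnion.2 ⟨e, (hE'mem e).2 he,
        Finset.mem_image.2 ⟨a, Finset.mem_range.2 ha, rfl⟩⟩, hxa⟩, ?_⟩
      rintro bset ⟨hbP, hxb⟩
      obtain ⟨e', he'E', hbi⟩ := Finset.mem_biUnion.1 hbP
      obtain ⟨a', ha'R, rfl⟩ := Finset.mem_image.1 hbi
      have he' := (hE'mem e').1 he'E'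
      have he'e : e' = e := by
        by_contra hne
        exact (Finset.disjoint_left.1 (hblk_disj_across e' he' e he hne a' a)) hxb hxa
      subst he'e
      by_cases haa : a' = a
      · rw [haa]
      · exact absurd hxa
          ((Finset.disjoint_left.1
            (hblk_disj_within e' he' a' (Finset.mem_range.1 ha'R) a ha haa)) hxb)
    · intro bset hbs
      obtain ⟨e, heE', hbi⟩ := Finset.mem_biUnion.1 hbs
      obtain ⟨a, haR, rfl⟩ := Finset.mem_image.1 hbi
      have he := (hE'mem e).1 heE'
      rw [hblk_img e he a (Finset.mem_range.1 haR)]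
      exact Finset.mem_biUnion.2 ⟨e, heE',
        Finset.mem_image.2 ⟨(a + 1) % e.1,
          Finset.mem_range.2 (Nat.mod_lt _ (hEprop e he).1), rfl⟩⟩
end

section
/- Let G be a transitive subgroup of Sym(Fin n) and suppose G contains permutations g_1 and g_2 such that there is no pair (k, m) with k, m > 1 and k·m = n for which both g_1 preserves some partition of Fin n into k blocks of size m and g_2 preserves some partition of Fin n into k blocks of size m. Then G is primitive, i.e. every block B of G satisfies |B| ≤ 1 or |B| = n. -/
open Equiv Finset

/-- A subgroup of `Sym (Fin n)` is transitive if it acts transitively on `Fin n`. -/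
def IsTransitiveSubgroup {n : ℕ} (H : Subgroup (Equiv.Perm (Fin n))) : Prop :=
  ∀ x y : Fin n, ∃ h ∈ H, h x = y

/-- `B` is a block for the subgroup `H`: every element of `H` maps `B` onto itself
or onto a set disjoint from `B`. -/
def IsBlockOf {n : ℕ} (H : Subgroup (Equiv.Perm (Fin n))) (B : Finset (Fin n)) : Prop :=
  ∀ h ∈ H, B.image h = B ∨ Disjoint (B.image h) B

/-- if a transitive subgroup `G` of `Sym (Fin n)` contains permutations
`g₁, g₂` with disjoint i-types (no pair `(k, m)`, `k, m > 1`, `k * m = n`, such that both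
preserve some partition into `k` blocks of size `m`), then `G` is primitive: every
block `B` of `G` satisfies `|B| ≤ 1` or `|B| = n`. -/
theorem stmt5 (n : ℕ) (G : Subgroup (Equiv.Perm (Fin n))) (hG : IsTransitiveSubgroup G)
    (g₁ g₂ : Equiv.Perm (Fin n)) (h₁ : g₁ ∈ G) (h₂ : g₂ ∈ G)
    (hdisj : ¬ ∃ k m : ℕ, 1 < k ∧ 1 < m ∧ k * m = n ∧
      PreservesUniformPartition g₁ k m ∧ PreservesUniformPartition g₂ k m) :
    ∀ B : Finset (Fin n), IsBlockOf G B → B.card ≤ 1 ∨ B.card = n := by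
  classical
  intro B hB
  by_contra hcon
  push_neg at hcon
  obtain ⟨hm1, hmn⟩ := hcon
  obtain ⟨x₀, hx₀⟩ := Finset.card_pos.mp (by omega : 0 < B.card)
  have hcomp : ∀ (g h : Equiv.Perm (Fin n)), (B.image ⇑h).image ⇑g = B.image ⇑(g * h) := by
    intro g h
    rw [Finset.image_image]
    rfl
  have key : ∀ h1 ∈ G, ∀ h2 ∈ G,
      B.image ⇑h1 = B.image ⇑h2 ∨ Disjoint (B.image ⇑h1) (B.image ⇑h2) := by
    intro h1 hmm1 h2 hmm2
    rcases hB (h2⁻¹ * h1) (mul_mem (inv_mem hmm2) hmm1) with heq | hd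
    · left
      have := congrArg (fun s => s.image ⇑h2) heq
      simp only [hcomp] at this
      rwa [mul_inv_cancel_left] at this
    · right
      have := (Finset.disjoint_image (f := ⇑h2) h2.injective).mpr hd
      simp only [hcomp] at this
      rwa [mul_inv_cancel_left] at this
  set P : Finset (Finset (Fin n)) :=
    (Finset.univ.filter (· ∈ G)).image (fun h : Equiv.Perm (Fin n) => B.image ⇑h) with hP
  have memP : ∀ h ∈ G, B.image ⇑h ∈ P := by
    intro h hm
    simp only [hP, Finset.mem_image, Finset.mem_filter, Finset.mem_univ, true_and]
    exact ⟨h, hm, rfl⟩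
  have memP' : ∀ b ∈ P, ∃ h : Equiv.Perm (Fin n), h ∈ G ∧ B.image ⇑h = b := by
    intro b hb
    simpa only [hP, Finset.mem_image, Finset.mem_filter, Finset.mem_univ, true_and] using hb
  have hcards : ∀ b ∈ P, b.card = B.card := by
    intro b hb
    obtain ⟨h, _, rfl⟩ := memP' b hb
    exact Finset.card_image_of_injective _ h.injective
  have hcover : ∀ x : Fin n, ∃! b : Finset (Fin n), b ∈ P ∧ x ∈ b := by
    intro x
    obtain ⟨h, hm, hx⟩ := hG x₀ x
    refine ⟨B.image ⇑h, ⟨memP h hm, hx ▸ Finset.mem_image_of_mem _ hx₀⟩, ?_⟩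
    rintro b ⟨hbP, hxb⟩
    obtain ⟨h', hm', rfl⟩ := memP' b hbP
    rcases key h' hm' h hm with heq | hd
    · exact heq
    · exact absurd (hx ▸ Finset.mem_image_of_mem _ hx₀)
        (Finset.disjoint_left.mp hd hxb)
  have hpres : ∀ g ∈ G, ∀ b ∈ P, b.image ⇑g ∈ P := by
    intro g hg b hb
    obtain ⟨h, hm, rfl⟩ := memP' b hb
    rw [hcomp]
    exact memP _ (mul_mem hg hm)
  have hBP : B ∈ P := by
    have := memP 1 (one_mem G)
    simpa using this
  -- the blocks partition univ
  have hunion : P.biUnion id = Finset.univ := by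
    ext x
    simp only [Finset.mem_biUnion, id, Finset.mem_univ, iff_true]
    obtain ⟨b, ⟨hbP, hxb⟩, _⟩ := hcover x
    exact ⟨b, hbP, hxb⟩
  have hdisjP : ∀ b1 ∈ P, ∀ b2 ∈ P, b1 ≠ b2 → Disjoint b1 b2 := by
    intro b1 hb1 b2 hb2 hne
    obtain ⟨h1', hm1', rfl⟩ := memP' b1 hb1
    obtain ⟨h2', hm2', rfl⟩ := memP' b2 hb2
    rcases key h1' hm1' h2' hm2' with heq | hd
    · exact absurd heq hne
    · exact hd
  have hkm : P.card * B.card = n := by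
    have h1' : (P.biUnion id).card = ∑ b ∈ P, b.card :=
      Finset.card_biUnion (fun b hb c hc hne => hdisjP b hb c hc hne)
    rw [hunion] at h1'
    simp only [Finset.card_univ, Fintype.card_fin] at h1'
    rw [Finset.sum_congr rfl hcards, Finset.sum_const, smul_eq_mul] at h1'
    omega
  have hmln : B.card < n := by
    have : B.card ≤ n := by
      simpa using Finset.card_le_card (Finset.subset_univ B)
    omega
  have hk1 : 1 < P.card := by
    have hBne : B ≠ Finset.univ := by
      intro h
      rw [h] at hmn
      simp at hmn
    obtain ⟨x, hx⟩ : ∃ x, x ∉ B := by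
      by_contra hc
      push_neg at hc
      exact hBne (Finset.eq_univ_iff_forall.mpr hc)
    obtain ⟨b, ⟨hbP, hxb⟩, _⟩ := hcover x
    refine Finset.one_lt_card.mpr ⟨B, hBP, b, hbP, ?_⟩
    rintro rfl
    exact hx hxb
  exact hdisj ⟨P.card, B.card, hk1, hm1, hkm,
    ⟨P, rfl, hcards, hcover, hpres g₁ h₁⟩, ⟨P, rfl, hcards, hcover, hpres g₂ h₂⟩⟩
end

section
/- Let p be a prime, k ≥ 1, A an invertible k×k matrix over the field Z/pZ, and e a vector in (Z/pZ)^k, and let g be the affine permutation of (Z/pZ)^k given by g(x) = A·x + e. Then g is imprimitive (i.e. there exist integers b, s > 1 with b·s = p^k and a partition of (Z/pZ)^k into b blocks each of size s mapped onto blocks by g) if and only if the characteristic polynomial of A is reducible (not irreducible) in (Z/pZ)[X]. -/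
open Equiv Finset

open Polynomial

private lemma sum_mulVec' {ι : Type*} {n : ℕ} {R : Type*} [CommRing R]
    (s : Finset ι) (M : ι → Matrix (Fin n) (Fin n) R) (v : Fin n → R) :
    (∑ i ∈ s, M i).mulVec v = ∑ i ∈ s, (M i).mulVec v := by
  induction s using Finset.cons_induction with
  | empty => simp [Matrix.zero_mulVec]
  | cons a s ha ih => simp [Finset.sum_cons, Matrix.add_mulVec, ih]

private lemma aux_isUnit_aeval {p : ℕ} [Fact p.Prime] {k : ℕ}
    (A : Matrix (Fin k) (Fin k) (ZMod p)) (hirr : Irreducible A.charpoly)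
    (q : Polynomial (ZMod p)) (hq : Polynomial.aeval A q ≠ 0) :
    IsUnit (Polynomial.aeval A q) := by
  have hdvd : ¬ A.charpoly ∣ q := by
    rintro ⟨c, hc⟩
    exact hq (by rw [hc, map_mul, Matrix.aeval_self_charpoly, zero_mul])
  obtain ⟨u, v, huv⟩ := (hirr.coprime_iff_not_dvd.mpr hdvd)
  have h1 : (Polynomial.aeval A v) * (Polynomial.aeval A q) = 1 := by
    have h := congrArg (Polynomial.aeval A) huv
    simpa [map_add, map_mul, Matrix.aeval_self_charpoly] using h
  rw [isUnit_iff_exists]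
  refine ⟨Polynomial.aeval A v, ?_, h1⟩
  rw [← map_mul, mul_comm, map_mul, h1]

private lemma aux_pow_eq_one {p : ℕ} [Fact p.Prime] {k : ℕ}
    (A : Matrix (Fin k) (Fin k) (ZMod p)) (hirr : Irreducible A.charpoly)
    {x : Fin k → ZMod p} (hx : x ≠ 0) {n : ℕ}
    (hfix : (A ^ n).mulVec x = x) : A ^ n = 1 := by
  by_contra hne
  have h0 : Polynomial.aeval A ((Polynomial.X : Polynomial (ZMod p)) ^ n - 1) = A ^ n - 1 := by
    simp
  have hu : IsUnit (A ^ n - 1) := by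
    rw [← h0]
    exact aux_isUnit_aeval A hirr _ (by rw [h0]; exact sub_ne_zero.mpr hne)
  have hinj := Matrix.mulVec_injective_iff_isUnit.mpr hu
  apply hx
  apply hinj
  rw [Matrix.sub_mulVec, hfix, Matrix.one_mulVec, sub_self, Matrix.mulVec_zero]

private lemma aux_orderOf_pos {p : ℕ} [Fact p.Prime] {k : ℕ}
    (A : Matrix (Fin k) (Fin k) (ZMod p)) (hA : IsUnit A) :
    0 < orderOf A ∧ A ^ orderOf A = 1 := by
  obtain ⟨u, rfl⟩ := hA
  rw [orderOf_units]
  exact ⟨orderOf_pos u, by rw [← orderOf_units, pow_orderOf_eq_one]⟩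

private lemma aux_dvd_card {p : ℕ} [Fact p.Prime] {k : ℕ}
    (A : Matrix (Fin k) (Fin k) (ZMod p)) (hA : IsUnit A)
    (hirr : Irreducible A.charpoly) (B : Finset (Fin k → ZMod p))
    (h0 : (0 : Fin k → ZMod p) ∈ B)
    (hB : B.image (fun x => A.mulVec x) = B) :
    orderOf A ∣ B.card - 1 := by
  classical
  set d := orderOf A with hd_def
  obtain ⟨hd, hAd⟩ := aux_orderOf_pos A hA
  have hinj : Function.Injective A.mulVec := Matrix.mulVec_injective_iff_isUnit.mpr hA
  set S := B.erase 0 with hS_def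
  have hScard : S.card = B.card - 1 := Finset.card_erase_of_mem h0
  have hSclosed : ∀ x ∈ S, A.mulVec x ∈ S := by
    intro x hx
    rw [Finset.mem_erase] at hx ⊢
    constructor
    · intro h
      exact hx.1 (hinj (h.trans (Matrix.mulVec_zero A).symm))
    · rw [← hB]; exact Finset.mem_image_of_mem _ hx.2
  -- orbit finsets
  set r : (Fin k → ZMod p) → Finset (Fin k → ZMod p) :=
    fun x => univ.filter (fun y => ∃ n : ℕ, (A ^ n).mulVec x = y) with hr_def
  have hmem_r : ∀ x y, y ∈ r x ↔ ∃ n : ℕ, (A ^ n).mulVec x = y := by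
    intro x y; simp [hr_def]
  have hself : ∀ x, x ∈ r x := by
    intro x; rw [hmem_r]; exact ⟨0, by simp [Matrix.one_mulVec]⟩
  have hstep : ∀ (x : Fin k → ZMod p) (n : ℕ), (A ^ (n+1)).mulVec x = A.mulVec ((A ^ n).mulVec x) := by
    intro x n
    rw [Matrix.mulVec_mulVec, ← pow_succ']
  have hsubS : ∀ x ∈ S, r x ⊆ S := by
    intro x hx y hy
    rw [hmem_r] at hy
    obtain ⟨n, rfl⟩ := hy
    induction n with
    | zero => simpa [Matrix.one_mulVec] using hx
    | succ n ih => rw [hstep]; exact hSclosed _ ih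
  have htrans : ∀ x y, y ∈ r x → r y ⊆ r x := by
    intro x y hy z hz
    rw [hmem_r] at hy hz ⊢
    obtain ⟨n, rfl⟩ := hy
    obtain ⟨m, rfl⟩ := hz
    exact ⟨m + n, by rw [pow_add, ← Matrix.mulVec_mulVec]⟩
  have hback : ∀ x y, y ∈ r x → x ∈ r y := by
    intro x y hy
    rw [hmem_r] at hy ⊢
    obtain ⟨n, rfl⟩ := hy
    refine ⟨n * (d - 1), ?_⟩
    rw [Matrix.mulVec_mulVec, ← pow_add]
    have hAd' : A ^ d = 1 := hAd
    have harith : n * (d - 1) + n = n * d := by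
      rw [Nat.mul_sub, mul_one, Nat.sub_add_cancel (Nat.le_mul_of_pos_right n hd)]
    rw [harith, pow_mul', hAd', one_pow, Matrix.one_mulVec]
  have hr_eq : ∀ x y, y ∈ r x → r y = r x := by
    intro x y hy
    apply Finset.Subset.antisymm (htrans x y hy)
    exact htrans y x (hback x y hy)
  have hcard_r : ∀ x : Fin k → ZMod p, x ≠ 0 → (r x).card = d := by
    intro x hx
    have himg : r x = univ.image (fun i : Fin d => (A ^ (i : ℕ)).mulVec x) := by
      ext y
      rw [hmem_r, Finset.mem_image]
      constructor
      · rintro ⟨n, rfl⟩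
        refine ⟨⟨n % d, Nat.mod_lt _ hd⟩, Finset.mem_univ _, ?_⟩
        simp only
        rw [hd_def] at *
        rw [pow_mod_orderOf]
      · rintro ⟨i, _, rfl⟩
        exact ⟨i, rfl⟩
    rw [himg]
    rw [Finset.card_image_of_injective _ ?_, Finset.card_univ, Fintype.card_fin]
    -- injectivity
    intro i j hij
    simp only at hij
    -- wlog i ≤ j
    have key : ∀ i j : Fin d, (i : ℕ) ≤ (j : ℕ) →
        (A ^ (i : ℕ)).mulVec x = (A ^ (j : ℕ)).mulVec x → i = j := by
      intro i j hle heq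
      have hiu : IsUnit (A ^ (i : ℕ)) := hA.pow _
      have hinj' : Function.Injective (A ^ (i : ℕ)).mulVec :=
        Matrix.mulVec_injective_iff_isUnit.mpr hiu
      have h2 : (A ^ (i : ℕ)).mulVec ((A ^ ((j : ℕ) - (i : ℕ))).mulVec x)
          = (A ^ (i : ℕ)).mulVec x := by
        rw [Matrix.mulVec_mulVec, ← pow_add]
        rw [show (i : ℕ) + ((j : ℕ) - (i : ℕ)) = (j : ℕ) by omega]
        exact heq.symm
      have h3 := hinj' h2
      have h4 : A ^ ((j : ℕ) - (i : ℕ)) = 1 := aux_pow_eq_one A hirr hx h3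
      have h5 : d ∣ (j : ℕ) - (i : ℕ) := orderOf_dvd_iff_pow_eq_one.mpr h4
      have hlt : (j : ℕ) - (i : ℕ) < d := by omega
      rcases Nat.eq_zero_of_dvd_of_lt h5 hlt |> fun h6 => h6 with h6
      exact Fin.ext (by omega)
    rcases le_total (i : ℕ) (j : ℕ) with h | h
    · exact key i j h hij
    · exact (key j i h hij.symm).symm
  -- fiberwise count
  set T := S.image r with hT_def
  have hcount : S.card = ∑ t ∈ T, (S.filter (fun y => r y = t)).card :=
    Finset.card_eq_sum_card_fiberwise (fun x hx => Finset.mem_image_of_mem r hx)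
  have hfiber : ∀ t ∈ T, (S.filter (fun y => r y = t)).card = d := by
    intro t ht
    rw [hT_def, Finset.mem_image] at ht
    obtain ⟨x, hxS, rfl⟩ := ht
    have hfil : S.filter (fun y => r y = r x) = r x := by
      ext z
      rw [Finset.mem_filter]
      constructor
      · rintro ⟨hzS, hz⟩
        rw [← hz]; exact hself z
      · intro hz
        exact ⟨hsubS x hxS hz, hr_eq x z hz⟩
    rw [hfil]
    exact hcard_r x (Finset.mem_erase.mp hxS).1
  rw [Finset.sum_congr rfl hfiber, Finset.sum_const, smul_eq_mul] at hcount
  rw [← hScard]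
  exact Dvd.intro_left T.card hcount.symm

private lemma aux_not_dvd {p : ℕ} [Fact p.Prime] (k j : ℕ) (hj1 : 1 ≤ j) (hj : j < k)
    (μ : Polynomial (ZMod p)) (hirr : Irreducible μ) (hdeg : μ.natDegree = k)
    (hdvd : μ ∣ (Polynomial.X : Polynomial (ZMod p)) ^ (p ^ j) - Polynomial.X) : False := by
  classical
  haveI : Fact (Irreducible μ) := ⟨hirr⟩
  have hμ0 : μ ≠ 0 := hirr.ne_zero
  set Fq := AdjoinRoot μ with hFq
  haveI : Fintype Fq := Module.fintypeOfFintype (AdjoinRoot.powerBasis hμ0).basis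
  have hcard : Fintype.card Fq = p ^ k := by
    rw [Module.card_eq_pow_finrank (K := ZMod p) (V := Fq), ZMod.card,
      (AdjoinRoot.powerBasis hμ0).finrank, AdjoinRoot.powerBasis_dim hμ0, hdeg]
  haveI : CharP Fq p :=
    charP_of_injective_algebraMap (algebraMap (ZMod p) Fq).injective p
  have hp1 : 1 < p := (Fact.out : p.Prime).one_lt
  have hroot : (AdjoinRoot.root μ) ^ (p ^ j) = AdjoinRoot.root μ := by
    obtain ⟨c, hc⟩ := hdvd
    have h2 : Polynomial.aeval (AdjoinRoot.root μ)
        ((Polynomial.X : Polynomial (ZMod p)) ^ (p ^ j) - Polynomial.X) = 0 := by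
      rw [hc, map_mul]
      rw [show Polynomial.aeval (AdjoinRoot.root μ) μ = 0 from by
        rw [AdjoinRoot.aeval_eq, AdjoinRoot.mk_self], zero_mul]
    rw [map_sub, map_pow, Polynomial.aeval_X, sub_eq_zero] at h2
    exact h2
  have hall : ∀ x : Fq, x ^ (p ^ j) = x := by
    intro x
    obtain ⟨f, rfl⟩ := AdjoinRoot.mk_surjective x
    rw [← AdjoinRoot.aeval_eq]
    have hψ : ∀ y : Fq, y ^ (p ^ j) = iterateFrobenius Fq p j y := by
      intro y; rw [iterateFrobenius_def]
    rw [hψ]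
    rw [Polynomial.aeval_def, Polynomial.hom_eval₂]
    rw [RingHom.ext_zmod ((iterateFrobenius Fq p j).comp (algebraMap (ZMod p) Fq))
      (algebraMap (ZMod p) Fq)]
    rw [show iterateFrobenius Fq p j (AdjoinRoot.root μ) = AdjoinRoot.root μ from by
      rw [iterateFrobenius_def]; exact hroot]
  -- count roots of X^(p^j) - X over Fq
  set q' : Polynomial Fq := Polynomial.X ^ (p ^ j) - Polynomial.X with hq'
  have hdeg' : q'.natDegree = p ^ j := by
    rw [hq', Polynomial.natDegree_sub_eq_left_of_natDegree_lt]
    · rw [Polynomial.natDegree_X_pow]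
    · rw [Polynomial.natDegree_X_pow, Polynomial.natDegree_X]
      exact lt_of_lt_of_le hp1 (Nat.le_self_pow (by omega) p)
  have hq'0 : q' ≠ 0 := by
    intro h
    rw [h, Polynomial.natDegree_zero] at hdeg'
    have := Nat.one_le_two_pow (n := j)
    have : 0 < p ^ j := Nat.pow_pos (by omega)
    omega
  have hsub : (Finset.univ : Finset Fq) ⊆ q'.roots.toFinset := by
    intro x _
    rw [Multiset.mem_toFinset, Polynomial.mem_roots hq'0]
    simp [hq', Polynomial.IsRoot, hall x]
  have hchain : p ^ k ≤ p ^ j := by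
    calc p ^ k = Fintype.card Fq := hcard.symm
    _ = (Finset.univ : Finset Fq).card := (Finset.card_univ).symm
    _ ≤ q'.roots.toFinset.card := Finset.card_le_card hsub
    _ ≤ Multiset.card q'.roots := Multiset.toFinset_card_le _
    _ ≤ q'.natDegree := q'.card_roots'
    _ = p ^ j := hdeg'
  have := Nat.pow_lt_pow_right hp1 hj
  omega

private lemma mulVec_sum' {ι : Type*} {n : ℕ} {R : Type*} [CommRing R]
    (M : Matrix (Fin n) (Fin n) R) (s : Finset ι) (g : ι → (Fin n → R)) :
    M.mulVec (∑ i ∈ s, g i) = ∑ i ∈ s, M.mulVec (g i) := by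
  have h := map_sum M.mulVecLin g s
  simp only [Matrix.mulVecLin_apply] at h
  exact h

private lemma aux_subspace {p : ℕ} [Fact p.Prime] {k : ℕ} (hk : 1 ≤ k)
    (A : Matrix (Fin k) (Fin k) (ZMod p))
    (hred : ¬ Irreducible A.charpoly) :
    ∃ W : Submodule (ZMod p) (Fin k → ZMod p),
      (∀ x ∈ W, A.mulVec x ∈ W) ∧ W ≠ ⊥ ∧ W ≠ ⊤ := by
  classical
  set μ := A.charpoly with hμ
  have hmonic : μ.Monic := A.charpoly_monic
  have hdegμ : μ.natDegree = k := by rw [hμ, Matrix.charpoly_natDegree_eq_dim, Fintype.card_fin]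
  have hμne1 : μ ≠ 1 := by
    intro h; rw [h, Polynomial.natDegree_one] at hdegμ; omega
  have hnotunit : ¬ IsUnit μ := fun h => hμne1 (hmonic.isUnit_iff.mp h)
  -- extract factorization
  rw [irreducible_iff] at hred
  push_neg at hred
  obtain ⟨a, b, hab, hna, hnb⟩ := hred hnotunit
  have hμ0 : μ ≠ 0 := hmonic.ne_zero
  have ha0 : a ≠ 0 := fun h => hμ0 (by rw [hab, h, zero_mul])
  have hb0 : b ≠ 0 := fun h => hμ0 (by rw [hab, h, mul_zero])
  have hdeg_add : a.natDegree + b.natDegree = k := by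
    rw [← hdegμ, hab, Polynomial.natDegree_mul ha0 hb0]
  have hdeg_pos : ∀ c : Polynomial (ZMod p), c ≠ 0 → ¬ IsUnit c → 1 ≤ c.natDegree := by
    intro c hc0 hcu
    rcases Nat.eq_zero_or_pos c.natDegree with h0 | h1
    · exfalso
      apply hcu
      rw [Polynomial.eq_C_of_natDegree_eq_zero h0]
      apply Polynomial.isUnit_C.mpr
      apply IsUnit.mk0
      intro hc
      apply hc0
      rw [Polynomial.eq_C_of_natDegree_eq_zero h0, hc, map_zero]
    · exact h1
  have hda : 1 ≤ a.natDegree := hdeg_pos a ha0 hna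
  have hdb : 1 ≤ b.natDegree := hdeg_pos b hb0 hnb
  -- find f and v
  have hMN : (Polynomial.aeval A a) * (Polynomial.aeval A b) = 0 := by
    rw [← map_mul, ← hab, hμ, Matrix.aeval_self_charpoly]
  have hkey : ∃ (f : Polynomial (ZMod p)) (v : Fin k → ZMod p),
      v ≠ 0 ∧ (Polynomial.aeval A f).mulVec v = 0 ∧ f ≠ 0 ∧
      1 ≤ f.natDegree ∧ f.natDegree < k := by
    by_cases hker : ∃ v : Fin k → ZMod p, v ≠ 0 ∧ (Polynomial.aeval A a).mulVec v = 0
    · obtain ⟨v, hv0, hva⟩ := hker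
      exact ⟨a, v, hv0, hva, ha0, hda, by omega⟩
    · push_neg at hker
      set v : Fin k → ZMod p := Pi.single ⟨0, hk⟩ 1 with hv
      have hv0 : v ≠ 0 := by
        intro h
        have := congrFun h ⟨0, hk⟩
        simp [hv] at this
      refine ⟨b, v, hv0, ?_, hb0, hdb, by omega⟩
      by_contra hbv
      have h1 : (Polynomial.aeval A a).mulVec ((Polynomial.aeval A b).mulVec v) = 0 := by
        rw [Matrix.mulVec_mulVec, hMN, Matrix.zero_mulVec]
      exact hker _ hbv h1
  obtain ⟨f, v, hv0, hfv, hf0, hd1, hdk⟩ := hkey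
  set d := f.natDegree with hd
  -- the span
  set W : Submodule (ZMod p) (Fin k → ZMod p) :=
    Submodule.span (ZMod p) (Set.range fun n : ℕ => (A ^ n).mulVec v) with hW
  have hgen : ∀ n : ℕ, (A ^ n).mulVec v ∈ W :=
    fun n => Submodule.subset_span ⟨n, rfl⟩
  have hvW : v ∈ W := by
    have := hgen 0
    rwa [pow_zero, Matrix.one_mulVec] at this
  have hWinv : ∀ x ∈ W, A.mulVec x ∈ W := by
    intro x hx
    induction hx using Submodule.span_induction with
    | mem y hy =>
      obtain ⟨n, rfl⟩ := hy
      rw [Matrix.mulVec_mulVec, ← pow_succ']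
      exact hgen (n + 1)
    | zero => rw [Matrix.mulVec_zero]; exact W.zero_mem
    | add y z _ _ hy hz => rw [Matrix.mulVec_add]; exact W.add_mem hy hz
    | smul c y _ hy => rw [Matrix.mulVec_smul]; exact W.smul_mem c hy
  refine ⟨W, hWinv, ?_, ?_⟩
  · rw [Submodule.ne_bot_iff]; exact ⟨v, hvW, hv0⟩
  · -- W ≠ ⊤ via rank
    set s : Finset (Fin k → ZMod p) :=
      Finset.univ.image (fun i : Fin d => (A ^ (i : ℕ)).mulVec v) with hs
    set W' : Submodule (ZMod p) (Fin k → ZMod p) := Submodule.span (ZMod p) ↑s with hW'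
    -- the leading coefficient relation
    have hl : f.coeff d ≠ 0 := by
      rw [hd, ← Polynomial.leadingCoeff]
      exact Polynomial.leadingCoeff_ne_zero.mpr hf0
    have hsum : ∑ i ∈ Finset.range (d + 1), f.coeff i • (A ^ i).mulVec v = 0 := by
      rw [← hfv, Polynomial.aeval_eq_sum_range, sum_mulVec']
      congr 1
      ext i
      rw [Matrix.smul_mulVec]
    have htop : (A ^ d).mulVec v
        = -(f.coeff d)⁻¹ • ∑ i ∈ Finset.range d, f.coeff i • (A ^ i).mulVec v := by
      rw [Finset.sum_range_succ] at hsum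
      have h2 : f.coeff d • (A ^ d).mulVec v = -∑ i ∈ Finset.range d, f.coeff i • (A ^ i).mulVec v := by
        rw [eq_neg_iff_add_eq_zero, add_comm]; exact hsum
      have := congrArg (fun z => (f.coeff d)⁻¹ • z) h2
      simp only [smul_smul, inv_mul_cancel₀ hl, one_smul] at this
      rw [this, neg_smul, smul_neg]
    have hmemW' : ∀ n : ℕ, (A ^ n).mulVec v ∈ W' := by
      intro n
      induction n using Nat.strong_induction_on with
      | _ n ih =>
        by_cases hn : n < d
        · exact Submodule.subset_span (by
            rw [hs]; exact Finset.mem_coe.mpr (Finset.mem_image.mpr ⟨⟨n, hn⟩, Finset.mem_univ _, rfl⟩))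
        · push_neg at hn
          have hsplit : A ^ n = A ^ (n - d) * A ^ d := by rw [← pow_add]; congr 1; omega
          rw [hsplit, ← Matrix.mulVec_mulVec, htop]
          rw [Matrix.mulVec_smul, mulVec_sum']
          refine Submodule.smul_mem _ _ (Submodule.sum_mem _ ?_)
          intro i hi
          rw [Finset.mem_range] at hi
          have heq : (A ^ (n - d)).mulVec (f.coeff i • (A ^ i).mulVec v)
              = f.coeff i • (A ^ (n - d + i)).mulVec v := by
            rw [Matrix.mulVec_smul, Matrix.mulVec_mulVec, ← pow_add]
          rw [heq]
          exact Submodule.smul_mem _ _ (ih (n - d + i) (by omega))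
    have hler : W ≤ W' := by
      rw [hW, Submodule.span_le]
      rintro x ⟨n, rfl⟩
      exact hmemW' n
    intro htopW
    have h1 : Module.finrank (ZMod p) W ≤ Module.finrank (ZMod p) W' :=
      Submodule.finrank_mono hler
    have h2 : Module.finrank (ZMod p) W' ≤ s.card := finrank_span_finset_le_card s
    have h3 : s.card ≤ d := le_trans Finset.card_image_le (by simp)
    have h4 : Module.finrank (ZMod p) W = k := by
      rw [htopW, finrank_top, Module.finrank_fin_fun]
    omega

private lemma aux_partition {p : ℕ} [Fact p.Prime] {k : ℕ}
    (A : Matrix (Fin k) (Fin k) (ZMod p)) (e : Fin k → ZMod p)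
    (g : Equiv.Perm (Fin k → ZMod p)) (hg : ∀ x, g x = A.mulVec x + e)
    (W : Submodule (ZMod p) (Fin k → ZMod p))
    (hWinv : ∀ x ∈ W, A.mulVec x ∈ W) (hWbot : W ≠ ⊥) (hWtop : W ≠ ⊤) :
    IsImprimitivePerm g := by
  classical
  set WF : Finset (Fin k → ZMod p) := Finset.univ.filter (fun y => y ∈ W) with hWF
  set m := WF.card with hm
  set C : (Fin k → ZMod p) → Finset (Fin k → ZMod p) :=
    fun x => Finset.univ.filter (fun y => y - x ∈ W) with hC
  set P : Finset (Finset (Fin k → ZMod p)) := Finset.univ.image C with hP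
  have hCx : ∀ x, x ∈ C x := by
    intro x; rw [hC]; simp only [Finset.mem_filter, Finset.mem_univ, true_and, sub_self]
    exact W.zero_mem
  have hCeq : ∀ x z, x ∈ C z → C z = C x := by
    intro x z hx
    rw [hC] at hx ⊢
    simp only [Finset.mem_filter, Finset.mem_univ, true_and] at hx
    ext y
    simp only [Finset.mem_filter, Finset.mem_univ, true_and]
    constructor
    · intro h
      have := W.sub_mem h hx
      rwa [show y - z - (x - z) = y - x by abel] at this
    · intro h
      have := W.add_mem h hx
      rwa [show y - x + (x - z) = y - z by abel] at this
  have hCcard : ∀ x, (C x).card = m := by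
    intro x
    rw [hm]
    apply Finset.card_bij' (fun y _ => y - x) (fun w _ => w + x)
    · intro y hy
      rw [hC] at hy
      simp only [Finset.mem_filter, Finset.mem_univ, true_and] at hy
      rw [hWF]; simp only [Finset.mem_filter, Finset.mem_univ, true_and]; exact hy
    · intro w hw
      rw [hWF] at hw
      simp only [Finset.mem_filter, Finset.mem_univ, true_and] at hw
      rw [hC]; simp only [Finset.mem_filter, Finset.mem_univ, true_and, add_sub_cancel_right]
      exact hw
    · intro y _; abel
    · intro w _; abel
  have hm1 : 1 < m := by
    obtain ⟨v, hvW, hv0⟩ := (Submodule.ne_bot_iff W).mp hWbot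
    have hsub : ({0, v} : Finset (Fin k → ZMod p)) ⊆ WF := by
      intro y hy
      rw [Finset.mem_insert, Finset.mem_singleton] at hy
      rw [hWF]; simp only [Finset.mem_filter, Finset.mem_univ, true_and]
      rcases hy with rfl | rfl
      · exact W.zero_mem
      · exact hvW
    have h2 : ({0, v} : Finset (Fin k → ZMod p)).card = 2 := by
      rw [Finset.card_insert_of_notMem (by simpa using (Ne.symm hv0)), Finset.card_singleton]
    have := Finset.card_le_card hsub
    omega
  have hcardV : Fintype.card (Fin k → ZMod p) = p ^ k := by
    rw [Fintype.card_fun, ZMod.card, Fintype.card_fin]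
  have hmlt : m < p ^ k := by
    obtain ⟨u, hu⟩ : ∃ u, u ∉ W := by
      by_contra h
      push_neg at h
      exact hWtop (Submodule.eq_top_iff'.mpr h)
    have hss : WF ⊂ Finset.univ := by
      rw [Finset.ssubset_univ_iff]
      intro h
      apply hu
      have : u ∈ WF := h ▸ Finset.mem_univ u
      rw [hWF] at this
      simpa using this
    have := Finset.card_lt_card hss
    rwa [Finset.card_univ, hcardV] at this
  have himg : ∀ x, (C x).image g = C (g x) := by
    intro x
    apply Finset.eq_of_subset_of_card_le
    · intro z hz
      rw [Finset.mem_image] at hz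
      obtain ⟨y, hy, rfl⟩ := hz
      rw [hC] at hy ⊢
      simp only [Finset.mem_filter, Finset.mem_univ, true_and] at hy ⊢
      rw [hg, hg, show A.mulVec y + e - (A.mulVec x + e) = A.mulVec y - A.mulVec x by abel,
        ← Matrix.mulVec_sub]
      exact hWinv _ hy
    · rw [Finset.card_image_of_injective _ g.injective, hCcard, hCcard]
  have hpart : ∀ x : Fin k → ZMod p, ∃! b : Finset (Fin k → ZMod p), b ∈ P ∧ x ∈ b := by
    intro x
    refine ⟨C x, ⟨Finset.mem_image_of_mem C (Finset.mem_univ x), hCx x⟩, ?_⟩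
    rintro b ⟨hbP, hxb⟩
    rw [hP, Finset.mem_image] at hbP
    obtain ⟨z, _, rfl⟩ := hbP
    exact hCeq x z hxb
  have hclosed : ∀ b ∈ P, b.image g ∈ P := by
    intro b hb
    rw [hP, Finset.mem_image] at hb
    obtain ⟨x, _, rfl⟩ := hb
    rw [himg, hP]
    exact Finset.mem_image_of_mem C (Finset.mem_univ _)
  -- counting
  have hdisj : ∀ b ∈ P, ∀ b' ∈ P, b ≠ b' → Disjoint b b' := by
    intro b hb b' hb' hne
    rw [Finset.disjoint_left]
    intro y hyb hyb'
    apply hne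
    rw [hP, Finset.mem_image] at hb hb'
    obtain ⟨x, _, rfl⟩ := hb
    obtain ⟨x', _, rfl⟩ := hb'
    rw [hCeq y x hyb, hCeq y x' hyb']
  have huniv : Finset.univ = P.biUnion id := by
    apply Finset.Subset.antisymm
    · intro x _
      rw [Finset.mem_biUnion]
      exact ⟨C x, Finset.mem_image_of_mem C (Finset.mem_univ x), hCx x⟩
    · exact Finset.subset_univ _
  have hcount : P.card * m = p ^ k := by
    have h1 : (P.biUnion id).card = ∑ b ∈ P, b.card := Finset.card_biUnion hdisj
    rw [← huniv, Finset.card_univ, hcardV] at h1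
    rw [h1]
    rw [Finset.sum_congr rfl (fun b hb => ?hb)]
    · rw [Finset.sum_const, smul_eq_mul]
    case hb =>
      rw [hP, Finset.mem_image] at hb
      obtain ⟨x, _, rfl⟩ := hb
      exact hCcard x
  have hpk : 0 < p ^ k := Nat.pow_pos (Fact.out : p.Prime).pos
  have hb1 : 1 < P.card := by
    by_contra h
    push_neg at h
    interval_cases hPc : P.card
    · rw [zero_mul] at hcount; omega
    · rw [one_mul] at hcount; omega
  exact ⟨P.card, m, hb1, hm1, by rw [hcount, hcardV],
    ⟨P, rfl, fun b hb => by
      rw [hP, Finset.mem_image] at hb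
      obtain ⟨x, _, rfl⟩ := hb
      exact hCcard x, hpart, hclosed⟩⟩

/-- an affine permutation `g : x ↦ A·x + e` of `(ℤ/pℤ)^k` (with `A`
invertible) is imprimitive iff the characteristic polynomial of `A` is reducible. -/
theorem stmt6 (p : ℕ) [Fact p.Prime] (k : ℕ) (hk : 1 ≤ k)
    (A : Matrix (Fin k) (Fin k) (ZMod p)) (hA : IsUnit A.det) (e : Fin k → ZMod p)
    (g : Equiv.Perm (Fin k → ZMod p)) (hg : ∀ x, g x = A.mulVec x + e) :
    IsImprimitivePerm g ↔ ¬ Irreducible (Matrix.charpoly A) := by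
  classical
  have hcardV : Fintype.card (Fin k → ZMod p) = p ^ k := by
    rw [Fintype.card_fun, ZMod.card, Fintype.card_fin]
  have hdegμ : A.charpoly.natDegree = k := by
    rw [Matrix.charpoly_natDegree_eq_dim, Fintype.card_fin]
  constructor
  · -- imprimitive → reducible
    intro himp hirr
    have hAunit : IsUnit A := (Matrix.isUnit_iff_isUnit_det A).mpr hA
    have hone : (1 : Matrix (Fin k) (Fin k) (ZMod p)) ≠ 0 := by
      intro h0
      have h1 := congrFun (congrFun h0 ⟨0, hk⟩) ⟨0, hk⟩
      rw [Matrix.one_apply_eq] at h1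
      simp at h1
    haveI : Nontrivial (Matrix (Fin k) (Fin k) (ZMod p)) :=
      nontrivial_of_ne 1 0 hone
    -- minpoly = charpoly
    have hmin : minpoly (ZMod p) A = A.charpoly := by
      obtain ⟨c, hc⟩ := A.minpoly_dvd_charpoly
      have hmono := minpoly.monic A.isIntegral
      rcases hirr.isUnit_or_isUnit hc with h | h
      · exfalso
        have h1 : minpoly (ZMod p) A = 1 := hmono.isUnit_iff.mp h
        have h2 := minpoly.aeval (ZMod p) A
        rw [h1, map_one] at h2
        exact hone h2
      · exact Polynomial.eq_of_monic_of_associated hmono A.charpoly_monic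
          ⟨h.unit, by rw [h.unit_spec]; exact hc.symm⟩
    -- unpack the partition
    obtain ⟨b, m, hbgt, hmgt, hbm, P, hPcard, hPsize, hPpart, hPclosed⟩ := himp
    rw [hcardV] at hbm
    -- m = p ^ j with 1 ≤ j < k
    have hmdvd : m ∣ p ^ k := Dvd.intro_left b hbm
    obtain ⟨j, hjle, rfl⟩ := (Nat.dvd_prime_pow (Fact.out : p.Prime)).mp hmdvd
    have hppos : 0 < p := (Fact.out : p.Prime).pos
    have hj1 : 1 ≤ j := by
      by_contra h
      push_neg at h
      interval_cases j
      · simp at hmgt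
    have hjk : j < k := by
      rcases Nat.lt_or_ge j k with h | h
      · exact h
      · exfalso
        have hjk' : j = k := le_antisymm hjle h
        subst hjk'
        have hb1 : b = 1 := by
          have hpk : 0 < p ^ j := Nat.pow_pos hppos
          have : b * p ^ j = 1 * p ^ j := by rw [hbm, one_mul]
          exact Nat.eq_of_mul_eq_mul_right hpk this
        omega
    have hk2 : 2 ≤ k := by omega
    -- fixed point x0
    have hXC0 : (Polynomial.X - Polynomial.C (1 : ZMod p)) ≠ 0 := Polynomial.X_sub_C_ne_zero 1
    by_cases hA1 : A - 1 = 0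
    · -- A = 1 : minpoly divides X - 1, degree contradiction
      have hdvd : minpoly (ZMod p) A ∣ (Polynomial.X - Polynomial.C (1 : ZMod p)) := by
        apply minpoly.dvd
        rw [map_sub, Polynomial.aeval_X, Polynomial.aeval_C, map_one]
        exact hA1
      have hle := Polynomial.natDegree_le_of_dvd hdvd hXC0
      rw [hmin, hdegμ, Polynomial.natDegree_X_sub_C] at hle
      omega
    · have hu : IsUnit (A - 1) := by
        have haev : Polynomial.aeval A (Polynomial.X - Polynomial.C (1 : ZMod p)) = A - 1 := by
          rw [map_sub, Polynomial.aeval_X, Polynomial.aeval_C, map_one]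
        rw [← haev]
        exact aux_isUnit_aeval A hirr _ (by rw [haev]; exact hA1)
      obtain ⟨u, hu_eq⟩ := hu
      set x0 : Fin k → ZMod p := (↑u⁻¹ : Matrix (Fin k) (Fin k) (ZMod p)).mulVec (-e) with hx0
      have hfix : (A - 1).mulVec x0 = -e := by
        rw [hx0, Matrix.mulVec_mulVec, ← hu_eq]
        rw [show (↑u * ↑u⁻¹ : Matrix (Fin k) (Fin k) (ZMod p)) = 1 from u.mul_inv]
        rw [Matrix.one_mulVec]
      have hAx0 : A.mulVec x0 = x0 - e := by
        rw [Matrix.sub_mulVec, Matrix.one_mulVec] at hfix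
        have := sub_eq_iff_eq_add.mp hfix
        rw [this]; abel
      have hgx0 : g x0 = x0 := by
        rw [hg, hAx0]; abel
      -- block through x0
      obtain ⟨Bh, ⟨hBhP, hx0Bh⟩, huniq⟩ := hPpart x0
      have hBhg : Bh.image g = Bh := by
        apply huniq
        refine ⟨hPclosed Bh hBhP, ?_⟩
        rw [← hgx0]
        exact Finset.mem_image_of_mem g hx0Bh
      set B0 : Finset (Fin k → ZMod p) := Bh.image (fun y => y - x0) with hB0
      have h0B0 : (0 : Fin k → ZMod p) ∈ B0 := by
        rw [hB0, Finset.mem_image]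
        exact ⟨x0, hx0Bh, sub_self x0⟩
      have hB0card : B0.card = p ^ j := by
        rw [hB0, Finset.card_image_of_injective _ (fun y z h => by
          rwa [sub_left_inj] at h)]
        exact hPsize Bh hBhP
      have hB0closed : B0.image (fun x => A.mulVec x) = B0 := by
        rw [hB0, Finset.image_image]
        conv_rhs => rw [← hBhg]
        rw [Finset.image_image]
        congr 1
        funext y
        simp only [Function.comp_apply]
        rw [Matrix.mulVec_sub, hg, hAx0]
        abel
      have hdvd' : orderOf A ∣ p ^ j - 1 := by
        have := aux_dvd_card A hAunit hirr B0 h0B0 hB0closed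
        rwa [hB0card] at this
      have hpow1 : A ^ (p ^ j - 1) = 1 := orderOf_dvd_iff_pow_eq_one.mp hdvd'
      have hpjpos : 0 < p ^ j := Nat.pow_pos hppos
      have hpow : A ^ (p ^ j) = A := by
        conv_lhs => rw [show p ^ j = (p ^ j - 1) + 1 by omega]
        rw [pow_succ, hpow1, one_mul]
      have hdvdX : A.charpoly ∣ (Polynomial.X : Polynomial (ZMod p)) ^ (p ^ j) - Polynomial.X := by
        rw [← hmin]
        apply minpoly.dvd
        rw [map_sub, map_pow, Polynomial.aeval_X, hpow, sub_self]
      exact aux_not_dvd k j hj1 hjk A.charpoly hirr hdegμ hdvdX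
  · -- reducible → imprimitive
    intro hred
    obtain ⟨W, hWinv, hWbot, hWtop⟩ := aux_subspace hk A hred
    exact aux_partition A e g hg W hWinv hWbot hWtop
end

section
/- Let p be a prime, k ≥ 2, let d_1, …, d_k be nonzero elements of Z/pZ whose product d = d_1⋯d_k is a k-th power in (Z/pZ)^* (i.e. d = t^k for some nonzero t), let S be the k×k cyclic shift permutation matrix, D the diagonal matrix with entries d_1,…,d_k, and e any vector of (Z/pZ)^k. Then the affine permutation g of (Z/pZ)^k given by g(x) = (D·S)·x + e is imprimitive: there exist integers b, s > 1 with b·s = p^k and a partition of (Z/pZ)^k into b blocks each of size s mapped onto blocks by g. -/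
open Equiv Finset

/-- The `k × k` cyclic shift permutation matrix, sending the `i`-th standard basis
vector to the `(i+1)`-th (indices mod `k`). -/
def cyclicShiftMatrix (R : Type*) [CommRing R] (k : ℕ) : Matrix (Fin k) (Fin k) R :=
  Matrix.of fun i j : Fin k => if j = finRotate k i then (1 : R) else 0

/-- if `k ≥ 2`, the `dᵢ` are nonzero elements of `ℤ/pℤ` whose product is
a `k`-th power of a nonzero element, then the affine permutation `x ↦ (D·S)·x + e` of
`(ℤ/pℤ)^k` is imprimitive. -/
theorem stmt10 (p : ℕ) [Fact p.Prime] (k : ℕ) (hk : 2 ≤ k) (d : Fin k → ZMod p)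
    (hd : ∀ i, d i ≠ 0) (t : ZMod p) (ht : t ≠ 0) (hprod : ∏ i, d i = t ^ k)
    (e : Fin k → ZMod p) (g : Equiv.Perm (Fin k → ZMod p))
    (hg : ∀ x, g x = (Matrix.diagonal d * cyclicShiftMatrix (ZMod p) k).mulVec x + e) :
    IsImprimitivePerm g := by
  classical
  have hp : p.Prime := Fact.out
  have hp1 : 1 < p := hp.one_lt
  obtain ⟨k', rfl⟩ : ∃ k', k = k' + 1 := ⟨k - 1, by omega⟩
  have hk1 : 1 ≤ k' := by omega
  -- the left eigenvector
  set w : Fin (k' + 1) → ZMod p :=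
    fun j => t ^ (k' - j.val) * ∏ i ∈ Finset.univ.filter (fun i : Fin (k' + 1) => i.val < j.val), d i
    with hw
  have hwne : ∀ j, w j ≠ 0 := fun j =>
    mul_ne_zero (pow_ne_zero _ ht) (Finset.prod_ne_zero_iff.mpr fun i _ => hd i)
  -- helper about filters
  have hfilt : ∀ j : Fin (k' + 1),
      Finset.univ.filter (fun i : Fin (k' + 1) => i.val < j.val + 1)
        = insert j (Finset.univ.filter (fun i : Fin (k' + 1) => i.val < j.val)) := by
    intro j
    ext i
    simp [Fin.ext_iff]
    omega
  -- the eigen relation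
  have key : ∀ j : Fin (k' + 1), w j * d j = t * w (finRotate (k' + 1) j) := by
    intro j
    by_cases hj : j = Fin.last k'
    · subst hj
      rw [finRotate_last]
      have h1 : Finset.univ.filter (fun i : Fin (k' + 1) => i.val < k')
          = Finset.univ.erase (Fin.last k') := by
        ext i; simp [Fin.ext_iff, Fin.lt_iff_val_lt_val]
        omega
      have h2 : Finset.univ.filter (fun i : Fin (k' + 1) => i.val < (0 : Fin (k' + 1)).val)
          = ∅ := by
        ext i; simp
      simp only [hw, h1, h2, Fin.val_last]
      rw [Nat.sub_self, pow_zero, one_mul, Finset.prod_empty, mul_one,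
        Finset.prod_erase_mul _ _ (Finset.mem_univ _), hprod, Fin.val_zero, Nat.sub_zero,
        ← pow_succ']
    · have hjlt : j.val < k' := by
        rcases lt_or_eq_of_le (Nat.lt_succ_iff.mp j.isLt) with h | h
        · exact h
        · exact absurd (Fin.ext h) hj
      have hrot : finRotate (k' + 1) j = ⟨j.val + 1, by omega⟩ := by
        rw [finRotate_succ_apply]
        ext
        rw [Fin.val_add_one_of_lt]
        exact Fin.lt_last_iff_ne_last.mpr hj
      rw [hrot]
      simp only [hw]
      rw [hfilt j, Finset.prod_insert (by simp)]
      have : k' - j.val = (k' - (j.val + 1)) + 1 := by omega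
      rw [this, pow_succ]
      ring
  set φ : (Fin (k' + 1) → ZMod p) → ZMod p := fun x => ∑ j, w j * x j with hφ
  have hφadd : ∀ x y, φ (x + y) = φ x + φ y := by
    intro x y
    simp [hφ, mul_add, Finset.sum_add_distrib]
  -- matrix action
  have hM : ∀ x, (Matrix.diagonal d * cyclicShiftMatrix (ZMod p) (k' + 1)).mulVec x
      = fun j => d j * x (finRotate (k' + 1) j) := by
    intro x
    funext j
    simp only [Matrix.mulVec, dotProduct, Matrix.diagonal_mul, cyclicShiftMatrix,
      Matrix.of_apply, mul_ite, mul_one, mul_zero, ite_mul, zero_mul]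
    rw [Finset.sum_ite_eq' Finset.univ (finRotate (k' + 1) j) (fun i => d j * x i)]
    simp
  have hφL : ∀ x, φ ((Matrix.diagonal d * cyclicShiftMatrix (ZMod p) (k' + 1)).mulVec x)
      = t * φ x := by
    intro x
    rw [hM]
    calc ∑ j, w j * (d j * x (finRotate (k' + 1) j))
        = ∑ j, t * (w (finRotate (k' + 1) j) * x (finRotate (k' + 1) j)) := by
          refine Finset.sum_congr rfl fun j _ => ?_
          rw [← mul_assoc, key j, mul_assoc]
      _ = t * ∑ j, w (finRotate (k' + 1) j) * x (finRotate (k' + 1) j) := by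
          rw [Finset.mul_sum]
      _ = t * φ x := by
          rw [Equiv.sum_comp (finRotate (k' + 1)) (fun j => w j * x j)]
  have hφg : ∀ x, φ (g x) = t * φ x + φ e := by
    intro x
    rw [hg, hφadd, hφL]
  -- fibers of φ
  set B : ZMod p → Finset (Fin (k' + 1) → ZMod p) :=
    fun c => Finset.univ.filter fun x => φ x = c with hB
  have hBmem : ∀ c x, x ∈ B c ↔ φ x = c := by
    intro c x; simp [hB]
  have hsurj : ∀ c : ZMod p, ∃ x, φ x = c := by
    intro c
    refine ⟨fun i => if i = 0 then c * (w 0)⁻¹ else 0, ?_⟩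
    simp only [hφ, mul_ite, mul_zero]
    rw [Finset.sum_ite_eq' Finset.univ (0 : Fin (k' + 1)) (fun j => w j * (c * (w 0)⁻¹))]
    simp only [Finset.mem_univ, if_true]
    rw [mul_comm c, ← mul_assoc, mul_inv_cancel₀ (hwne 0), one_mul]
  have hBinj : Function.Injective B := by
    intro c c' h
    obtain ⟨x, hx⟩ := hsurj c
    have : x ∈ B c' := h ▸ (hBmem c x).mpr hx
    rw [hBmem] at this
    rw [← hx, this]
  have hcardeq : ∀ c c', (B c).card = (B c').card := by
    intro c c'
    obtain ⟨u, hu⟩ := hsurj (c' - c)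
    apply Finset.card_bij (fun x _ => x + u)
    · intro x hx
      rw [hBmem] at *
      rw [hφadd, hx, hu]
      ring
    · intro x hx y hy h
      exact add_right_cancel h
    · intro y hy
      refine ⟨y - u, ?_, by abel⟩
      rw [hBmem] at *
      have := hφadd (y - u) u
      rw [sub_add_cancel] at this
      rw [hy, hu] at this
      have h2 : φ (y - u) = c' - (c' - c) := by
        rw [eq_sub_iff_add_eq, ← this]
      rw [h2]; ring
  set m := (B 0).card with hm
  have htotal : p * m = p ^ (k' + 1) := by
    have h1 : (Finset.univ : Finset (Fin (k' + 1) → ZMod p)).card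
        = ∑ c : ZMod p, (B c).card :=
      Finset.card_eq_sum_card_fiberwise (f := φ) (fun x _ => Finset.mem_univ (φ x))
    have h2 : ∑ c : ZMod p, (B c).card = ∑ _c : ZMod p, m :=
      Finset.sum_congr rfl fun c _ => hcardeq c 0
    simp only [Finset.card_univ, h2, Finset.sum_const, smul_eq_mul, ZMod.card] at h1
    rw [← h1, Fintype.card_fun, ZMod.card, Fintype.card_fin]
  have hmval : m = p ^ k' := by
    have : p * m = p * p ^ k' := by rw [htotal, pow_succ']
    exact Nat.eq_of_mul_eq_mul_left (by omega) this
  have hm1 : 1 < m := by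
    rw [hmval]
    exact Nat.one_lt_pow (by omega) hp1
  refine ⟨p, m, hp1, hm1, ?_, ?_⟩
  · rw [htotal, Fintype.card_fun, ZMod.card, Fintype.card_fin]
  refine ⟨Finset.image B Finset.univ, ?_, ?_, ?_, ?_⟩
  · rw [Finset.card_image_of_injective _ hBinj, Finset.card_univ, ZMod.card]
  · intro b hb
    obtain ⟨c, _, rfl⟩ := Finset.mem_image.mp hb
    exact hcardeq c 0
  · intro x
    refine ⟨B (φ x), ⟨Finset.mem_image_of_mem _ (Finset.mem_univ _), (hBmem _ _).mpr rfl⟩, ?_⟩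
    rintro b ⟨hb, hxb⟩
    obtain ⟨c, _, rfl⟩ := Finset.mem_image.mp hb
    rw [hBmem] at hxb
    rw [hxb]
  · intro b hb
    obtain ⟨c, _, rfl⟩ := Finset.mem_image.mp hb
    have : (B c).image g = B (t * c + φ e) := by
      ext y
      rw [Finset.mem_image, hBmem]
      constructor
      · rintro ⟨x, hx, rfl⟩
        rw [hBmem] at hx
        rw [hφg, hx]
      · intro hy
        refine ⟨g.symm y, ?_, g.apply_symm_apply y⟩
        rw [hBmem]
        have h1 := hφg (g.symm y)
        rw [g.apply_symm_apply, hy] at h1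
        have h2 : t * c = t * φ (g.symm y) := add_right_cancel h1
        exact (mul_left_cancel₀ ht h2).symm
    rw [this]
    exact Finset.mem_image_of_mem _ (Finset.mem_univ _)
end

section
/- Let q = 2 or q = 3, let p be a prime, let d_1, …, d_q be nonzero elements of Z/pZ whose product d = d_1⋯d_q is NOT a q-th power in (Z/pZ)^*, let S be the q×q cyclic shift permutation matrix and D the diagonal matrix with entries d_1,…,d_q. Then the permutation g of (Z/pZ)^q given by the linear map x ↦ (D·S)·x is primitive: there is no pair of integers b, s > 1 with b·s = p^q and partition of (Z/pZ)^q into b blocks each of size s mapped onto blocks by g. -/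
open Equiv Finset

/-- If every point of a `σ`-closed finite set has exact period `n` under `σ`,
then `n` divides the cardinality of the set. -/
lemma orbit_count {α : Type*} [DecidableEq α] (σ : Equiv.Perm α) (n : ℕ) (hn : 0 < n) :
    ∀ S : Finset α, (∀ x ∈ S, σ x ∈ S) → (∀ x ∈ S, ∀ j : ℕ, 0 < j → (σ ^ j) x = x → n ∣ j) →
      (∀ x ∈ S, (σ ^ n) x = x) → n ∣ S.card := by
  intro S
  induction S using Finset.strongInduction with
  | _ S ih =>
    intro hcl hper hfix
    rcases S.eq_empty_or_nonempty with rfl | ⟨x, hx⟩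
    · simp
    · have hmem : ∀ j : ℕ, (σ ^ j) x ∈ S := by
        intro j
        induction j with
        | zero => simpa using hx
        | succ j hj =>
          rw [pow_succ']
          exact hcl _ hj
      have hinj : Set.InjOn (fun j => (σ ^ j) x) (Finset.range n) := by
        have key : ∀ i j : ℕ, i ≤ j → j < n → (σ ^ i) x = (σ ^ j) x → i = j := by
          intro i j hij hjn heq
          have h1 : (σ ^ (j - i)) ((σ ^ i) x) = (σ ^ i) x := by
            rw [← Equiv.Perm.mul_apply, ← pow_add, Nat.sub_add_cancel hij, ← heq]
          rcases Nat.eq_zero_or_pos (j - i) with h0 | h0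
          · omega
          · have := hper _ (hmem i) _ h0 h1
            have := Nat.le_of_dvd h0 this
            omega
        intro i hi j hj heq
        simp only [Finset.coe_range, Set.mem_Iio] at hi hj
        rcases le_total i j with h | h
        · exact key i j h hj heq
        · exact (key j i h hi heq.symm).symm
      set O : Finset α := (Finset.range n).image (fun j => (σ ^ j) x) with hO
      have hOS : O ⊆ S := by
        intro y hy
        simp only [hO, Finset.mem_image] at hy
        obtain ⟨j, _, rfl⟩ := hy
        exact hmem j
      have cardO : O.card = n := by
        rw [hO, Finset.card_image_of_injOn hinj, Finset.card_range]
      have hxO : x ∈ O := by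
        simp only [hO, Finset.mem_image]
        exact ⟨0, Finset.mem_range.2 hn, by simp⟩
      have hOne : O.Nonempty := ⟨x, hxO⟩
      have hss : S \ O ⊂ S := Finset.sdiff_ssubset hOS hOne
      have hcl' : ∀ y ∈ S \ O, σ y ∈ S \ O := by
        intro y hy
        rw [Finset.mem_sdiff] at hy
        rw [Finset.mem_sdiff]
        refine ⟨hcl _ hy.1, ?_⟩
        intro hmemO
        apply hy.2
        simp only [hO, Finset.mem_image] at hmemO ⊢
        obtain ⟨j, hj, hje⟩ := hmemO
        rcases j with _ | j'
        · refine ⟨n - 1, Finset.mem_range.2 (by omega), ?_⟩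
          apply σ.injective
          rw [← Equiv.Perm.mul_apply, ← pow_succ']
          have : n - 1 + 1 = n := by omega
          rw [this, hfix x hx]
          simpa using hje
        · have hj2 := Finset.mem_range.1 hj
          refine ⟨j', Finset.mem_range.2 (by omega), ?_⟩
          apply σ.injective
          rw [← Equiv.Perm.mul_apply, ← pow_succ']
          exact hje
      have hdvd : n ∣ (S \ O).card :=
        ih _ hss hcl' (fun y hy j hj he => hper y (Finset.mem_sdiff.1 hy).1 j hj he)
          (fun y hy => hfix y (Finset.mem_sdiff.1 hy).1)
      have : S.card = (S \ O).card + n := by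
        rw [Finset.card_sdiff_of_subset hOS, cardO]
        have : n ≤ S.card := cardO ▸ Finset.card_le_card hOS
        omega
      rw [this]
      exact Nat.dvd_add hdvd dvd_rfl

/-- In a finite cyclic group, an element killed by `card / n` is an `n`-th power. -/
lemma exists_pow_eq_of_pow_div {G : Type*} [Group G] [Fintype G] [IsCyclic G]
    (n : ℕ) (hn : 0 < n) (hdvd : n ∣ Fintype.card G) (a : G)
    (h : a ^ (Fintype.card G / n) = 1) : ∃ b : G, b ^ n = a := by
  obtain ⟨γ, hγ⟩ := IsCyclic.exists_generator (α := G)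
  have hord : orderOf γ = Fintype.card G :=
    (orderOf_eq_card_of_forall_mem_zpowers hγ).trans Nat.card_eq_fintype_card
  have hγ' : ∀ y : G, y ∈ Submonoid.powers γ := by
    intro y
    exact ((isOfFinOrder_of_finite γ).mem_powers_iff_mem_zpowers).mpr (hγ y)
  obtain ⟨t, rfl⟩ := hγ' a
  have hNpos : 0 < Fintype.card G := Fintype.card_pos
  set M : ℕ := Fintype.card G / n with hM
  have hqpos : 0 < M := Nat.div_pos (Nat.le_of_dvd hNpos hdvd) hn
  rw [← pow_mul] at h
  have h2 : orderOf γ ∣ t * M := orderOf_dvd_of_pow_eq_one h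
  rw [hord] at h2
  have h3 : n * M = Fintype.card G := Nat.mul_div_cancel' hdvd
  rw [← h3] at h2
  have h4 : n ∣ t := (Nat.mul_dvd_mul_iff_right hqpos).mp h2
  obtain ⟨s, rfl⟩ := h4
  exact ⟨γ ^ s, by rw [← pow_mul, Nat.mul_comm]⟩

/-- If `q * orderOf D` divides `p - 1`, then `D` is a `q`-th power mod `p`. -/
lemma zmod_pow_of_dvd (p q : ℕ) [Fact p.Prime] (hq : 0 < q) (D : ZMod p) (hD : D ≠ 0)
    (h : q * orderOf D ∣ p - 1) : ∃ t : ZMod p, t ≠ 0 ∧ t ^ q = D := by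
  set u : (ZMod p)ˣ := Units.mk0 D hD with hu
  have hDu : (u : ZMod p) = D := rfl
  have hord : orderOf D = orderOf u := by rw [← hDu, orderOf_units]
  rw [hord] at h
  have hcard : Fintype.card (ZMod p)ˣ = p - 1 := ZMod.card_units p
  obtain ⟨c, hc⟩ := h
  have hqd : q ∣ Fintype.card (ZMod p)ˣ := by
    rw [hcard, hc]; exact ⟨orderOf u * c, by ring⟩
  have hdivq : Fintype.card (ZMod p)ˣ / q = orderOf u * c := by
    rw [hcard, hc, mul_assoc, Nat.mul_div_cancel_left _ hq]
  have hone : u ^ (Fintype.card (ZMod p)ˣ / q) = 1 := by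
    rw [hdivq, pow_mul, pow_orderOf_eq_one, one_pow]
  obtain ⟨v, hv⟩ := exists_pow_eq_of_pow_div q hq hqd u hone
  refine ⟨(v : ZMod p), Units.ne_zero v, ?_⟩
  rw [← Units.val_pow_eq_pow_val, hv, hDu]

/-- If `q` is a prime not dividing `p - 1`, every nonzero element mod `p`
is a `q`-th power. -/
lemma zmod_pow_of_not_dvd (p q : ℕ) [Fact p.Prime] (hqp : q.Prime) (h : ¬ q ∣ p - 1)
    (D : ZMod p) (hD : D ≠ 0) : ∃ t : ZMod p, t ≠ 0 ∧ t ^ q = D := by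
  set u : (ZMod p)ˣ := Units.mk0 D hD with hu
  have hcop : (Nat.card (ZMod p)ˣ).Coprime q := by
    rw [Nat.card_eq_fintype_card, ZMod.card_units p]
    exact (hqp.coprime_iff_not_dvd.mpr h).symm
  obtain ⟨v, hv⟩ := (powCoprime hcop).surjective u
  refine ⟨(v : ZMod p), Units.ne_zero v, ?_⟩
  have : v ^ q = u := hv
  rw [← Units.val_pow_eq_pow_val, this]
  rfl

/-- If all points other than the fixed point `z` have exact period `n` under `g`,
and `g` is imprimitive, then `n` divides `m - 1` for the common block size `m`. -/
lemma blocks_aux {Ω : Type*} [Fintype Ω] [DecidableEq Ω] (g : Equiv.Perm Ω) (z : Ω)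
    (hz : g z = z) (n : ℕ) (hn : 0 < n)
    (hper : ∀ x : Ω, x ≠ z → ∀ j : ℕ, 0 < j → (g ^ j) x = x → n ∣ j)
    (hfix : ∀ x : Ω, (g ^ n) x = x)
    (him : IsImprimitivePerm g) :
    ∃ k m : ℕ, 1 < k ∧ 1 < m ∧ k * m = Fintype.card Ω ∧ n ∣ m - 1 := by
  obtain ⟨k, m, hk, hm, hkm, P, hPcard, hPsize, hPpart, hPmap⟩ := him
  obtain ⟨B₀, ⟨hB₀P, hB₀z⟩, huniq⟩ := hPpart z
  have himg : B₀.image g = B₀ := by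
    refine huniq _ ⟨hPmap _ hB₀P, ?_⟩
    exact Finset.mem_image.2 ⟨z, hB₀z, hz⟩
  have hcl : ∀ x ∈ B₀, g x ∈ B₀ := by
    intro x hx
    rw [← himg]
    exact Finset.mem_image_of_mem g hx
  set S : Finset Ω := B₀.erase z with hS
  have hclS : ∀ x ∈ S, g x ∈ S := by
    intro x hx
    rw [Finset.mem_erase] at hx ⊢
    refine ⟨?_, hcl _ hx.2⟩
    intro hgx
    exact hx.1 (g.injective (hgx.trans hz.symm))
  have hdvd : n ∣ S.card :=
    orbit_count g n hn S hclS
      (fun x hx j hj he => hper x (Finset.mem_erase.1 hx).1 j hj he)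
      (fun x _ => hfix x)
  have hcardS : S.card = m - 1 := by
    rw [hS, Finset.card_erase_of_mem hB₀z, hPsize _ hB₀P]
  exact ⟨k, m, hk, hm, hkm, hcardS ▸ hdvd⟩

/-- Structure of the cycle lengths for `q = 2`. -/
lemma struct2 (p : ℕ) [Fact p.Prime] (d : Fin 2 → ZMod p) (hd : ∀ i, d i ≠ 0)
    (hpow : ¬ ∃ t : ZMod p, t ≠ 0 ∧ t ^ 2 = ∏ i, d i)
    (g : Equiv.Perm (Fin 2 → ZMod p))
    (happ : ∀ x i, g x i = d i * x (finRotate 2 i)) :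
    (∀ x : Fin 2 → ZMod p, x ≠ 0 → ∀ j : ℕ, 0 < j → (g ^ j) x = x →
      2 * orderOf (∏ i, d i) ∣ j)
    ∧ (∀ x, (g ^ (2 * orderOf (∏ i, d i))) x = x) ∧ 0 < orderOf (∏ i, d i) := by
  set D : ZMod p := ∏ i, d i with hDdef
  have hD : D ≠ 0 := by
    rw [hDdef]
    exact Finset.prod_ne_zero_iff.2 (fun i _ => hd i)
  have happ' : ∀ x (i : Fin 2), g x i = d i * x (i + 1) := by
    intro x i
    rw [happ]
    norm_num
  have hg2 : ∀ x (i : Fin 2), g (g x) i = D * x i := by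
    intro x i
    rw [happ', happ']
    fin_cases i <;>
      simp [hDdef, Fin.prod_univ_two, show (0:Fin 2) + 1 = 1 from rfl,
        show (1:Fin 2) + 1 = 0 from rfl] <;> ring
  have hg2' : ∀ x, (g ^ 2) x = fun i => D * x i := by
    intro x
    funext i
    rw [pow_two, Equiv.Perm.mul_apply]
    exact hg2 x i
  have hpows : ∀ (a : ℕ) x, (g ^ (2 * a)) x = fun i => D ^ a * x i := by
    intro a
    induction a with
    | zero => intro x; funext i; simp
    | succ a ih =>
      intro x
      have h2 : 2 * (a + 1) = 2 * a + 2 := by ring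
      rw [h2, pow_add, Equiv.Perm.mul_apply, hg2' x, ih]
      funext i
      show D ^ a * (D * x i) = D ^ (a + 1) * x i
      ring
  have hepos : 0 < orderOf D := by
    rw [orderOf_pos_iff, isOfFinOrder_iff_pow_eq_one]
    refine ⟨p - 1, ?_, ZMod.pow_card_sub_one_eq_one hD⟩
    have := (Fact.out : p.Prime).one_lt
    omega
  have heig : ∀ x : Fin 2 → ZMod p, x ≠ 0 → ∀ c : ZMod p,
      (∀ i, g x i = c * x i) → False := by
    intro x hx c hc
    obtain ⟨i₀, hi₀⟩ : ∃ i, x i ≠ 0 := by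
      by_contra hcon
      push_neg at hcon
      exact hx (funext hcon)
    have key : D * x i₀ = c * c * x i₀ := by
      rw [← hg2 x i₀]
      calc g (g x) i₀ = d i₀ * (g x) (i₀ + 1) := happ' (g x) i₀
        _ = d i₀ * (c * x (i₀ + 1)) := by rw [hc]
        _ = c * (d i₀ * x (i₀ + 1)) := by ring
        _ = c * (g x i₀) := by rw [happ']
        _ = c * (c * x i₀) := by rw [hc]
        _ = c * c * x i₀ := by ring
    have hcc : c * c = D := (mul_right_cancel₀ hi₀ key).symm
    have hc0 : c ≠ 0 := by
      intro h
      rw [h, mul_zero] at hcc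
      exact hD hcc.symm
    exact hpow ⟨c, hc0, by rw [pow_two, hcc]⟩
  refine ⟨?_, ?_, hepos⟩
  · intro x hx j hj hfixj
    obtain ⟨i₀, hi₀⟩ : ∃ i, x i ≠ 0 := by
      by_contra hcon
      push_neg at hcon
      exact hx (funext hcon)
    have hmod := Nat.div_add_mod j 2
    rcases Nat.mod_two_eq_zero_or_one j with hb | hb
    · set a := j / 2
      have hja : j = 2 * a := by omega
      rw [hja, hpows a x] at hfixj
      have h1 : D ^ a * x i₀ = x i₀ := congrFun hfixj i₀
      have h2 : D ^ a = 1 := by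
        have : D ^ a * x i₀ = 1 * x i₀ := by rw [one_mul]; exact h1
        exact mul_right_cancel₀ hi₀ this
      rw [hja]
      exact mul_dvd_mul_left 2 (orderOf_dvd_of_pow_eq_one h2)
    · set a := j / 2
      have hja : j = 2 * a + 1 := by omega
      rw [hja, pow_succ, Equiv.Perm.mul_apply, hpows a (g x)] at hfixj
      have h1 : ∀ i, D ^ a * (g x) i = x i := fun i => congrFun hfixj i
      have hDa : D ^ a ≠ 0 := pow_ne_zero a hD
      exact absurd (heig x hx ((D ^ a)⁻¹) (fun i => by
        rw [← h1 i, ← mul_assoc, inv_mul_cancel₀ hDa, one_mul])) (fun h => h)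
  · intro x
    rw [hpows (orderOf D) x]
    funext i
    rw [pow_orderOf_eq_one, one_mul]

/-- Structure of the cycle lengths for `q = 3`. -/
lemma struct3 (p : ℕ) [Fact p.Prime] (d : Fin 3 → ZMod p) (hd : ∀ i, d i ≠ 0)
    (hpow : ¬ ∃ t : ZMod p, t ≠ 0 ∧ t ^ 3 = ∏ i, d i)
    (g : Equiv.Perm (Fin 3 → ZMod p))
    (happ : ∀ x i, g x i = d i * x (finRotate 3 i)) :
    (∀ x : Fin 3 → ZMod p, x ≠ 0 → ∀ j : ℕ, 0 < j → (g ^ j) x = x →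
      3 * orderOf (∏ i, d i) ∣ j)
    ∧ (∀ x, (g ^ (3 * orderOf (∏ i, d i))) x = x) ∧ 0 < orderOf (∏ i, d i) := by
  set D : ZMod p := ∏ i, d i with hDdef
  have hD : D ≠ 0 := by
    rw [hDdef]
    exact Finset.prod_ne_zero_iff.2 (fun i _ => hd i)
  have happ' : ∀ x (i : Fin 3), g x i = d i * x (i + 1) := by
    intro x i
    rw [happ]
    norm_num
  have hg3 : ∀ x (i : Fin 3), g (g (g x)) i = D * x i := by
    intro x i
    rw [happ', happ', happ']
    fin_cases i <;>
      simp [hDdef, Fin.prod_univ_three, show (0:Fin 3) + 1 = 1 from rfl,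
        show (1:Fin 3) + 1 = 2 from rfl, show (2:Fin 3) + 1 = 0 from rfl] <;> ring
  have hg3' : ∀ x, (g ^ 3) x = fun i => D * x i := by
    intro x
    funext i
    rw [pow_succ, pow_two, Equiv.Perm.mul_apply, Equiv.Perm.mul_apply]
    exact hg3 x i
  have hpows : ∀ (a : ℕ) x, (g ^ (3 * a)) x = fun i => D ^ a * x i := by
    intro a
    induction a with
    | zero => intro x; funext i; simp
    | succ a ih =>
      intro x
      have h3 : 3 * (a + 1) = 3 * a + 3 := by ring
      rw [h3, pow_add, Equiv.Perm.mul_apply, hg3' x, ih]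
      funext i
      show D ^ a * (D * x i) = D ^ (a + 1) * x i
      ring
  have hepos : 0 < orderOf D := by
    rw [orderOf_pos_iff, isOfFinOrder_iff_pow_eq_one]
    refine ⟨p - 1, ?_, ZMod.pow_card_sub_one_eq_one hD⟩
    have := (Fact.out : p.Prime).one_lt
    omega
  have heig : ∀ x : Fin 3 → ZMod p, x ≠ 0 → ∀ c : ZMod p,
      (∀ i, g x i = c * x i) → False := by
    intro x hx c hc
    obtain ⟨i₀, hi₀⟩ : ∃ i, x i ≠ 0 := by
      by_contra hcon
      push_neg at hcon
      exact hx (funext hcon)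
    have hc2 : ∀ i, g (g x) i = c * (c * x i) := by
      intro i
      calc g (g x) i = d i * (g x) (i + 1) := happ' (g x) i
        _ = d i * (c * x (i + 1)) := by rw [hc]
        _ = c * (d i * x (i + 1)) := by ring
        _ = c * (g x i) := by rw [happ']
        _ = c * (c * x i) := by rw [hc]
    have key : D * x i₀ = c * c * c * x i₀ := by
      rw [← hg3 x i₀]
      calc g (g (g x)) i₀ = d i₀ * (g (g x)) (i₀ + 1) := happ' (g (g x)) i₀
        _ = d i₀ * (c * (c * x (i₀ + 1))) := by rw [hc2]
        _ = c * c * (d i₀ * x (i₀ + 1)) := by ring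
        _ = c * c * (g x i₀) := by rw [happ']
        _ = c * c * (c * x i₀) := by rw [hc]
        _ = c * c * c * x i₀ := by ring
    have hcc : c * c * c = D := (mul_right_cancel₀ hi₀ key).symm
    have hc0 : c ≠ 0 := by
      intro h
      rw [h, mul_zero] at hcc
      exact hD hcc.symm
    refine hpow ⟨c, hc0, ?_⟩
    rw [← hcc]; ring
  refine ⟨?_, ?_, hepos⟩
  · intro x hx j hj hfixj
    obtain ⟨i₀, hi₀⟩ : ∃ i, x i ≠ 0 := by
      by_contra hcon
      push_neg at hcon
      exact hx (funext hcon)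
    have hmod := Nat.div_add_mod j 3
    set a := j / 3 with ha
    have hb : j % 3 = 0 ∨ j % 3 = 1 ∨ j % 3 = 2 := by omega
    rcases hb with hb | hb | hb
    · have hja : j = 3 * a := by omega
      rw [hja, hpows a x] at hfixj
      have h1 : D ^ a * x i₀ = x i₀ := congrFun hfixj i₀
      have h2 : D ^ a = 1 := by
        have : D ^ a * x i₀ = 1 * x i₀ := by rw [one_mul]; exact h1
        exact mul_right_cancel₀ hi₀ this
      rw [hja]
      exact mul_dvd_mul_left 3 (orderOf_dvd_of_pow_eq_one h2)
    · have hja : j = 3 * a + 1 := by omega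
      rw [hja, pow_succ, Equiv.Perm.mul_apply, hpows a (g x)] at hfixj
      have h1 : ∀ i, D ^ a * (g x) i = x i := fun i => congrFun hfixj i
      have hDa : D ^ a ≠ 0 := pow_ne_zero a hD
      exact absurd (heig x hx ((D ^ a)⁻¹) (fun i => by
        rw [← h1 i, ← mul_assoc, inv_mul_cancel₀ hDa, one_mul])) (fun h => h)
    · have hja : j = 3 * a + 2 := by omega
      rw [hja, pow_add, Equiv.Perm.mul_apply, pow_two, Equiv.Perm.mul_apply,
        hpows a (g (g x))] at hfixj
      have h1 : ∀ i, D ^ a * (g (g x)) i = x i := fun i => congrFun hfixj i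
      have hDa : D ^ a ≠ 0 := pow_ne_zero a hD
      set c : ZMod p := (D ^ a)⁻¹ with hcdef
      have hc0 : c ≠ 0 := inv_ne_zero hDa
      have h2 : ∀ i, g (g x) i = c * x i := by
        intro i
        rw [← h1 i, hcdef, ← mul_assoc, inv_mul_cancel₀ hDa, one_mul]
      have h3 : ∀ i, c * (g x i) = D * x i := by
        intro i
        calc c * (g x i) = c * (d i * x (i + 1)) := by rw [happ']
          _ = d i * (c * x (i + 1)) := by ring
          _ = d i * (g (g x)) (i + 1) := by rw [h2]
          _ = g (g (g x)) i := (happ' (g (g x)) i).symm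
          _ = D * x i := hg3 x i
      have h4 : ∀ i, g x i = (c⁻¹ * D) * x i := by
        intro i
        rw [mul_assoc, ← h3 i, ← mul_assoc, inv_mul_cancel₀ hc0, one_mul]
      exact absurd (heig x hx (c⁻¹ * D) h4) (fun h => h)
  · intro x
    rw [hpows (orderOf D) x]
    funext i
    rw [pow_orderOf_eq_one, one_mul]

/-- for `q = 2` or `3` and `p` prime, if the `dᵢ` are nonzero elements of
`ℤ/pℤ` whose product is not a `q`-th power of a nonzero element, then the linear
permutation `x ↦ (D·S)·x` of `(ℤ/pℤ)^q` is primitive (not imprimitive). -/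
theorem stmt11 (q : ℕ) (hq : q = 2 ∨ q = 3) (p : ℕ) [Fact p.Prime]
    (d : Fin q → ZMod p) (hd : ∀ i, d i ≠ 0)
    (hpow : ¬ ∃ t : ZMod p, t ≠ 0 ∧ t ^ q = ∏ i, d i)
    (g : Equiv.Perm (Fin q → ZMod p))
    (hg : ∀ x, g x = (Matrix.diagonal d * cyclicShiftMatrix (ZMod p) q).mulVec x) :
    ¬ IsImprimitivePerm g := by
  intro him
  have hpprime : p.Prime := Fact.out
  have happ : ∀ x i, g x i = d i * x (finRotate q i) := by
    intro x i
    rw [hg]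
    simp [Matrix.mulVec, dotProduct, Matrix.diagonal_mul, cyclicShiftMatrix,
      mul_comm, mul_ite]
  have hg0 : g 0 = 0 := by
    funext i
    rw [happ]
    simp
  have hcard : Fintype.card (Fin q → ZMod p) = p ^ q := by
    rw [Fintype.card_fun]
    simp [ZMod.card]
  set D : ZMod p := ∏ i, d i with hDdef
  have hD : D ≠ 0 := Finset.prod_ne_zero_iff.2 (fun i _ => hd i)
  set e : ℕ := orderOf D with hedef
  have hedvd : e ∣ p - 1 :=
    orderOf_dvd_of_pow_eq_one (ZMod.pow_card_sub_one_eq_one hD)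
  rcases hq with rfl | rfl
  · -- q = 2
    obtain ⟨hper, hfix, hepos⟩ := struct2 p d hd hpow g happ
    obtain ⟨k, m, hk, hm, hkm, hdvd⟩ :=
      blocks_aux g 0 hg0 (2 * e) (Nat.mul_pos (by norm_num) hepos) hper hfix him
    rw [hcard] at hkm
    have hmdvd : m ∣ p ^ 2 := ⟨k, by rw [← hkm]; ring⟩
    obtain ⟨i, hile, rfl⟩ := (Nat.dvd_prime_pow hpprime).1 hmdvd
    have hppos : 0 < p := hpprime.pos
    have hip : 1 ≤ i := by
      by_contra hcon
      interval_cases i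
      · simp at hm
    have hilt : i < 2 := by
      by_contra hcon
      have : i = 2 := by omega
      subst this
      have : k = 1 := by
        have h2 : k * p ^ 2 = 1 * p ^ 2 := by rw [one_mul]; exact hkm
        exact Nat.eq_of_mul_eq_mul_right (pow_pos hppos 2) h2
      omega
    have : i = 1 := by omega
    subst this
    rw [pow_one] at hdvd
    obtain ⟨t, ht0, ht⟩ := zmod_pow_of_dvd p 2 (by norm_num) D hD hdvd
    exact hpow ⟨t, ht0, ht⟩
  · -- q = 3
    obtain ⟨hper, hfix, hepos⟩ := struct3 p d hd hpow g happ
    obtain ⟨k, m, hk, hm, hkm, hdvd⟩ :=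
      blocks_aux g 0 hg0 (3 * e) (Nat.mul_pos (by norm_num) hepos) hper hfix him
    rw [hcard] at hkm
    have hmdvd : m ∣ p ^ 3 := ⟨k, by rw [← hkm]; ring⟩
    obtain ⟨i, hile, rfl⟩ := (Nat.dvd_prime_pow hpprime).1 hmdvd
    have hppos : 0 < p := hpprime.pos
    have hp2 : 2 ≤ p := hpprime.two_le
    have hip : 1 ≤ i := by
      by_contra hcon
      interval_cases i
      · simp at hm
    have hilt : i < 3 := by
      by_contra hcon
      have : i = 3 := by omega
      subst this
      have : k = 1 := by
        have h2 : k * p ^ 3 = 1 * p ^ 3 := by rw [one_mul]; exact hkm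
        exact Nat.eq_of_mul_eq_mul_right (pow_pos hppos 3) h2
      omega
    -- first, 3 divides p - 1
    have h3p : 3 ∣ p - 1 := by
      by_contra hcon
      obtain ⟨t, ht0, ht⟩ := zmod_pow_of_not_dvd p 3 (by norm_num) hcon D hD
      exact hpow ⟨t, ht0, ht⟩
    have hnot3e : ¬ (3 * e ∣ p - 1) := by
      intro hcon
      obtain ⟨t, ht0, ht⟩ := zmod_pow_of_dvd p 3 (by norm_num) D hD hcon
      exact hpow ⟨t, ht0, ht⟩
    interval_cases i
    · rw [pow_one] at hdvd
      exact hnot3e hdvd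
    · -- m = p ^ 2
      obtain ⟨c, hc⟩ := hedvd
      have hc3 : ¬ (3 ∣ c) := by
        intro ⟨c', hc'⟩
        exact hnot3e ⟨c', by rw [hc, hc']; ring⟩
      have hsq : p ^ 2 - 1 = (p - 1) * (p + 1) := by
        obtain ⟨a, rfl⟩ : ∃ a, p = a + 2 := ⟨p - 2, by omega⟩
        have : (a + 2) ^ 2 = a * a + 4 * a + 4 := by ring
        rw [this]
        have h2 : (a + 2 - 1) * (a + 2 + 1) = a * a + 4 * a + 3 := by
          have : a + 2 - 1 = a + 1 := by omega
          rw [this]; ring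
        omega
      rw [hsq, hc] at hdvd
      have hdvd2 : e * 3 ∣ e * (c * (p + 1)) := by
        rw [show e * (c * (p + 1)) = e * c * (p + 1) from by ring, show e * 3 = 3 * e from by ring]
        exact hdvd
      have h3c : 3 ∣ c * (p + 1) := (Nat.mul_dvd_mul_iff_left hepos).mp hdvd2
      have h3prime : Nat.Prime 3 := by norm_num
      rcases (h3prime.dvd_mul).1 h3c with h | h
      · exact hc3 h
      · omega
end

section
/- Let P be a partition of n = k·m with k, m > 1 whose parts are pairwise coprime (and pairwise distinct). If P is an i-partition of type (k, m), then P is either an m-partition or a special m-partition. -/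
/-- `P` is an `m`-partition: `m` divides the total sum and the parts can be grouped
into clusters each of which sums to `m`. -/
def IsMPartition (m : ℕ) (P : Multiset ℕ) : Prop :=
  m ∣ P.sum ∧ ∃ C : Multiset (Multiset ℕ), C.sum = P ∧ ∀ Q ∈ C, Q.sum = m

/-- `P` is a special `m`-partition: its largest part is divisible by `m`, and the
remaining parts can be grouped into clusters each of which sums to `m`. -/
def IsSpecialMPartition (m : ℕ) (P : Multiset ℕ) : Prop :=
  ∃ p ∈ P, (∀ q ∈ P, q ≤ p) ∧ m ∣ p ∧
    ∃ C : Multiset (Multiset ℕ), C.sum = P.erase p ∧ ∀ Q ∈ C, Q.sum = m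

lemma mem_msum {s : Multiset (Multiset ℕ)} {x : ℕ} (h : x ∈ s.sum) : ∃ t ∈ s, x ∈ t := by
  induction s using Multiset.induction with
  | empty => simp at h
  | cons a s ih =>
    simp only [Multiset.sum_cons, Multiset.mem_add] at h
    rcases h with h | h
    · exact ⟨a, Multiset.mem_cons_self _ _, h⟩
    · obtain ⟨t, ht, hx⟩ := ih h
      exact ⟨t, Multiset.mem_cons_of_mem ht, hx⟩

lemma msum_le_msum {s t : Multiset (Multiset ℕ)} (h : s ≤ t) : s.sum ≤ t.sum := by
  obtain ⟨u, rfl⟩ := Multiset.le_iff_exists_add.1 h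
  simp

/-- if `P` is a partition of `n = k * m` (`k, m > 1`) with pairwise
distinct, pairwise coprime parts, and `P` is an i-partition of type `(k, m)`, then `P`
is an `m`-partition or a special `m`-partition. -/
theorem stmt17 (n k m : ℕ) (hk : 1 < k) (hm : 1 < m) (hn : n = k * m)
    (P : Nat.Partition n) (hdistinct : P.parts.Nodup)
    (hcop : ∀ a ∈ P.parts, ∀ b ∈ P.parts, a ≠ b → Nat.Coprime a b)
    (hI : IsIPartition k m P.parts) :
    IsMPartition m P.parts ∨ IsSpecialMPartition m P.parts := by
  obtain ⟨C, hCsum, hCk, hCq⟩ := hI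
  have hsub : ∀ q ∈ C, q.2 ≤ P.parts := fun q hq => by
    rw [← hCsum]
    exact Multiset.le_sum_of_mem (Multiset.mem_map_of_mem Prod.snd hq)
  -- clusters with k_i ≠ 1 are singletons {k_i * m}
  have hkey : ∀ q ∈ C, q.1 ≠ 1 → q.2 = {q.1 * m} := by
    intro q hq hq1
    obtain ⟨hqpos, hqsum, hqdvd⟩ := hCq q hq
    have hq2 : 2 ≤ q.1 := by omega
    have hsumpos : 0 < q.2.sum := by
      rw [hqsum]; exact Nat.mul_pos (by omega) (by omega)
    have hne : q.2 ≠ 0 := fun h => by simp [h] at hsumpos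
    obtain ⟨a, ha⟩ := Multiset.exists_mem_of_ne_zero hne
    have hall : ∀ b ∈ q.2, b = a := by
      intro b hb
      by_contra hba
      have hcp := hcop b (Multiset.mem_of_le (hsub q hq) hb)
        a (Multiset.mem_of_le (hsub q hq) ha) hba
      have : q.1 ∣ Nat.gcd b a := Nat.dvd_gcd (hqdvd b hb) (hqdvd a ha)
      rw [hcp] at this
      exact hq1 (Nat.dvd_one.1 this)
    have hrep : q.2 = Multiset.replicate (Multiset.card q.2) a :=
      Multiset.eq_replicate_card.2 hall
    have hnd : q.2.Nodup := Multiset.nodup_of_le (hsub q hq) hdistinct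
    have hcard : Multiset.card q.2 ≤ 1 := by
      have h1 := Multiset.nodup_iff_count_le_one.1 hnd a
      have h2 : Multiset.count a q.2 = Multiset.card q.2 := by
        rw [hrep]; simp
      omega
    have hcardpos : Multiset.card q.2 ≠ 0 := by
      intro h
      rw [Multiset.card_eq_zero] at h
      exact hne h
    have hcard1 : Multiset.card q.2 = 1 := by omega
    rw [hrep, hcard1, Multiset.replicate_one]
    congr 1
    have := hqsum
    rw [hrep, hcard1, Multiset.replicate_one, Multiset.sum_singleton] at this
    exact this
  classical
  set C2 := C.filter (fun q => q.1 ≠ 1) with hC2def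
  by_cases hC2e : C2 = 0
  · -- every cluster sums to m : m-partition
    left
    refine ⟨⟨k, by rw [P.parts_sum, hn, mul_comm]⟩, C.map Prod.snd, hCsum, ?_⟩
    intro Q hQ
    obtain ⟨q, hq, rfl⟩ := Multiset.mem_map.1 hQ
    have hq1 : q.1 = 1 := by
      by_contra h
      exact (Multiset.eq_zero_iff_forall_notMem.1 hC2e q)
        (Multiset.mem_filter.2 ⟨hq, h⟩)
    rw [(hCq q hq).2.1, hq1, one_mul]
  · right
    obtain ⟨q, hqC2⟩ := Multiset.exists_mem_of_ne_zero hC2e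
    obtain ⟨hqC, hq1⟩ := Multiset.mem_filter.1 hqC2
    have hq2 : q.2 = {q.1 * m} := hkey q hqC hq1
    have hqpos := (hCq q hqC).1
    set p := q.1 * m with hp
    have hpP : p ∈ P.parts :=
      Multiset.mem_of_le (hsub q hqC) (by rw [hq2]; exact Multiset.mem_singleton_self _)
    -- C2 = {q}
    have herase : C2.erase q = 0 := by
      by_contra h
      obtain ⟨q', hq'⟩ := Multiset.exists_mem_of_ne_zero h
      have hq'C2 : q' ∈ C2 := Multiset.mem_of_mem_erase hq'
      obtain ⟨hq'C, hq'1⟩ := Multiset.mem_filter.1 hq'C2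
      have hq'2 : q'.2 = {q'.1 * m} := hkey q' hq'C hq'1
      have hle : (q ::ₘ {q'} : Multiset (ℕ × Multiset ℕ)) ≤ C := by
        refine le_trans (show (q ::ₘ {q'} : Multiset (ℕ × Multiset ℕ)) ≤ C2 from ?_)
          (Multiset.filter_le (fun q => q.1 ≠ 1) C)
        rw [← Multiset.cons_erase hqC2]
        exact Multiset.cons_le_cons q (Multiset.singleton_le.2 hq')
      have hle2 : ({p, q'.1 * m} : Multiset ℕ) ≤ P.parts := by
        have := msum_le_msum (Multiset.map_le_map (f := Prod.snd) hle)
        rw [hCsum] at this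
        simpa [hq2, hq'2] using this
      by_cases hpq : p = q'.1 * m
      · have hcount : Multiset.count p ({p, q'.1 * m} : Multiset ℕ) = 2 := by
          simp [← hpq, Multiset.insert_eq_cons]
        have h2 : 2 ≤ Multiset.count p P.parts := by
          rw [← hcount]; exact Multiset.count_le_of_le p hle2
        have := Multiset.nodup_iff_count_le_one.1 hdistinct p
        omega
      · have hq'P : q'.1 * m ∈ P.parts := Multiset.mem_of_le hle2 (by simp)
        have hcp := hcop p hpP (q'.1 * m) hq'P hpq
        have : m ∣ Nat.gcd p (q'.1 * m) :=
          Nat.dvd_gcd (dvd_mul_left m q.1) (dvd_mul_left m q'.1)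
        rw [hcp] at this
        have := Nat.dvd_one.1 this
        omega
    have hC2q : C2 = {q} := by
      rw [← Multiset.cons_erase hqC2, herase]
      rfl
    refine ⟨p, hpP, ?_, dvd_mul_left m q.1, ?_⟩
    · -- p is the largest part
      intro r hr
      rw [← hCsum] at hr
      obtain ⟨Q, hQ, hrQ⟩ := mem_msum hr
      obtain ⟨q', hq'C, rfl⟩ := Multiset.mem_map.1 hQ
      by_cases h1 : q'.1 = 1
      · have : r ≤ q'.2.sum := Multiset.le_sum_of_mem hrQ
        rw [(hCq q' hq'C).2.1, h1, one_mul] at this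
        calc r ≤ m := this
          _ ≤ q.1 * m := Nat.le_mul_of_pos_left m hqpos
      · have hq'C2 : q' ∈ C2 := Multiset.mem_filter.2 ⟨hq'C, h1⟩
        rw [hC2q, Multiset.mem_singleton] at hq'C2
        subst hq'C2
        rw [hq2, Multiset.mem_singleton] at hrQ
        exact le_of_eq hrQ
    · -- remaining clusters each sum to m
      refine ⟨(C.filter (fun q => ¬ q.1 ≠ 1)).map Prod.snd, ?_, ?_⟩
      · have hsplit : C2 + C.filter (fun q => ¬ q.1 ≠ 1) = C :=
          Multiset.filter_add_not _ C
        have : P.parts = p ::ₘ ((C.filter (fun q => ¬ q.1 ≠ 1)).map Prod.snd).sum := by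
          rw [← hCsum, ← hsplit, Multiset.map_add, Multiset.sum_add, hC2q]
          simp [hq2, Multiset.filter_singleton, hq1]
        rw [this, Multiset.erase_cons_head]
      · intro Q hQ
        obtain ⟨q', hq', rfl⟩ := Multiset.mem_map.1 hQ
        obtain ⟨hq'C, h1⟩ := Multiset.mem_filter.1 hq'
        rw [(hCq q' hq'C).2.1, not_not.1 h1, one_mul]
end

section
/- Let g be a permutation of a set Ω of size n and let m be an integer with 1 < m < n. If the cycle partition of g is an m-partition, or a special m-partition, then g preserves a partition of Ω into n/m blocks each of size m; in particular g is an imprimitive permutation. -/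
open Equiv Finset

set_option linter.unusedSectionVars false

namespace Stmt18Aux

/-! ### Multiset lemmas -/

lemma mem_msum {α : Type*} {D : Multiset (Multiset α)} {a : α} :
    a ∈ D.sum ↔ ∃ Q ∈ D, a ∈ Q := by
  induction D using Multiset.induction with
  | empty => simp
  | cons Q D ih =>
      simp only [Multiset.sum_cons, Multiset.mem_add, ih, Multiset.mem_cons]
      constructor
      · rintro (h | ⟨R, hR, h⟩)
        · exact ⟨Q, Or.inl rfl, h⟩
        · exact ⟨R, Or.inr hR, h⟩
      · rintro ⟨R, (rfl | hR), h⟩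
        · exact Or.inl h
        · exact Or.inr ⟨R, hR, h⟩

lemma mem_le_sum {α : Type*} [DecidableEq α] {D : Multiset (Multiset α)} {Q : Multiset α} (h : Q ∈ D) :
    Q ≤ D.sum := by
  rw [← Multiset.cons_erase h, Multiset.sum_cons]
  exact Multiset.le_add_right _ _

lemma exists_le_map {α β : Type*} [DecidableEq α] (f : α → β) :
    ∀ (t : Multiset β) (s : Multiset α), t ≤ s.map f → ∃ u, u ≤ s ∧ u.map f = t := by
  intro t
  induction t using Multiset.induction with
  | empty => exact fun s _ => ⟨0, Multiset.zero_le s, rfl⟩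
  | cons b t ih =>
      intro s hle
      have hb : b ∈ s.map f := Multiset.mem_of_le hle (Multiset.mem_cons_self b t)
      obtain ⟨a, ha, rfl⟩ := Multiset.mem_map.1 hb
      have hs : s.map f = f a ::ₘ (s.erase a).map f := by
        rw [← Multiset.map_cons, Multiset.cons_erase ha]
      rw [hs, Multiset.cons_le_cons_iff] at hle
      obtain ⟨u, hu, hmap⟩ := ih (s.erase a) hle
      refine ⟨a ::ₘ u, ?_, by rw [Multiset.map_cons, hmap]⟩
      calc a ::ₘ u ≤ a ::ₘ s.erase a := by rw [Multiset.cons_le_cons_iff]; exact hu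
      _ = s := Multiset.cons_erase ha

lemma lift_clusters {α β : Type*} [DecidableEq α] (f : α → β) :
    ∀ (C : Multiset (Multiset β)) (s : Multiset α), C.sum = s.map f →
    ∃ D : Multiset (Multiset α), D.sum = s ∧ D.map (Multiset.map f) = C := by
  intro C
  induction C using Multiset.induction with
  | empty =>
      intro s hs
      have : s = 0 := by
        have h0 : Multiset.map f s = 0 := by simpa using hs.symm
        rwa [Multiset.map_eq_zero] at h0
      exact ⟨0, by simp [this], rfl⟩
  | cons Q C ih =>
      intro s hs
      rw [Multiset.sum_cons] at hs
      have hQ : Q ≤ s.map f := hs ▸ Multiset.le_add_right Q C.sum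
      obtain ⟨u, hu, hmapu⟩ := exists_le_map f Q s hQ
      obtain ⟨v, rfl⟩ := Multiset.le_iff_exists_add.1 hu
      have hv : C.sum = v.map f := by
        rw [Multiset.map_add, hmapu] at hs
        exact add_left_cancel hs
      obtain ⟨D, hDsum, hDmap⟩ := ih v hv
      exact ⟨u ::ₘ D, by rw [Multiset.sum_cons, hDsum], by
        rw [Multiset.map_cons, hDmap, hmapu]⟩

variable {Ω : Type*} [Fintype Ω] [DecidableEq Ω] (g : Equiv.Perm Ω)

variable {Ω : Type*} [Fintype Ω] [DecidableEq Ω] (g : Equiv.Perm Ω)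

/-- The atoms of the orbit partition: supports of cycles, plus singletons of fixed points. -/
def atomsM : Multiset (Finset Ω) :=
  g.cycleFactorsFinset.1.map Equiv.Perm.support
  + (Finset.univ.filter fun x => g x = x).1.map (fun x => {x})

lemma atoms_map_card : (atomsM g).map Finset.card = cyclePartition g := by
  unfold atomsM cyclePartition
  rw [Multiset.map_add, Multiset.map_map]
  congr 1
  rw [Multiset.map_map]
  rw [Multiset.eq_replicate]
  constructor
  · simp [Finset.card]
  · intro b hb
    obtain ⟨x, _, rfl⟩ := Multiset.mem_map.1 hb
    simp

lemma atoms_inv : ∀ a ∈ atomsM g, ∀ x ∈ a, g x ∈ a := by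
  intro a ha x hx
  rcases Multiset.mem_add.1 ha with h | h
  · obtain ⟨c, hc, rfl⟩ := Multiset.mem_map.1 h
    have hc' : c ∈ g.cycleFactorsFinset := hc
    have heq := (Equiv.Perm.mem_cycleFactorsFinset_iff.1 hc').2 x hx
    rw [← heq]
    exact Equiv.Perm.apply_mem_support.2 hx
  · obtain ⟨y, hy, rfl⟩ := Multiset.mem_map.1 h
    have hy' : g y = y := (Finset.mem_filter.1 hy).2
    rw [Finset.mem_singleton] at hx
    subst hx
    simp [hy']

lemma support_mem_atomsM {c : Equiv.Perm Ω} (hc : c ∈ g.cycleFactorsFinset) :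
    c.support ∈ atomsM g :=
  Multiset.mem_add.2 (Or.inl (Multiset.mem_map_of_mem _ hc))

lemma atoms_unique : ∀ a ∈ atomsM g, ∀ b ∈ atomsM g, ∀ x, x ∈ a → x ∈ b → a = b := by
  have key : ∀ a ∈ atomsM g, ∀ x ∈ a, a = if g x = x then {x} else (g.cycleOf x).support := by
    intro a ha x hx
    rcases Multiset.mem_add.1 ha with h | h
    · obtain ⟨c, hc, rfl⟩ := Multiset.mem_map.1 h
      have hc' : c ∈ g.cycleFactorsFinset := hc
      have heq := (Equiv.Perm.mem_cycleFactorsFinset_iff.1 hc').2 x hx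
      have hgx : g x ≠ x := by
        rw [← heq]; exact Equiv.Perm.mem_support.1 hx
      rw [if_neg hgx]
      rw [Equiv.Perm.cycle_is_cycleOf hx hc']
    · obtain ⟨y, hy, rfl⟩ := Multiset.mem_map.1 h
      have hy' : g y = y := (Finset.mem_filter.1 hy).2
      rw [Finset.mem_singleton] at hx
      subst hx
      rw [if_pos hy']
  intro a ha b hb x hxa hxb
  rw [key a ha x hxa, key b hb x hxb]

lemma atoms_nodup : (atomsM g).Nodup := by
  unfold atomsM
  rw [Multiset.nodup_add]
  refine ⟨?_, ?_, ?_⟩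
  · refine Multiset.Nodup.map_on ?_ g.cycleFactorsFinset.nodup
    intro c₁ h₁ c₂ h₂ hsup
    have hc₁ : c₁ ∈ g.cycleFactorsFinset := h₁
    have hc₂ : c₂ ∈ g.cycleFactorsFinset := h₂
    have hcyc : c₁.IsCycle := (Equiv.Perm.mem_cycleFactorsFinset_iff.1 hc₁).1
    obtain ⟨x, hx⟩ := hcyc.nonempty_support
    have hx₂ : x ∈ c₂.support := hsup ▸ hx
    rw [Equiv.Perm.cycle_is_cycleOf hx hc₁, Equiv.Perm.cycle_is_cycleOf hx₂ hc₂]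
  · refine Multiset.Nodup.map_on ?_ (Finset.univ.filter fun x => g x = x).nodup
    intro x _ y _ h
    exact Finset.singleton_injective h
  · rw [Multiset.disjoint_left]
    intro a ha hb
    obtain ⟨c, hc, rfl⟩ := Multiset.mem_map.1 ha
    obtain ⟨y, _, hy⟩ := Multiset.mem_map.1 hb
    have hc' : c ∈ g.cycleFactorsFinset := hc
    have h2 := (Equiv.Perm.mem_cycleFactorsFinset_iff.1 hc').1.two_le_card_support
    rw [← hy] at h2
    simp at h2

lemma atoms_cover : ∀ x : Ω, ∃ a ∈ atomsM g, x ∈ a := by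
  intro x
  by_cases h : g x = x
  · refine ⟨{x}, Multiset.mem_add.2 (Or.inr ?_), Finset.mem_singleton_self x⟩
    exact Multiset.mem_map_of_mem _ (by simp [h])
  · refine ⟨(g.cycleOf x).support, Multiset.mem_add.2 (Or.inl ?_), ?_⟩
    · exact Multiset.mem_map_of_mem _
        (Equiv.Perm.cycleOf_mem_cycleFactorsFinset_iff.2 (Equiv.Perm.mem_support.2 h))
    · exact Equiv.Perm.mem_support_cycleOf_iff.2 ⟨Equiv.Perm.SameCycle.refl g x,
        Equiv.Perm.mem_support.2 h⟩

lemma cyclePartition_sum : (cyclePartition g).sum = Fintype.card Ω := by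
  unfold cyclePartition
  rw [Multiset.sum_add, Equiv.Perm.sum_cycleType, Multiset.sum_replicate, smul_eq_mul, mul_one]
  have h1 := Finset.card_filter_add_card_filter_not (s := (univ : Finset Ω))
    (p := fun x => g x = x)
  rw [Finset.card_univ] at h1
  have h2 : g.support.card = (univ.filter fun x => ¬ g x = x).card := by
    have : g.support = univ.filter fun x => ¬ g x = x := by
      ext x
      simp [Equiv.Perm.mem_support]
    rw [this]
  omega

def blockOf (Q : Multiset (Finset Ω)) : Finset Ω := Q.toFinset.biUnion (fun a => a)

lemma mem_blockOf {Q : Multiset (Finset Ω)} {x : Ω} :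
    x ∈ blockOf Q ↔ ∃ a ∈ Q, x ∈ a := by
  simp [blockOf]

lemma blockOf_card {Q : Multiset (Finset Ω)} (hnd : Q.Nodup)
    (hdisj : ∀ a ∈ Q, ∀ b ∈ Q, a ≠ b → Disjoint a b) :
    (blockOf Q).card = (Q.map Finset.card).sum := by
  rw [blockOf, Finset.card_biUnion (fun a ha b hb hab =>
    hdisj a (Multiset.mem_toFinset.1 ha) b (Multiset.mem_toFinset.1 hb) hab)]
  have hval : Q.toFinset.1 = Q := by
    rw [Multiset.toFinset_val, Multiset.dedup_eq_self.2 hnd]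
  rw [Finset.sum, hval]

lemma inv_image_eq (b : Finset Ω) (h : ∀ x ∈ b, g x ∈ b) : b.image g = b := by
  apply Finset.eq_of_subset_of_card_le
  · intro y hy
    obtain ⟨x, hx, rfl⟩ := Finset.mem_image.1 hy
    exact h x hx
  · rw [Finset.card_image_of_injective _ g.injective]

lemma blocks_of_clusters (m : ℕ) (A : Multiset (Finset Ω)) (hA : A ≤ atomsM g)
    (D : Multiset (Multiset (Finset Ω))) (hD : D.sum = A)
    (hsum : ∀ Q ∈ D, (Q.map Finset.card).sum = m) :
    ∃ P : Finset (Finset Ω),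
      (∀ b ∈ P, b.card = m) ∧
      (∀ b ∈ P, ∀ x ∈ b, g x ∈ b) ∧
      (∀ b ∈ P, ∀ x ∈ b, ∃ a ∈ A, x ∈ a) ∧
      (∀ x : Ω, (∃ a ∈ A, x ∈ a) → ∃ b ∈ P, x ∈ b) ∧
      (∀ b₁ ∈ P, ∀ b₂ ∈ P, b₁ ≠ b₂ → Disjoint b₁ b₂) := by
  classical
  have hAnd : A.Nodup := Multiset.nodup_of_le hA (atoms_nodup g)
  have hQle : ∀ Q ∈ D, Q ≤ A := fun Q hQ => hD ▸ mem_le_sum hQ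
  have hmemA : ∀ Q ∈ D, ∀ a ∈ Q, a ∈ A := fun Q hQ a ha => Multiset.mem_of_le (hQle Q hQ) ha
  have hdisjA : ∀ a ∈ A, ∀ b ∈ A, a ≠ b → Disjoint a b := by
    intro a ha b hb hab
    rw [Finset.disjoint_left]
    intro x hxa hxb
    exact hab (atoms_unique g a (Multiset.mem_of_le hA ha) b (Multiset.mem_of_le hA hb) x hxa hxb)
  refine ⟨(D.map blockOf).toFinset, ?_, ?_, ?_, ?_, ?_⟩
  · intro b hb
    obtain ⟨Q, hQ, rfl⟩ := Multiset.mem_map.1 (Multiset.mem_toFinset.1 hb)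
    rw [blockOf_card (Multiset.nodup_of_le (hQle Q hQ) hAnd)
      (fun a ha b hb' hab => hdisjA a (hmemA Q hQ a ha) b (hmemA Q hQ b hb') hab)]
    exact hsum Q hQ
  · intro b hb x hx
    obtain ⟨Q, hQ, rfl⟩ := Multiset.mem_map.1 (Multiset.mem_toFinset.1 hb)
    obtain ⟨a, ha, hxa⟩ := mem_blockOf.1 hx
    exact mem_blockOf.2 ⟨a, ha, atoms_inv g a (Multiset.mem_of_le hA (hmemA Q hQ a ha)) x hxa⟩
  · intro b hb x hx
    obtain ⟨Q, hQ, rfl⟩ := Multiset.mem_map.1 (Multiset.mem_toFinset.1 hb)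
    obtain ⟨a, ha, hxa⟩ := mem_blockOf.1 hx
    exact ⟨a, hmemA Q hQ a ha, hxa⟩
  · rintro x ⟨a, ha, hxa⟩
    have : a ∈ D.sum := hD ▸ ha
    obtain ⟨Q, hQ, haQ⟩ := mem_msum.1 this
    exact ⟨blockOf Q, Multiset.mem_toFinset.2 (Multiset.mem_map_of_mem _ hQ),
      mem_blockOf.2 ⟨a, haQ, hxa⟩⟩
  · intro b₁ h₁ b₂ h₂ hne
    rw [Finset.disjoint_left]
    intro x hx₁ hx₂
    obtain ⟨Q₁, hQ₁, rfl⟩ := Multiset.mem_map.1 (Multiset.mem_toFinset.1 h₁)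
    obtain ⟨Q₂, hQ₂, rfl⟩ := Multiset.mem_map.1 (Multiset.mem_toFinset.1 h₂)
    obtain ⟨a₁, ha₁, hxa₁⟩ := mem_blockOf.1 hx₁
    obtain ⟨a₂, ha₂, hxa₂⟩ := mem_blockOf.1 hx₂
    have hae : a₁ = a₂ := atoms_unique g a₁ (Multiset.mem_of_le hA (hmemA Q₁ hQ₁ a₁ ha₁))
      a₂ (Multiset.mem_of_le hA (hmemA Q₂ hQ₂ a₂ ha₂)) x hxa₁ hxa₂
    subst hae
    have hQne : Q₁ ≠ Q₂ := fun h => hne (by rw [h])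
    have hQ₂' : Q₂ ∈ D.erase Q₁ := (Multiset.mem_erase_of_ne hQne.symm).2 hQ₂
    have hcount1 : A.count a₁ = 1 := Multiset.count_eq_one_of_mem hAnd (hmemA Q₁ hQ₁ a₁ ha₁)
    have hDsum : D.sum = Q₁ + (D.erase Q₁).sum := by
      conv_lhs => rw [← Multiset.cons_erase hQ₁]
      rw [Multiset.sum_cons]
    have hc1 : 1 ≤ Q₁.count a₁ := Multiset.one_le_count_iff_mem.2 ha₁
    have hc2 : 1 ≤ ((D.erase Q₁).sum).count a₁ := by
      calc 1 ≤ Q₂.count a₁ := Multiset.one_le_count_iff_mem.2 ha₂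
      _ ≤ ((D.erase Q₁).sum).count a₁ := Multiset.count_le_of_le _ (mem_le_sum hQ₂')
    have : 2 ≤ A.count a₁ := by
      rw [← hD, hDsum, Multiset.count_add]
      omega
    omega

lemma assemble (m : ℕ) (hm0 : 0 < m) (P : Finset (Finset Ω))
    (hsize : ∀ b ∈ P, b.card = m) (hcov : ∀ x : Ω, ∃ b ∈ P, x ∈ b)
    (hdisj : ∀ b₁ ∈ P, ∀ b₂ ∈ P, b₁ ≠ b₂ → Disjoint b₁ b₂)
    (hcl : ∀ b ∈ P, b.image g ∈ P) :
    P.card = Fintype.card Ω / m ∧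
    (∀ x : Ω, ∃! b : Finset Ω, b ∈ P ∧ x ∈ b) ∧
    m ∣ Fintype.card Ω := by
  have huniv : P.biUnion (fun b => b) = Finset.univ := by
    apply Finset.eq_univ_of_forall
    intro x
    obtain ⟨b, hb, hxb⟩ := hcov x
    exact Finset.mem_biUnion.2 ⟨b, hb, hxb⟩
  have hcardn : Fintype.card Ω = P.card * m := by
    rw [← Finset.card_univ, ← huniv, Finset.card_biUnion hdisj]
    rw [Finset.sum_congr rfl (fun b hb => hsize b hb), Finset.sum_const, smul_eq_mul]
  refine ⟨by rw [hcardn, Nat.mul_div_cancel _ hm0], ?_, ⟨P.card, by rw [hcardn, mul_comm]⟩⟩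
  intro x
  obtain ⟨b, hb, hxb⟩ := hcov x
  refine ⟨b, ⟨hb, hxb⟩, ?_⟩
  rintro b' ⟨hb', hxb'⟩
  by_contra hne
  exact Finset.disjoint_left.1 (hdisj b' hb' b hb hne) hxb' hxb


lemma cycle_blocks (c : Equiv.Perm Ω) (hc : c ∈ g.cycleFactorsFinset) (m : ℕ) (hm : 0 < m)
    (hdvd : m ∣ c.support.card) :
    ∃ P : Finset (Finset Ω),
      (∀ b ∈ P, b.card = m) ∧ (∀ b ∈ P, b ⊆ c.support) ∧
      (∀ x ∈ c.support, ∃ b ∈ P, x ∈ b) ∧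
      (∀ b₁ ∈ P, ∀ b₂ ∈ P, b₁ ≠ b₂ → Disjoint b₁ b₂) ∧
      (∀ b ∈ P, b.image g ∈ P) := by
  classical
  set p := c.support.card with hp
  obtain ⟨k, hk⟩ := hdvd
  have hcyc : c.IsCycle := (Equiv.Perm.mem_cycleFactorsFinset_iff.1 hc).1
  have hp2 : 2 ≤ p := hcyc.two_le_card_support
  have hk0 : 0 < k := by
    rcases Nat.eq_zero_or_pos k with h | h
    · subst h; omega
    · exact h
  obtain ⟨x₀, hx₀⟩ := Finset.card_pos.1 (by omega : 0 < c.support.card)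
  have hcOf : c = g.cycleOf x₀ := Equiv.Perm.cycle_is_cycleOf hx₀ hc
  have hcycOn : g.IsCycleOn (c.support : Set Ω) := by
    rw [hcOf]
    exact Equiv.Perm.isCycleOn_support_cycleOf g x₀
  have hmem : ∀ r : ℕ, (g ^ r) x₀ ∈ c.support := by
    intro r
    induction r with
    | zero => simpa using hx₀
    | succ r ih =>
        have : (g ^ (r + 1)) x₀ = g ((g ^ r) x₀) := by
          rw [pow_succ', Equiv.Perm.mul_apply]
        rw [this]
        have heq := (Equiv.Perm.mem_cycleFactorsFinset_iff.1 hc).2 _ ih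
        rw [← heq]
        exact Equiv.Perm.apply_mem_support.2 ih
  have hinj : ∀ r s : ℕ, r < p → s < p → (g ^ r) x₀ = (g ^ s) x₀ → r = s := by
    intro r s hr hs h
    have := (hcycOn.pow_apply_eq_pow_apply hx₀).1 h
    exact Nat.ModEq.eq_of_lt_of_lt this hr hs
  have hsurj : ∀ y ∈ c.support, ∃ r < p, (g ^ r) x₀ = y := fun y hy =>
    hcycOn.exists_pow_eq hx₀ hy
  have hper : (g ^ p) x₀ = x₀ := hcycOn.pow_card_apply hx₀
  have hexplt : ∀ j i : ℕ, j < k → i < m → j + i * k < p := by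
    intro j i hj hi
    calc j + i * k < k + i * k := by omega
    _ = (i + 1) * k := by ring
    _ ≤ m * k := Nat.mul_le_mul_right k hi
    _ = p := by omega
  set B : ℕ → Finset Ω := fun j => (Finset.range m).image (fun i => (g ^ (j + i * k)) x₀)
    with hB
  have hBmem : ∀ j, ∀ y, y ∈ B j ↔ ∃ i < m, (g ^ (j + i * k)) x₀ = y := by
    intro j y
    simp [hB]
  refine ⟨(Finset.range k).image B, ?_, ?_, ?_, ?_, ?_⟩
  · -- sizes
    rintro b hb
    obtain ⟨j, hj, rfl⟩ := Finset.mem_image.1 hb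
    rw [Finset.mem_range] at hj
    rw [hB]
    rw [Finset.card_image_of_injOn, Finset.card_range]
    intro i₁ h₁ i₂ h₂ he
    rw [Finset.mem_coe, Finset.mem_range] at h₁ h₂
    have h' := hinj _ _ (hexplt j i₁ hj h₁) (hexplt j i₂ hj h₂) he
    have h'' : i₁ * k = i₂ * k := by omega
    exact Nat.eq_of_mul_eq_mul_right hk0 h''
  · -- subset
    rintro b hb y hy
    obtain ⟨j, hj, rfl⟩ := Finset.mem_image.1 hb
    obtain ⟨i, hi, rfl⟩ := (hBmem j y).1 hy
    exact hmem _
  · -- cover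
    intro y hy
    obtain ⟨r, hr, rfl⟩ := hsurj y hy
    refine ⟨B (r % k), Finset.mem_image_of_mem B (Finset.mem_range.2 (Nat.mod_lt r hk0)), ?_⟩
    refine (hBmem _ _).2 ⟨r / k, ?_, ?_⟩
    · exact (Nat.div_lt_iff_lt_mul hk0).2 (by omega)
    · have he : r % k + r / k * k = r := Nat.mod_add_div' r k
      rw [he]
  · -- disjoint
    intro b₁ h₁ b₂ h₂ hne
    obtain ⟨j₁, hj₁, rfl⟩ := Finset.mem_image.1 h₁
    obtain ⟨j₂, hj₂, rfl⟩ := Finset.mem_image.1 h₂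
    rw [Finset.mem_range] at hj₁ hj₂
    rw [Finset.disjoint_left]
    intro x hx₁ hx₂
    obtain ⟨i₁, hi₁, he₁⟩ := (hBmem _ _).1 hx₁
    obtain ⟨i₂, hi₂, he₂⟩ := (hBmem _ _).1 hx₂
    have heq := hinj _ _ (hexplt j₁ i₁ hj₁ hi₁) (hexplt j₂ i₂ hj₂ hi₂) (he₁.trans he₂.symm)
    have hj : j₁ = j₂ := by
      have h1 : (j₁ + i₁ * k) % k = j₁ := by
        rw [Nat.add_mul_mod_self_right, Nat.mod_eq_of_lt hj₁]
      have h2 : (j₂ + i₂ * k) % k = j₂ := by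
        rw [Nat.add_mul_mod_self_right, Nat.mod_eq_of_lt hj₂]
      rw [← h1, heq, h2]
    exact hne (by rw [hj])
  · -- image
    intro b hb
    obtain ⟨j, hj, rfl⟩ := Finset.mem_image.1 hb
    rw [Finset.mem_range] at hj
    have himg : (B j).image g = (Finset.range m).image (fun i => (g ^ (j + 1 + i * k)) x₀) := by
      rw [hB]
      rw [Finset.image_image]
      apply Finset.image_congr
      intro i _
      show g ((g ^ (j + i * k)) x₀) = (g ^ (j + 1 + i * k)) x₀
      rw [show j + 1 + i * k = (j + i * k) + 1 by ring, pow_succ', Equiv.Perm.mul_apply]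
    by_cases hjk : j + 1 < k
    · rw [himg]
      exact Finset.mem_image_of_mem B (Finset.mem_range.2 hjk)
    · have hjk' : j + 1 = k := by omega
      have h0 : B 0 ∈ (Finset.range k).image B :=
        Finset.mem_image_of_mem B (Finset.mem_range.2 hk0)
      have hBeq : (B j).image g = B 0 := by
        rw [himg, hB]
        apply Finset.Subset.antisymm
        · intro y hy
          obtain ⟨i, hi, rfl⟩ := Finset.mem_image.1 hy
          rw [Finset.mem_range] at hi
          by_cases him : i + 1 < m
          · refine Finset.mem_image.2 ⟨i + 1, Finset.mem_range.2 him, ?_⟩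
            show (g ^ (0 + (i + 1) * k)) x₀ = (g ^ (j + 1 + i * k)) x₀
            have e : (i + 1) * k = i * k + k := by ring
            have e2 : 0 + (i + 1) * k = j + 1 + i * k := by omega
            rw [e2]
          · have him' : i + 1 = m := by omega
            refine Finset.mem_image.2 ⟨0, Finset.mem_range.2 hm, ?_⟩
            show (g ^ (0 + 0 * k)) x₀ = (g ^ (j + 1 + i * k)) x₀
            have he : j + 1 + i * k = p := by
              have e1 : (i + 1) * k = i * k + k := by ring
              have e2 : (i + 1) * k = m * k := by rw [him']
              omega
            rw [he, hper]
            norm_num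
        · intro y hy
          obtain ⟨i, hi, rfl⟩ := Finset.mem_image.1 hy
          rw [Finset.mem_range] at hi
          by_cases hi0 : i = 0
          · subst hi0
            refine Finset.mem_image.2 ⟨m - 1, Finset.mem_range.2 (by omega), ?_⟩
            show (g ^ (j + 1 + (m - 1) * k)) x₀ = (g ^ (0 + 0 * k)) x₀
            have he : j + 1 + (m - 1) * k = p := by
              have e1 : (m - 1) * k + k = m * k := by
                have e2 : m - 1 + 1 = m := by omega
                calc (m - 1) * k + k = (m - 1 + 1) * k := by ring
                _ = m * k := by rw [e2]
              omega
            rw [he, hper]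
            norm_num
          · obtain ⟨i', rfl⟩ : ∃ i', i = i' + 1 := ⟨i - 1, by omega⟩
            refine Finset.mem_image.2 ⟨i', Finset.mem_range.2 (by omega), ?_⟩
            show (g ^ (j + 1 + i' * k)) x₀ = (g ^ (0 + (i' + 1) * k)) x₀
            have e : (i' + 1) * k = i' * k + k := by ring
            have e2 : j + 1 + i' * k = 0 + (i' + 1) * k := by omega
            rw [e2]
      rw [hBeq]
      exact h0

end Stmt18Aux

/-- if `1 < m < n = |Ω|` and the cycle partition of `g` is an
`m`-partition or a special `m`-partition, then `g` preserves a partition of `Ω` into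
`n / m` blocks each of size `m`; in particular `g` is an imprimitive permutation. -/
theorem stmt18 {Ω : Type*} [Fintype Ω] [DecidableEq Ω] (n : ℕ) (hn : Fintype.card Ω = n)
    (g : Equiv.Perm Ω) (m : ℕ) (hm1 : 1 < m) (hmn : m < n)
    (h : IsMPartition m (cyclePartition g) ∨ IsSpecialMPartition m (cyclePartition g)) :
    PreservesUniformPartition g (n / m) m ∧ IsImprimitivePerm g := by
  classical
  have hm0 : 0 < m := by omega
  obtain ⟨P, hsize, hcov, hdisj, hcl⟩ :
      ∃ P : Finset (Finset Ω), (∀ b ∈ P, b.card = m) ∧ (∀ x : Ω, ∃ b ∈ P, x ∈ b) ∧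
        (∀ b₁ ∈ P, ∀ b₂ ∈ P, b₁ ≠ b₂ → Disjoint b₁ b₂) ∧ (∀ b ∈ P, b.image g ∈ P) := by
    rcases h with ⟨-, C, hCsum, hCm⟩ | ⟨p, hpmem, hpmax, hpdvd, C, hCsum, hCm⟩
    · obtain ⟨D, hDsum, hDmap⟩ := Stmt18Aux.lift_clusters Finset.card C (Stmt18Aux.atomsM g)
        (by rw [Stmt18Aux.atoms_map_card, hCsum])
      obtain ⟨P, k1, k2, k3, k4, k5⟩ := Stmt18Aux.blocks_of_clusters g m (Stmt18Aux.atomsM g)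
        le_rfl D hDsum (fun Q hQ => hCm _ (hDmap ▸ Multiset.mem_map_of_mem _ hQ))
      refine ⟨P, k1, fun x => k4 x (Stmt18Aux.atoms_cover g x), k5, fun b hb => ?_⟩
      rw [Stmt18Aux.inv_image_eq g b (k2 b hb)]
      exact hb
    · -- special m-partition
      have hppos : 0 < p := by
        rcases Multiset.mem_add.1 hpmem with hp | hp
        · have := Equiv.Perm.two_le_of_mem_cycleType hp
          omega
        · rw [Multiset.eq_of_mem_replicate hp]
          omega
      have hmp : m ≤ p := Nat.le_of_dvd hppos hpdvd
      have hpcyc : p ∈ g.cycleType := by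
        rcases Multiset.mem_add.1 hpmem with hp | hp
        · exact hp
        · have := Multiset.eq_of_mem_replicate hp
          omega
      rw [Equiv.Perm.cycleType_def] at hpcyc
      obtain ⟨c, hcval, hcp⟩ := Multiset.mem_map.1 hpcyc
      have hc : c ∈ g.cycleFactorsFinset := hcval
      have hcp' : c.support.card = p := hcp
      set A' : Multiset (Finset Ω) := (g.cycleFactorsFinset.1.erase c).map Equiv.Perm.support
        + (Finset.univ.filter fun x => g x = x).1.map (fun x => {x}) with hA'
      have hatoms : Stmt18Aux.atomsM g = c.support ::ₘ A' := by
        unfold Stmt18Aux.atomsM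
        rw [hA']
        conv_lhs => rw [← Multiset.cons_erase (show c ∈ g.cycleFactorsFinset.1 from hc)]
        rw [Multiset.map_cons, Multiset.cons_add]
      have hA'le : A' ≤ Stmt18Aux.atomsM g := by
        rw [hatoms]
        exact Multiset.le_cons_self _ _
      have hA'map : A'.map Finset.card = (cyclePartition g).erase p := by
        have h1 : cyclePartition g = p ::ₘ A'.map Finset.card := by
          rw [← Stmt18Aux.atoms_map_card g, hatoms, Multiset.map_cons, hcp']
        rw [h1, Multiset.erase_cons_head]
      obtain ⟨D, hDsum, hDmap⟩ := Stmt18Aux.lift_clusters Finset.card C A'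
        (by rw [hA'map, hCsum])
      obtain ⟨P₁, k1, k2, k3, k4, k5⟩ := Stmt18Aux.blocks_of_clusters g m A' hA'le D hDsum
        (fun Q hQ => hCm _ (hDmap ▸ Multiset.mem_map_of_mem _ hQ))
      obtain ⟨P₂, l1, l2, l3, l4, l5⟩ := Stmt18Aux.cycle_blocks g c hc m hm0
        (by rw [hcp']; exact hpdvd)
      have hsupnotA' : c.support ∉ A' := by
        have hnd := Stmt18Aux.atoms_nodup g
        rw [hatoms, Multiset.nodup_cons] at hnd
        exact hnd.1
      have hdisjA'sup : ∀ b ∈ P₁, Disjoint b c.support := by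
        intro b hb
        rw [Finset.disjoint_left]
        intro x hxb hxc
        obtain ⟨a, haA', hxa⟩ := k3 b hb x hxb
        have ha : a = c.support := Stmt18Aux.atoms_unique g a (Multiset.mem_of_le hA'le haA')
          c.support (Stmt18Aux.support_mem_atomsM g hc) x hxa hxc
        exact hsupnotA' (ha ▸ haA')
      refine ⟨P₁ ∪ P₂, ?_, ?_, ?_, ?_⟩
      · intro b hb
        rcases Finset.mem_union.1 hb with hm' | hm'
        exacts [k1 b hm', l1 b hm']
      · intro x
        by_cases hx : x ∈ c.support
        · obtain ⟨b, hb, hxb⟩ := l3 x hx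
          exact ⟨b, Finset.mem_union_right _ hb, hxb⟩
        · obtain ⟨a, ha, hxa⟩ := Stmt18Aux.atoms_cover g x
          rw [hatoms, Multiset.mem_cons] at ha
          rcases ha with rfl | ha
          · exact absurd hxa hx
          · obtain ⟨b, hb, hxb⟩ := k4 x ⟨a, ha, hxa⟩
            exact ⟨b, Finset.mem_union_left _ hb, hxb⟩
      · intro b₁ h₁ b₂ h₂ hne
        rcases Finset.mem_union.1 h₁ with m₁ | m₁ <;> rcases Finset.mem_union.1 h₂ with m₂ | m₂
        · exact k5 b₁ m₁ b₂ m₂ hne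
        · exact (hdisjA'sup b₁ m₁).mono_right (l2 b₂ m₂)
        · exact ((hdisjA'sup b₂ m₂).mono_right (l2 b₁ m₁)).symm
        · exact l4 b₁ m₁ b₂ m₂ hne
      · intro b hb
        rcases Finset.mem_union.1 hb with hm' | hm'
        · rw [Stmt18Aux.inv_image_eq g b (k2 b hm')]
          exact Finset.mem_union_left _ hm'
        · exact Finset.mem_union_right _ (l5 b hm')
  obtain ⟨hPcard, huniq, hdvd⟩ := Stmt18Aux.assemble g m hm0 P hsize hcov hdisj hcl
  rw [hn] at hPcard hdvd
  have hPU : PreservesUniformPartition g (n / m) m := ⟨P, hPcard, hsize, huniq, hcl⟩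
  refine ⟨hPU, n / m, m, ?_, hm1, ?_, hPU⟩
  · obtain ⟨t, ht⟩ := hdvd
    have h1t : 1 < t := by
      by_contra h'
      push_neg at h'
      have : m * t ≤ m * 1 := Nat.mul_le_mul_left m h'
      omega
    rw [ht, Nat.mul_div_cancel_left t hm0]
    exact h1t
  · rw [hn, Nat.div_mul_cancel hdvd]
end

section
/- Let n ≥ 4 and let g be a permutation of Fin n whose cycle type consists of exactly two fixed points and one cycle of length n − 2 (cycle type (1, 1, n−2)). Then g is imprimitive — i.e. there exist integers b, s > 1 with b·s = n and a partition of Fin n into b blocks of size s mapped onto blocks by g — if and only if n is even. Equivalently, a permutation of type (1, 1, n−2) is primitive if and only if n is odd. -/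
open Equiv Finset

private lemma pow_fix' {Ω : Type*} (g : Equiv.Perm Ω) {x : Ω} (h : g x = x) (m : ℕ) :
    (g ^ m) x = x := by
  induction m with
  | zero => rfl
  | succ k ih => rw [pow_succ, Perm.mul_apply, h, ih]

/-- for `n ≥ 4`, a permutation of `Fin n` of cycle type `(1, 1, n - 2)`
(two fixed points and one cycle of length `n - 2`) is imprimitive iff `n` is even;
equivalently, it is primitive iff `n` is odd. -/
theorem stmt19 (n : ℕ) (hn : 4 ≤ n) (g : Equiv.Perm (Fin n))
    (hg : cyclePartition g = {1, 1, n - 2}) :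
    (IsImprimitivePerm g ↔ Even n) ∧ (¬ IsImprimitivePerm g ↔ Odd n) := by
  classical
  set F := Finset.univ.filter (fun x => g x = x) with hF
  have hcount0 : Multiset.count 1 g.cycleType = 0 := by
    rw [Multiset.count_eq_zero]
    intro h
    have := Equiv.Perm.two_le_of_mem_cycleType h
    omega
  have hrhs : Multiset.count 1 ({1, 1, n - 2} : Multiset ℕ) = 2 := by
    have hne : ¬ (n - 2 = 1) := by omega
    simp [Multiset.insert_eq_cons, Multiset.count_cons, Multiset.count_singleton, hne]
    omega
  have hFcard : F.card = 2 := by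
    have h1 := congrArg (Multiset.count 1) hg
    unfold cyclePartition at h1
    rw [Multiset.count_add, hcount0, Multiset.count_replicate, hrhs] at h1
    simpa using h1
  have hsplit : ({1, 1, n - 2} : Multiset ℕ) = {n - 2} + Multiset.replicate 2 1 := by
    refine Multiset.ext.mpr fun a => ?_
    simp [Multiset.insert_eq_cons, Multiset.count_cons, Multiset.count_singleton,
      Multiset.count_replicate]
    by_cases h1 : a = 1 <;> by_cases h2 : a = n - 2 <;> simp [h1, h2] <;> omega
  have hct : g.cycleType = {n - 2} := by
    have h1 : g.cycleType + Multiset.replicate 2 1 = {n - 2} + Multiset.replicate 2 1 := by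
      unfold cyclePartition at hg
      rw [hFcard] at hg
      rw [hg, hsplit]
    exact add_right_cancel h1
  have hcyc : g.IsCycle := by
    rw [← Equiv.Perm.card_cycleType_eq_one, hct, Multiset.card_singleton]
  have hsupp : g.support.card = n - 2 := by
    rw [← Equiv.Perm.sum_cycleType, hct, Multiset.sum_singleton]
  have hord : orderOf g = n - 2 := by rw [hcyc.orderOf, hsupp]
  obtain ⟨a, b, hab, hFab⟩ := Finset.card_eq_two.mp hFcard
  have ha : g a = a := by
    have : a ∈ F := by rw [hFab]; simp
    exact (Finset.mem_filter.mp this).2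
  have hb : g b = b := by
    have : b ∈ F := by rw [hFab]; simp
    exact (Finset.mem_filter.mp this).2
  have hmoved : ∀ x : Fin n, x ≠ a → x ≠ b → g x ≠ x := by
    intro x hxa hxb h
    have : x ∈ F := Finset.mem_filter.mpr ⟨Finset.mem_univ x, h⟩
    rw [hFab] at this
    simp at this
    tauto
  -- Even n → imprimitive
  have even_imp : Even n → IsImprimitivePerm g := by
    intro hev
    obtain ⟨t, ht⟩ := hev
    set m := (n - 2) / 2 with hm
    have hm2 : m + m = n - 2 := by omega
    have hm1 : 1 ≤ m := by omega
    set ι : Perm (Fin n) := g ^ m * Equiv.swap a b with hι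
    have hιa : ι a = b := by
      rw [hι, Perm.mul_apply, Equiv.swap_apply_left, pow_fix' g hb]
    have hιb : ι b = a := by
      rw [hι, Perm.mul_apply, Equiv.swap_apply_right, pow_fix' g ha]
    have hιs : ∀ x : Fin n, g x ≠ x → ι x = (g ^ m) x := by
      intro x hx
      have hxa : x ≠ a := fun h => hx (h ▸ ha)
      have hxb : x ≠ b := fun h => hx (h ▸ hb)
      rw [hι, Perm.mul_apply, Equiv.swap_apply_of_ne_of_ne hxa hxb]
    have hpow_ne : ∀ x : Fin n, g x ≠ x → (g ^ m) x ≠ x := by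
      intro x hx hcon
      have h1 : g ^ m = 1 := hcyc.pow_eq_one_iff.mpr ⟨x, hx, hcon⟩
      have h2 : orderOf g ∣ m := orderOf_dvd_of_pow_eq_one h1
      have h3 : n - 2 ≤ m := hord ▸ Nat.le_of_dvd (by omega) h2
      omega
    have hcommapp : ∀ x : Fin n, g ((g ^ m) x) = (g ^ m) (g x) := by
      intro x
      rw [← Perm.mul_apply, ← Perm.mul_apply, ← pow_succ', ← pow_succ]
    have hmove : ∀ x : Fin n, g x ≠ x → g ((g ^ m) x) ≠ (g ^ m) x := by
      intro x hx hcon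
      rw [hcommapp] at hcon
      exact hx ((g ^ m).injective hcon)
    have hιinv : ∀ x : Fin n, ι (ι x) = x := by
      intro x
      by_cases hxa : x = a
      · rw [hxa, hιa, hιb]
      by_cases hxb : x = b
      · rw [hxb, hιb, hιa]
      have hx : g x ≠ x := hmoved x hxa hxb
      rw [hιs x hx, hιs _ (hmove x hx), ← Perm.mul_apply, ← pow_add, hm2, ← hord,
        pow_orderOf_eq_one]
      rfl
    have hιne : ∀ x : Fin n, ι x ≠ x := by
      intro x
      by_cases hxa : x = a
      · rw [hxa, hιa]; exact fun h => hab h.symm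
      by_cases hxb : x = b
      · rw [hxb, hιb]; exact hab
      rw [hιs x (hmoved x hxa hxb)]
      exact hpow_ne x (hmoved x hxa hxb)
    have hιg : ∀ x : Fin n, ι (g x) = g (ι x) := by
      intro x
      by_cases hxa : x = a
      · rw [hxa, ha, hιa, hb]
      by_cases hxb : x = b
      · rw [hxb, hb, hιb, ha]
      have hx : g x ≠ x := hmoved x hxa hxb
      have hgx : g (g x) ≠ g x := fun h => hx (g.injective h)
      rw [hιs _ hgx, hιs x hx, hcommapp]
    set P : Finset (Finset (Fin n)) :=
      Finset.univ.image (fun x : Fin n => ({x, ι x} : Finset (Fin n))) with hP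
    have hblockmem : ∀ x : Fin n, ({x, ι x} : Finset (Fin n)) ∈ P :=
      fun x => Finset.mem_image_of_mem _ (Finset.mem_univ x)
    have hmemblock : ∀ (x : Fin n) (c : Finset (Fin n)), c ∈ P → x ∈ c → c = {x, ι x} := by
      intro x c hc hxc
      obtain ⟨z, -, rfl⟩ := Finset.mem_image.mp hc
      rcases Finset.mem_insert.mp hxc with rfl | h
      · rfl
      · rw [Finset.mem_singleton] at h
        subst h
        rw [show ({z, ι z} : Finset (Fin n)) = {ι z, z} from Finset.pair_comm z (ι z), hιinv z]
    have huniq : ∀ x : Fin n, ∃! c : Finset (Fin n), c ∈ P ∧ x ∈ c := by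
      intro x
      exact ⟨{x, ι x}, ⟨hblockmem x, Finset.mem_insert_self x _⟩,
        fun c ⟨hc, hxc⟩ => hmemblock x c hc hxc⟩
    have hcard2 : ∀ c ∈ P, c.card = 2 := by
      intro c hc
      obtain ⟨z, -, rfl⟩ := Finset.mem_image.mp hc
      exact Finset.card_pair (Ne.symm (hιne z))
    have himgP : ∀ c ∈ P, c.image g ∈ P := by
      intro c hc
      obtain ⟨z, -, rfl⟩ := Finset.mem_image.mp hc
      rw [Finset.image_insert, Finset.image_singleton, ← hιg]
      exact hblockmem (g z)
    have hunion : P.biUnion id = Finset.univ := by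
      ext x
      simp only [Finset.mem_biUnion, id, Finset.mem_univ, iff_true]
      exact ⟨{x, ι x}, hblockmem x, Finset.mem_insert_self x _⟩
    have hpd : ∀ c1 ∈ P, ∀ c2 ∈ P, c1 ≠ c2 → Disjoint c1 c2 := by
      intro c1 h1 c2 h2 hne
      rw [Finset.disjoint_left]
      intro x hx1 hx2
      exact hne ((hmemblock x c1 h1 hx1).trans (hmemblock x c2 h2 hx2).symm)
    have hcardP : 2 * P.card = n := by
      have h1 : (P.biUnion id).card = ∑ c ∈ P, c.card := Finset.card_biUnion hpd
      rw [hunion] at h1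
      rw [Finset.sum_congr rfl hcard2, Finset.sum_const, smul_eq_mul] at h1
      simp at h1
      omega
    exact ⟨P.card, 2, by omega, by omega,
      by rw [Fintype.card_fin]; omega, P, rfl, hcard2, huniq, himgP⟩
  -- imprimitive → Even n
  have imp_even : IsImprimitivePerm g → Even n := by
    rintro ⟨k, s, hk, hs, hks, P, hPk, hbs, hcov, himg⟩
    rw [Fintype.card_fin] at hks
    obtain ⟨B, ⟨hBP, haB⟩, hBuniq⟩ := hcov a
    have hgB : B.image g = B := by
      refine hBuniq (B.image g) ⟨himg B hBP, ?_⟩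
      exact Finset.mem_image.mpr ⟨a, haB, ha⟩
    have hginv : ∀ x ∈ B, g x ∈ B := by
      intro x hx
      rw [← hgB]
      exact Finset.mem_image_of_mem g hx
    have hpowinv : ∀ (j : ℕ), ∀ x ∈ B, (g ^ j) x ∈ B := by
      intro j
      induction j with
      | zero => intro x hx; simpa using hx
      | succ i ih =>
        intro x hx
        rw [pow_succ', Perm.mul_apply]
        exact hginv _ (ih x hx)
    by_cases hc : ∃ c ∈ B, g c ≠ c
    · obtain ⟨c, hcB, hcne⟩ := hc
      have hsub : g.support ⊆ B := by
        intro x hx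
        have hxne : g x ≠ x := Equiv.Perm.mem_support.mp hx
        obtain ⟨j, hj⟩ := hcyc.exists_pow_eq hcne hxne
        rw [← hj]
        exact hpowinv j c hcB
      have h1 : n - 2 ≤ s := by
        have := Finset.card_le_card hsub
        rw [hsupp, hbs B hBP] at this
        exact this
      have h2s : 2 * s ≤ n := by
        calc 2 * s ≤ k * s := Nat.mul_le_mul_right s hk
          _ = n := hks
      have : n = 4 := by omega
      exact ⟨2, by omega⟩
    · push_neg at hc
      have hsubF : B ⊆ F := fun c hcB => Finset.mem_filter.mpr ⟨Finset.mem_univ c, hc c hcB⟩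
      have h1 : s ≤ 2 := by
        have := Finset.card_le_card hsubF
        rw [hFcard, hbs B hBP] at this
        exact this
      have hs2 : s = 2 := by omega
      subst hs2
      exact ⟨k, by omega⟩
  constructor
  · exact ⟨imp_even, even_imp⟩
  · rw [← Nat.not_even_iff_odd]
    exact not_congr ⟨imp_even, even_imp⟩
end
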